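/- arXiv:2105.14312 — 10 statements merged into one kernel-verified Lean document; each statement's English description precedes it below -/
import Mathlib

section
/- (Theorem 3.1, first representation of epi Φ(·,0_Z)*, equivalently the stable vector Farkas lemma under (C1).) Assume Φ is K-convex (with nonempty domain D and 0_Z ∈ π(D)) and condition (C1) holds. Then A = B; that is, for every L ∈ L(X,Y) and every y ∈ Y, one has Φ(x,0_Z) - L(x) + y ∉ -int K for all x ∈ X with (x,0_Z) ∈ D if and only if there exists T ∈ L(Z,Y) such that Φ(x,z) - L(x) - T(z) + y ∉ -int K for all (x,z) ∈ D. -/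
set_option linter.unusedSectionVars false
set_option maxHeartbeats 1000000


open Pointwise

section AuxFarkas

variable {Y : Type*} [AddCommGroup Y] [Module ℝ Y] [TopologicalSpace Y]
  [IsTopologicalAddGroup Y] [ContinuousSMul ℝ Y]

private lemma auxK_add {K : Set Y} (hKcx : Convex ℝ K)
    (hKcone : ∀ ⦃c : ℝ⦄, 0 ≤ c → ∀ ⦃y : Y⦄, y ∈ K → c • y ∈ K)
    {a b : Y} (ha : a ∈ K) (hb : b ∈ K) : a + b ∈ K := by
  have h := hKcx ha hb (by norm_num : (0:ℝ) ≤ 1/2) (by norm_num : (0:ℝ) ≤ 1/2) (by norm_num)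
  have h2 := hKcone (by norm_num : (0:ℝ) ≤ 2) h
  have h3 : (2:ℝ) • ((1/2:ℝ) • a + (1/2:ℝ) • b) = a + b := by
    rw [smul_add, smul_smul, smul_smul]; norm_num
  rwa [h3] at h2

private lemma auxK_int_add {K : Set Y} (hKcx : Convex ℝ K)
    (hKcone : ∀ ⦃c : ℝ⦄, 0 ≤ c → ∀ ⦃y : Y⦄, y ∈ K → c • y ∈ K)
    {a b : Y} (ha : a ∈ interior K) (hb : b ∈ K) : a + b ∈ interior K := by
  have hopen : IsOpen (interior K + ({b} : Set Y)) := isOpen_interior.add_right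
  have hsub : interior K + ({b} : Set Y) ⊆ K := by
    rintro _ ⟨u, hu, v, hv, rfl⟩
    rcases hv with rfl
    exact auxK_add hKcx hKcone (interior_subset hu) hb
  exact interior_maximal hsub hopen (Set.add_mem_add ha rfl)

private lemma auxK_int_smul {K : Set Y}
    (hKcone : ∀ ⦃c : ℝ⦄, 0 ≤ c → ∀ ⦃y : Y⦄, y ∈ K → c • y ∈ K)
    {c : ℝ} (hc : 0 < c) {a : Y} (ha : a ∈ interior K) : c • a ∈ interior K := by
  have hopen : IsOpen (c • interior K) := isOpen_interior.smul₀ hc.ne'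
  have hsub : c • interior K ⊆ K := by
    rintro _ ⟨u, hu, rfl⟩
    exact hKcone hc.le (interior_subset hu)
  exact interior_maximal hsub hopen ⟨a, ha, rfl⟩

/-- For any `w`, some large multiple of an interior point `e` dominates `w`. -/
private lemma auxK_exists_scal {K : Set Y}
    (hKcone : ∀ ⦃c : ℝ⦄, 0 ≤ c → ∀ ⦃y : Y⦄, y ∈ K → c • y ∈ K)
    {e : Y} (he : e ∈ interior K) (w : Y) : ∃ t : ℝ, t • e - w ∈ interior K := by
  have hcont : Filter.Tendsto (fun c : ℝ => e - c • w) (nhds 0) (nhds e) := by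
    have h1 : Filter.Tendsto (fun c : ℝ => c • w) (nhds 0) (nhds ((0:ℝ) • w)) :=
      (continuous_id.smul continuous_const).tendsto 0
    rw [zero_smul] at h1
    simpa using tendsto_const_nhds.sub h1
  have hmem : {c : ℝ | e - c • w ∈ interior K} ∈ nhds (0 : ℝ) :=
    hcont (isOpen_interior.mem_nhds he)
  have hmem' : {c : ℝ | e - c • w ∈ interior K} ∈ nhdsWithin (0:ℝ) (Set.Ioi 0) :=
    nhdsWithin_le_nhds hmem
  obtain ⟨c, hc, hcpos⟩ := Filter.Eventually.exists
    (Filter.eventually_and.2 ⟨hmem', self_mem_nhdsWithin⟩)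
  refine ⟨1/c, ?_⟩
  have hcpos' : (0:ℝ) < c := hcpos
  have := auxK_int_smul hKcone (by positivity : (0:ℝ) < 1/c) hc
  have heq : (1/c) • (e - c • w) = (1/c) • e - w := by
    rw [smul_sub, smul_smul]
    field_simp
    rw [one_smul]
  rwa [heq] at this

end AuxFarkas

/-- Theorem 3.1 (first part): stable vector Farkas lemma under condition (C1). -/
theorem stmt_1
    {X Y Z : Type*}
    [AddCommGroup X] [Module ℝ X] [TopologicalSpace X] [IsTopologicalAddGroup X]
    [ContinuousSMul ℝ X] [LocallyConvexSpace ℝ X] [T2Space X]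
    [AddCommGroup Y] [Module ℝ Y] [TopologicalSpace Y] [IsTopologicalAddGroup Y]
    [ContinuousSMul ℝ Y] [LocallyConvexSpace ℝ Y] [T2Space Y]
    [AddCommGroup Z] [Module ℝ Z] [TopologicalSpace Z] [IsTopologicalAddGroup Z]
    [ContinuousSMul ℝ Z] [LocallyConvexSpace ℝ Z] [T2Space Z]
    (K : Set Y) (hKcl : IsClosed K) (hKcx : Convex ℝ K)
    (hKcone : ∀ ⦃c : ℝ⦄, 0 ≤ c → ∀ ⦃y : Y⦄, y ∈ K → c • y ∈ K)
    (hKne : K ≠ Set.univ) (hKint : (interior K).Nonempty)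
    (Φ : X × Z → Y) (D : Set (X × Z)) (hD : D.Nonempty)
    (hconv : Convex ℝ {p : (X × Z) × Y | p.1 ∈ D ∧ p.2 - Φ p.1 ∈ K})
    (h0 : (0 : Z) ∈ Prod.snd '' D)
    -- condition (C1)
    (hC1 : ∀ L : X →L[ℝ] Y, ∃ yL : Y, ∃ VL ∈ nhds (0 : Z),
      ∀ z ∈ VL, z ∈ (Submodule.span ℝ (Prod.snd '' D) : Set Z) →
        ∃ x : X, (x, z) ∈ D ∧ yL - (Φ (x, z) - L x) ∈ K) :
    ∀ (L : X →L[ℝ] Y) (y : Y),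
      (∀ x : X, (x, (0 : Z)) ∈ D → Φ (x, 0) - L x + y ∉ -interior K) ↔
      (∃ T : Z →L[ℝ] Y, ∀ p ∈ D, Φ p - L p.1 - T p.2 + y ∉ -interior K) := by
  intro L y
  constructor
  · -- hard direction
    intro H
    obtain ⟨e, he⟩ := hKint
    have heK : e ∈ K := interior_subset he
    have h0K : (0:Y) ∈ K := by simpa using hKcone le_rfl heK
    set Z₀ : Submodule ℝ Z := Submodule.span ℝ (Prod.snd '' D) with hZ₀def
    set S : Set (Z × ℝ) :=
      {p | ∃ x : X, (x, p.1) ∈ D ∧ p.2 • e - (Φ (x, p.1) - L x + y) ∈ interior K} with hSdef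
    -- S is convex
    have hSconv : Convex ℝ S := by
      rintro ⟨z₁, t₁⟩ ⟨x₁, hx₁, hk₁⟩ ⟨z₂, t₂⟩ ⟨x₂, hx₂, hk₂⟩ a b ha hb hab
      have mem1 : (((x₁, z₁), Φ (x₁, z₁)) : (X × Z) × Y) ∈
          {p : (X × Z) × Y | p.1 ∈ D ∧ p.2 - Φ p.1 ∈ K} := ⟨hx₁, by simpa using h0K⟩
      have mem2 : (((x₂, z₂), Φ (x₂, z₂)) : (X × Z) × Y) ∈
          {p : (X × Z) × Y | p.1 ∈ D ∧ p.2 - Φ p.1 ∈ K} := ⟨hx₂, by simpa using h0K⟩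
      have hcombo := hconv mem1 mem2 ha hb hab
      simp only [Set.mem_setOf_eq, Prod.smul_mk, Prod.mk_add_mk] at hcombo
      obtain ⟨hDm, hKm⟩ := hcombo
      refine ⟨a • x₁ + b • x₂, hDm, ?_⟩
      have hw : a • (t₁ • e - (Φ (x₁, z₁) - L x₁ + y)) +
          b • (t₂ • e - (Φ (x₂, z₂) - L x₂ + y)) ∈ interior K :=
        hKcx.interior hk₁ hk₂ ha hb hab
      have hsum := auxK_int_add hKcx hKcone hw hKm
      have hL : L (a • x₁ + b • x₂) = a • L x₁ + b • L x₂ := by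
        rw [map_add, map_smul, map_smul]
      have heq : a • (t₁ • e - (Φ (x₁, z₁) - L x₁ + y)) +
          b • (t₂ • e - (Φ (x₂, z₂) - L x₂ + y)) +
          (a • Φ (x₁, z₁) + b • Φ (x₂, z₂) - Φ (a • x₁ + b • x₂, a • z₁ + b • z₂)) =
          (a * t₁ + b * t₂) • e -
            (Φ (a • x₁ + b • x₂, a • z₁ + b • z₂) - L (a • x₁ + b • x₂) + y) := by
        rw [hL]
        match_scalars <;> (try ring) <;> linarith
      rw [heq] at hsum
      simpa using hsum
    -- S is upward-closed in the second coordinate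
    have hSup : ∀ z t s, (z, t) ∈ S → t ≤ s → (z, s) ∈ S := by
      rintro z t s ⟨x, hx, hk⟩ hts
      refine ⟨x, hx, ?_⟩
      have hmem : (s - t) • e ∈ K := hKcone (sub_nonneg.2 hts) heK
      have := auxK_int_add hKcx hKcone hk hmem
      have heq : t • e - (Φ (x, z) - L x + y) + (s - t) • e =
          s • e - (Φ (x, z) - L x + y) := by module
      rwa [heq] at this
    -- (0, t) ∉ S for t ≤ 0
    have hS0 : ∀ t : ℝ, t ≤ 0 → ((0:Z), t) ∉ S := by
      rintro t ht ⟨x, hx, hk⟩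
      refine H x hx ?_
      rw [Set.mem_neg]
      have hmem : (-t) • e ∈ K := hKcone (neg_nonneg.2 ht) heK
      have := auxK_int_add hKcx hKcone hk hmem
      have heq : t • e - (Φ (x, 0) - L x + y) + (-t) • e = -(Φ (x, (0:Z)) - L x + y) := by
        module
      rwa [heq] at this
    -- condition (C1) specialized
    obtain ⟨yL, VL, hVL, hVprop⟩ := hC1 L
    obtain ⟨t₀, ht₀⟩ := auxK_exists_scal hKcone he (yL + y)
    have hVS : ∀ z ∈ VL, z ∈ (Z₀ : Set Z) → ∀ t, t₀ ≤ t → (z, t) ∈ S := by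
      intro z hzV hzZ t htt
      obtain ⟨x, hxD, hxk⟩ := hVprop z hzV hzZ
      refine hSup z t₀ t ⟨x, hxD, ?_⟩ htt
      have := auxK_int_add hKcx hKcone ht₀ hxk
      have heq : t₀ • e - (yL + y) + (yL - (Φ (x, z) - L x)) =
          t₀ • e - (Φ (x, z) - L x + y) := by module
      rwa [heq] at this
    -- move to the subspace Z₀ × ℝ
    set J : (↥Z₀ × ℝ) →ₗ[ℝ] Z × ℝ := (Z₀.subtype).prodMap (LinearMap.id) with hJdef
    have hJcont : Continuous J := continuous_subtype_val.prodMap continuous_id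
    set SE : Set (↥Z₀ × ℝ) := J ⁻¹' S with hSEdef
    have hSEmem : ∀ q : ↥Z₀ × ℝ, q ∈ SE ↔ ((q.1 : Z), q.2) ∈ S := fun q => Iff.rfl
    have hSEconv : Convex ℝ SE := hSconv.linear_preimage J
    -- interior of SE is nonempty
    have h0O : (0:Z) ∈ interior VL := mem_interior_iff_mem_nhds.2 hVL
    have hUopen : IsOpen {q : ↥Z₀ × ℝ | (q.1 : Z) ∈ interior VL ∧ t₀ < q.2} := by
      have h1 : IsOpen {q : ↥Z₀ × ℝ | (q.1 : Z) ∈ interior VL} :=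
        (isOpen_interior.preimage continuous_subtype_val).preimage continuous_fst
      have h2 : IsOpen {q : ↥Z₀ × ℝ | t₀ < q.2} := isOpen_lt continuous_const continuous_snd
      exact h1.inter h2
    have hUsub : {q : ↥Z₀ × ℝ | (q.1 : Z) ∈ interior VL ∧ t₀ < q.2} ⊆ SE := by
      rintro ⟨z, t⟩ ⟨hz, ht⟩
      exact (hSEmem _).2 (hVS _ (interior_subset hz) z.2 t ht.le)
    have hUint : {q : ↥Z₀ × ℝ | (q.1 : Z) ∈ interior VL ∧ t₀ < q.2} ⊆ interior SE :=
      interior_maximal hUsub hUopen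
    have h0SE : (0 : ↥Z₀ × ℝ) ∉ SE := by
      intro h
      exact hS0 0 le_rfl ((hSEmem _).1 h)
    -- separation
    obtain ⟨f, hf⟩ := geometric_hahn_banach_open_point (hSEconv.interior) isOpen_interior
      (fun h => h0SE (interior_subset h))
    rw [map_zero] at hf
    -- f ≤ 0 on SE
    have hfS : ∀ q ∈ SE, f q ≤ 0 := by
      intro q hq
      by_contra hpos
      push_neg at hpos
      set w₀ : ↥Z₀ × ℝ := ((⟨0, Z₀.zero_mem⟩ : ↥Z₀), t₀ + 1) with hw₀def
      have hw₀ : w₀ ∈ interior SE := hUint ⟨by simpa using h0O, by show t₀ < t₀ + 1; linarith⟩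
      have hfw₀ : f w₀ < 0 := hf _ hw₀
      set θ : ℝ := f q / (f q - f w₀) with hθdef
      have hden : 0 < f q - f w₀ := by linarith
      have hθpos : 0 < θ := div_pos hpos hden
      have hθlt : θ < 1 := (div_lt_one hden).2 (by linarith)
      have hmem : θ • w₀ + (1 - θ) • q ∈ interior SE := by
        apply hSEconv.combo_interior_closure_subset_interior (a := θ) (b := 1 - θ)
          hθpos (by linarith) (by ring)
        exact Set.add_mem_add (Set.smul_mem_smul_set hw₀)
          (Set.smul_mem_smul_set (subset_closure hq))
      have := hf _ hmem
      rw [map_add, map_smul, map_smul, smul_eq_mul, smul_eq_mul] at this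
      have hθeq : θ * (f q - f w₀) = f q := div_mul_cancel₀ _ hden.ne'
      have hzero : θ * f w₀ + (1 - θ) * f q = 0 := by linear_combination -hθeq
      linarith
    -- decompose f
    set g : ↥Z₀ →L[ℝ] ℝ := f.comp (ContinuousLinearMap.inl ℝ ↥Z₀ ℝ) with hgdef
    set c : ℝ := f ((0 : ↥Z₀), (1:ℝ)) with hcdef
    have hdecomp : ∀ (z : ↥Z₀) (t : ℝ), f (z, t) = g z + t * c := by
      intro z t
      have heq : ((z, t) : ↥Z₀ × ℝ) = ((z, (0:ℝ)) : ↥Z₀ × ℝ) + t • (((0:↥Z₀), (1:ℝ))) := by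
        refine Prod.ext ?_ ?_ <;> simp
      rw [heq, map_add, map_smul, smul_eq_mul]
      rfl
    have hc : c < 0 := by
      set r : ℝ := max t₀ 0 + 1 with hrdef
      have hrpos : 0 < r := by positivity
      have hrt : t₀ < r := lt_of_le_of_lt (le_max_left _ _) (by linarith)
      have hmem : (((⟨0, Z₀.zero_mem⟩ : ↥Z₀), r) : ↥Z₀ × ℝ) ∈ interior SE :=
        hUint ⟨by simpa using h0O, hrt⟩
      have h4 := hf _ hmem
      rw [hdecomp] at h4
      have hgz : g (⟨0, Z₀.zero_mem⟩ : ↥Z₀) = 0 := by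
        have h5 : (⟨0, Z₀.zero_mem⟩ : ↥Z₀) = 0 := rfl
        rw [h5, map_zero]
      rw [hgz] at h4
      nlinarith
    -- the functional on Z₀
    set f₀ : ↥Z₀ →L[ℝ] ℝ := (-c)⁻¹ • g with hf₀def
    have hf₀le : ∀ (zz : ↥Z₀) (tt : ℝ), ((zz, tt) : ↥Z₀ × ℝ) ∈ SE → f₀ zz ≤ tt := by
      intro zz tt hq
      have h1 := hfS _ hq
      rw [hdecomp] at h1
      have h2 : g zz ≤ (-c) * tt := by linarith
      have h3 : f₀ zz = (-c)⁻¹ * g zz := rfl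
      rw [h3]
      have hcpos : 0 < -c := by linarith
      have hcne : (-c) ≠ 0 := ne_of_gt hcpos
      calc (-c)⁻¹ * g zz ≤ (-c)⁻¹ * ((-c) * tt) := by
            apply mul_le_mul_of_nonneg_left h2 (by positivity)
        _ = tt := by rw [← mul_assoc, inv_mul_cancel₀ hcne, one_mul]
    -- continuity data for the extension
    have hf₀cont : Continuous f₀ := f₀.continuous
    have hIio : f₀ ⁻¹' (Set.Iio 1) ∈ nhds (0 : ↥Z₀) := by
      apply hf₀cont.continuousAt.preimage_mem_nhds
      rw [map_zero]
      exact Iio_mem_nhds one_pos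
    have h0Z₀ : ((0:Z) ∈ Z₀) := Z₀.zero_mem
    rw [show (0 : ↥Z₀) = ⟨0, h0Z₀⟩ from rfl, nhds_subtype_eq_comap] at hIio
    obtain ⟨W₁, hW₁, hW₁sub⟩ := hIio
    have hW₂ : W₁ ∩ (fun z : Z => -z) ⁻¹' W₁ ∈ nhds (0:Z) := by
      refine Filter.inter_mem hW₁ ?_
      have : Filter.Tendsto (fun z : Z => -z) (nhds 0) (nhds (-0)) :=
        (continuous_neg.tendsto 0)
      rw [neg_zero] at this
      exact this hW₁
    obtain ⟨W, ⟨hWnhds, hWconv⟩, hWsub⟩ :=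
      (LocallyConvexSpace.convex_basis_zero ℝ Z).mem_iff.1 hW₂
    have hWabs : Absorbent ℝ W := absorbent_nhds_zero hWnhds
    have hWf : ∀ w : ↥Z₀, (w : Z) ∈ W → f₀ w ≤ 1 := by
      intro w hw
      have h1 : (w : Z) ∈ W₁ := (hWsub hw).1
      have : w ∈ Subtype.val ⁻¹' W₁ := h1
      exact (hW₁sub this).le
    have hdom : ∀ q : ↥Z₀, f₀ q ≤ gauge W (q : Z) := by
      intro q
      by_contra hlt
      push_neg at hlt
      obtain ⟨b, hb0, hba, hmem⟩ := exists_lt_of_gauge_lt hWabs hlt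
      obtain ⟨w, hw, hww⟩ := hmem
      have hwZ₀ : w ∈ Z₀ := by
        have : w = b⁻¹ • (q : Z) := by
          rw [← hww, smul_smul, inv_mul_cancel₀ hb0.ne', one_smul]
        rw [this]
        exact Z₀.smul_mem _ q.2
      have hqeq : q = b • (⟨w, hwZ₀⟩ : ↥Z₀) := by
        apply Subtype.ext
        simp [hww]
      have hone := hWf ⟨w, hwZ₀⟩ hw
      have h1 : f₀ q = b * f₀ ⟨w, hwZ₀⟩ := by rw [hqeq, map_smul, smul_eq_mul]
      have h2 : b * f₀ ⟨w, hwZ₀⟩ ≤ b := by nlinarith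
      linarith
    -- extension by Hahn-Banach (sublinear version)
    set pm : Z →ₗ.[ℝ] ℝ := ⟨Z₀, (f₀ : ↥Z₀ →L[ℝ] ℝ).toLinearMap⟩ with hpmdef
    obtain ⟨g', hg'ext, hg'le⟩ := exists_extension_of_le_sublinear pm (gauge W)
      (fun r hr x => gauge_smul_of_nonneg hr.le x)
      (gauge_add_le hWconv hWabs) (fun q => hdom q)
    have hg'eq : ∀ q : ↥Z₀, g' (q : Z) = f₀ q := fun q => hg'ext q
    -- continuity of g'
    have hg'contAt : ContinuousAt g' 0 := by
      rw [ContinuousAt, map_zero, Metric.tendsto_nhds]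
      intro ε hε
      have hsmul : (ε/2) • W ∈ nhds (0:Z) :=
        (set_smul_mem_nhds_zero_iff (by positivity : (ε/2) ≠ 0)).2 hWnhds
      have hsmul' : (fun z : Z => -z) ⁻¹' ((ε/2) • W) ∈ nhds (0:Z) := by
        have : Filter.Tendsto (fun z : Z => -z) (nhds 0) (nhds (-0)) :=
          continuous_neg.tendsto 0
        rw [neg_zero] at this
        exact this hsmul
      filter_upwards [hsmul, hsmul'] with z hz1 hz2
      have hub : g' z ≤ ε/2 := le_trans (hg'le z) (gauge_le_of_mem (by positivity) hz1)
      have hlb : g' (-z) ≤ ε/2 := le_trans (hg'le (-z)) (gauge_le_of_mem (by positivity) hz2)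
      rw [map_neg] at hlb
      rw [Real.dist_eq, sub_zero]
      rw [abs_lt]
      constructor <;> linarith
    have hg'cont : Continuous g' := continuous_of_continuousAt_zero g' hg'contAt
    -- the operator T
    set G : Z →L[ℝ] ℝ := ⟨g', hg'cont⟩ with hGdef
    refine ⟨G.smulRight e, ?_⟩
    rintro ⟨x, z⟩ hp hmem
    have hzZ₀ : z ∈ Z₀ := Submodule.subset_span ⟨(x, z), hp, rfl⟩
    have hval : g' z • e - (Φ (x, z) - L x + y) ∈ interior K := by
      rw [Set.mem_neg] at hmem
      have heq : -(Φ (x, z) - L x - (G.smulRight e) z + y) =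
          g' z • e - (Φ (x, z) - L x + y) := by
        have : (G.smulRight e) z = g' z • e := rfl
        rw [this]
        module
      rwa [heq] at hmem
    -- openness: there is t < g' z with (z, t) ∈ S
    have hcont2 : Filter.Tendsto (fun t : ℝ => t • e - (Φ (x, z) - L x + y))
        (nhds (g' z)) (nhds (g' z • e - (Φ (x, z) - L x + y))) :=
      ((continuous_id.smul continuous_const).sub continuous_const).tendsto _
    have hev : {t : ℝ | t • e - (Φ (x, z) - L x + y) ∈ interior K} ∈ nhds (g' z) :=
      hcont2 (isOpen_interior.mem_nhds hval)
    have hev' : {t : ℝ | t • e - (Φ (x, z) - L x + y) ∈ interior K} ∈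
        nhdsWithin (g' z) (Set.Iio (g' z)) := nhdsWithin_le_nhds hev
    obtain ⟨t, htk, htlt⟩ := Filter.Eventually.exists
      (Filter.eventually_and.2 ⟨hev', self_mem_nhdsWithin⟩)
    have htS : ((z : Z), t) ∈ S := ⟨x, hp, htk⟩
    have hle := hf₀le (⟨z, hzZ₀⟩ : ↥Z₀) t ((hSEmem _).2 htS)
    have hgz : g' z = f₀ (⟨z, hzZ₀⟩ : ↥Z₀) := hg'eq ⟨z, hzZ₀⟩
    rw [hgz] at htlt
    exact absurd (lt_of_le_of_lt hle htlt) (lt_irrefl _)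
  · -- easy direction
    rintro ⟨T, hT⟩ x hx hmem
    have := hT (x, 0) hx
    apply this
    simpa using hmem
end

section
/- (Theorem 3.1, second part.) Let S ⊆ Z be a nonempty convex cone. Assume Φ is K-convex (with nonempty domain D and 0_Z ∈ π(D)), condition (C1) holds, and condition (C0) holds. Then A = B = B₊; in particular, for every L ∈ L(X,Y) and y ∈ Y, one has Φ(x,0_Z) - L(x) + y ∉ -int K for all x with (x,0_Z) ∈ D if and only if there exists T ∈ L(Z,Y) with T(S) ⊆ K such that Φ(x,z) - L(x) - T(z) + y ∉ -int K for all (x,z) ∈ D. -/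
open Pointwise
set_option maxHeartbeats 1600000

lemma aux_le (a C : ℝ) (h : ∀ t : ℝ, 0 ≤ t → t * a + C ≤ 0) : a ≤ 0 := by
  by_contra hpos
  push_neg at hpos
  have hC := h 0 le_rfl
  simp only [zero_mul, zero_add] at hC
  have ht := h ((1 - C) / a) (div_nonneg (by linarith) hpos.le)
  rw [div_mul_cancel₀ _ (ne_of_gt hpos)] at ht
  linarith

lemma aux_eq (a b u : ℝ) (h : ∀ t : ℝ, u < b + t * a) : a = 0 := by
  by_contra ha
  have := h ((u - 1 - b) / a)
  rw [div_mul_cancel₀ _ ha] at this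
  linarith

lemma clm_extend {Z : Type*} [AddCommGroup Z] [Module ℝ Z] [TopologicalSpace Z]
    [IsTopologicalAddGroup Z] [ContinuousSMul ℝ Z] [LocallyConvexSpace ℝ Z]
    (Z₀ : Submodule ℝ Z) (ξ₀ : ↥Z₀ →L[ℝ] ℝ) : ∃ ξ : Z →L[ℝ] ℝ, ∀ w : ↥Z₀, ξ ↑w = ξ₀ w := by
  by_cases htriv : ∀ w : ↥Z₀, ξ₀ w = 0
  · exact ⟨0, fun w => by simp [htriv w]⟩
  push_neg at htriv
  obtain ⟨z₁, hz₁⟩ := htriv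
  set h₀ : ↥Z₀ := (ξ₀ z₁)⁻¹ • z₁ with hh₀
  have hξh₀ : ξ₀ h₀ = 1 := by
    simp [hh₀, map_smul, inv_mul_cancel₀ hz₁]
  set H : Set Z := Subtype.val '' {w : ↥Z₀ | ξ₀ w = 1} with hH
  have hN : ∃ N ∈ nhds (0 : Z), ∀ w : ↥Z₀, (↑w : Z) ∈ N → ξ₀ w < 1 := by
    have hcont : (⇑ξ₀) ⁻¹' Set.Iio 1 ∈ nhds (0 : ↥Z₀) := by
      refine ξ₀.continuous.continuousAt.preimage_mem_nhds ?_
      simp [isOpen_Iio.mem_nhds]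
    rw [nhds_subtype_eq_comap, Filter.mem_comap] at hcont
    obtain ⟨N, hN, hsub⟩ := hcont
    refine ⟨N, by simpa using hN, fun w hw => hsub hw⟩
  obtain ⟨N, hNnhds, hNlt⟩ := hN
  have hdisj : (0 : Z) ∉ closure H := by
    intro hmem
    rw [mem_closure_iff_nhds] at hmem
    obtain ⟨z, hzN, w, hw, rfl⟩ := hmem N hNnhds
    exact absurd hw (by simp [ne_of_lt (hNlt w hzN)])
  have hHconv : Convex ℝ (closure H) := by
    refine (Convex.is_linear_image ?_ ⟨fun _ _ => rfl, fun _ _ => rfl⟩).closure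
    intro u hu v hv a b ha hb hab
    simp only [Set.mem_setOf_eq] at hu hv ⊢
    simp [map_add, map_smul, hu, hv, smul_eq_mul]
    linarith
  obtain ⟨g, u, hgu, hgH⟩ := geometric_hahn_banach_point_closed hHconv isClosed_closure hdisj
  rw [map_zero] at hgu
  have hgH' : ∀ w : ↥Z₀, ξ₀ w = 1 → u < g ↑w := fun w hw =>
    hgH _ (subset_closure ⟨w, hw, rfl⟩)
  have hker : ∀ w : ↥Z₀, ξ₀ w = 0 → g ↑w = 0 := by
    intro w hw
    refine aux_eq _ (g ↑h₀) u (fun t => ?_)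
    have h1 : ξ₀ (h₀ + t • w) = 1 := by simp [map_add, map_smul, hξh₀, hw]
    have := hgH' _ h1
    simpa [map_add, map_smul, smul_eq_mul] using this
  set c := g ↑h₀ with hc
  have hcu : u < c := hgH' h₀ hξh₀
  have hcpos : 0 < c := lt_trans hgu hcu
  refine ⟨c⁻¹ • g, fun w => ?_⟩
  have hw0 : ξ₀ (w - ξ₀ w • h₀) = 0 := by simp [map_sub, map_smul, hξh₀, smul_eq_mul]
  have hk := hker _ hw0
  simp only [Submodule.coe_sub, Submodule.coe_smul, map_sub, map_smul, smul_eq_mul] at hk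
  have hgw : g ↑w = ξ₀ w * c := by linarith
  simp [hgw, smul_eq_mul]
  field_simp

lemma key_lemma
    {X Y Z : Type*}
    [AddCommGroup X] [Module ℝ X] [TopologicalSpace X] [IsTopologicalAddGroup X]
    [ContinuousSMul ℝ X]
    [AddCommGroup Y] [Module ℝ Y] [TopologicalSpace Y] [IsTopologicalAddGroup Y]
    [ContinuousSMul ℝ Y]
    [AddCommGroup Z] [Module ℝ Z] [TopologicalSpace Z] [IsTopologicalAddGroup Z]
    [ContinuousSMul ℝ Z] [LocallyConvexSpace ℝ Z]
    (K : Set Y) (hKcx : Convex ℝ K)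
    (hKcone : ∀ ⦃c : ℝ⦄, 0 ≤ c → ∀ ⦃y : Y⦄, y ∈ K → c • y ∈ K)
    (hKint : (interior K).Nonempty)
    (Φ : X × Z → Y) (D : Set (X × Z))
    (hconv : Convex ℝ {p : (X × Z) × Y | p.1 ∈ D ∧ p.2 - Φ p.1 ∈ K})
    (S : Set Z)
    (hScone : ∀ ⦃c : ℝ⦄, 0 ≤ c → ∀ ⦃z : Z⦄, z ∈ S → c • z ∈ S)
    (hC1 : ∀ L : X →L[ℝ] Y, ∃ yL : Y, ∃ VL ∈ nhds (0 : Z),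
      ∀ z ∈ VL, z ∈ (Submodule.span ℝ (Prod.snd '' D) : Set Z) →
        ∃ x : X, (x, z) ∈ D ∧ yL - (Φ (x, z) - L x) ∈ K)
    (hC0 : ∃ xt : X, (xt, (0 : Z)) ∈ D ∧
      ∀ z ∈ -S, (xt, z) ∈ D ∧ Φ (xt, 0) - Φ (xt, z) ∈ K)
    (L : X →L[ℝ] Y) (y : Y)
    (hA : ∀ x : X, (x, (0 : Z)) ∈ D → Φ (x, 0) - L x + y ∉ -interior K) :
    ∃ T : Z →L[ℝ] Y, (⇑T '' S ⊆ K) ∧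
      ∀ p ∈ D, Φ p - L p.1 - T p.2 + y ∉ -interior K := by
  classical
  obtain ⟨e, he⟩ := hKint
  have heK : e ∈ K := interior_subset he
  have hK0 : (0 : Y) ∈ K := by simpa using hKcone le_rfl heK
  have hKadd : ∀ ⦃a b : Y⦄, a ∈ K → b ∈ K → a + b ∈ K := by
    intro a b ha hb
    have h := hKcx ha hb (by norm_num : (0:ℝ) ≤ 1/2) (by norm_num : (0:ℝ) ≤ 1/2)
      (by norm_num : (1:ℝ)/2 + 1/2 = 1)
    have h2 := hKcone (by norm_num : (0:ℝ) ≤ 2) h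
    have heq : (2:ℝ) • ((1/2 : ℝ) • a + (1/2 : ℝ) • b) = a + b := by module
    rwa [heq] at h2
  have hsum : ∀ ⦃a b : Y⦄, a ∈ K → b ∈ interior K → a + b ∈ interior K := by
    intro a b ha hb
    have hopen : IsOpen ((a + ·) '' interior K) := (isOpenMap_add_left a) _ isOpen_interior
    have hss : (a + ·) '' interior K ⊆ K := by
      rintro _ ⟨c, hc, rfl⟩
      exact hKadd ha (interior_subset hc)
    exact interior_maximal hss hopen ⟨b, hb, rfl⟩
  have hδ : ∀ c u : Y, c ∈ interior K → ∃ δ : ℝ, 0 < δ ∧ c + δ • u ∈ interior K := by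
    intro c u hc
    have hcont : Continuous fun t : ℝ => c + t • u := by
      exact continuous_const.add (continuous_id.smul continuous_const)
    have hmem : (fun t : ℝ => c + t • u) ⁻¹' interior K ∈ nhds (0 : ℝ) :=
      hcont.continuousAt.preimage_mem_nhds (isOpen_interior.mem_nhds (by simpa using hc))
    obtain ⟨ε, hε, hball⟩ := Metric.mem_nhds_iff.mp hmem
    have hb : (ε/2) ∈ Metric.ball (0:ℝ) ε := by
      simp only [Metric.mem_ball, Real.dist_eq, sub_zero, abs_of_pos (half_pos hε)]
      linarith
    exact ⟨ε/2, half_pos hε, hball hb⟩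
  set Z₀ : Submodule ℝ Z := Submodule.span ℝ (Prod.snd '' D) with hZ₀
  set V : Set (↥Z₀ × Y) :=
    {q | ∃ x : X, (x, (q.1 : Z)) ∈ D ∧ q.2 - (Φ (x, (q.1 : Z)) - L x + y) ∈ interior K}
    with hV
  have hVconv : Convex ℝ V := by
    rintro ⟨z₁, u₁⟩ ⟨x₁, hx₁, hk₁⟩ ⟨z₂, u₂⟩ ⟨x₂, hx₂, hk₂⟩ a b ha hb hab
    have hmem₁ : (((x₁, (z₁ : Z)), Φ (x₁, (z₁ : Z))) : (X × Z) × Y) ∈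
        {p : (X × Z) × Y | p.1 ∈ D ∧ p.2 - Φ p.1 ∈ K} := ⟨hx₁, by simpa using hK0⟩
    have hmem₂ : (((x₂, (z₂ : Z)), Φ (x₂, (z₂ : Z))) : (X × Z) × Y) ∈
        {p : (X × Z) × Y | p.1 ∈ D ∧ p.2 - Φ p.1 ∈ K} := ⟨hx₂, by simpa using hK0⟩
    have hcomb := hconv hmem₁ hmem₂ ha hb hab
    simp only [Prod.smul_mk, Prod.mk_add_mk, Set.mem_setOf_eq] at hcomb
    obtain ⟨hDc, hKc⟩ := hcomb
    refine ⟨a • x₁ + b • x₂, ?_, ?_⟩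
    · simpa only [Prod.smul_mk, Prod.mk_add_mk, Submodule.coe_add, Submodule.coe_smul]
        using hDc
    · simp only [Prod.smul_mk, Prod.mk_add_mk, Submodule.coe_add, Submodule.coe_smul]
      have hks : a • (u₁ - (Φ (x₁, (z₁:Z)) - L x₁ + y)) +
          b • (u₂ - (Φ (x₂, (z₂:Z)) - L x₂ + y)) ∈ interior K :=
        hKcx.interior hk₁ hk₂ ha hb hab
      have hfin := hsum hKc hks
      have hb1 : b = 1 - a := by linarith
      subst hb1
      have heq : a • u₁ + (1-a) • u₂ -
          (Φ (a • x₁ + (1-a) • x₂, a • (z₁:Z) + (1-a) • (z₂:Z)) - L (a • x₁ + (1-a) • x₂) + y) =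
          a • Φ (x₁, (z₁:Z)) + (1-a) • Φ (x₂, (z₂:Z)) -
            Φ (a • x₁ + (1-a) • x₂, a • (z₁:Z) + (1-a) • (z₂:Z)) +
          (a • (u₁ - (Φ (x₁, (z₁:Z)) - L x₁ + y)) +
            (1-a) • (u₂ - (Φ (x₂, (z₂:Z)) - L x₂ + y))) := by
        rw [map_add, ContinuousLinearMap.map_smul, ContinuousLinearMap.map_smul]
        module
      rw [heq]
      exact hfin
  obtain ⟨yL, VL, hVLnhds, hVL⟩ := hC1 L
  have hWsub : ∀ q : ↥Z₀ × Y, (q.1 : Z) ∈ interior VL → q.2 - (yL + y) ∈ interior K →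
      q ∈ V := by
    rintro ⟨z, u⟩ hz hu
    obtain ⟨x, hxD, hxK⟩ := hVL (↑z) (interior_subset hz) z.2
    refine ⟨x, hxD, ?_⟩
    have heq : u - (Φ (x, (z:Z)) - L x + y) =
        (yL - (Φ (x, (z:Z)) - L x)) + (u - (yL + y)) := by abel
    rw [heq]
    exact hsum hxK hu
  have hWopen : IsOpen {q : ↥Z₀ × Y | (q.1 : Z) ∈ interior VL ∧ q.2 - (yL + y) ∈ interior K} := by
    have h1 : IsOpen {q : ↥Z₀ × Y | (q.1 : Z) ∈ interior VL} :=
      isOpen_interior.preimage (continuous_subtype_val.comp continuous_fst)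
    have h2 : IsOpen {q : ↥Z₀ × Y | q.2 - (yL + y) ∈ interior K} :=
      isOpen_interior.preimage (continuous_snd.sub continuous_const)
    exact h1.inter h2
  have hw₀ : ((0 : ↥Z₀), yL + y + e) ∈ interior V := by
    refine interior_maximal (fun q hq => hWsub q hq.1 hq.2) hWopen ⟨?_, ?_⟩
    · show ((0 : ↥Z₀) : Z) ∈ interior VL
      simpa using mem_interior_iff_mem_nhds.mpr hVLnhds
    · show (yL + y + e) - (yL + y) ∈ interior K
      simpa using he
  have h0V : (0 : ↥Z₀ × Y) ∉ V := by
    rintro ⟨x, hxD, hk⟩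
    simp only [Prod.fst_zero, Prod.snd_zero, ZeroMemClass.coe_zero, zero_sub] at hxD hk
    refine hA x hxD ?_
    rw [Set.mem_neg]
    exact hk
  obtain ⟨f, hf⟩ := geometric_hahn_banach_open_point hVconv.interior isOpen_interior
    (fun h => h0V (interior_subset h))
  rw [map_zero] at hf
  have hfle : ∀ q ∈ V, f q ≤ 0 := by
    intro q hq
    by_contra hpos
    push_neg at hpos
    have hfw : f ((0 : ↥Z₀), yL + y + e) < 0 := hf _ hw₀
    set w₀ : ↥Z₀ × Y := ((0 : ↥Z₀), yL + y + e) with hw₀def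
    set t : ℝ := f q / (f q - f w₀) with hts
    have hden : 0 < f q - f w₀ := by simp only [hw₀def]; linarith
    have htpos : 0 < t := div_pos hpos hden
    have ht1 : t ≤ 1 := by
      rw [hts, div_le_one hden]
      simp only [hw₀def]; linarith
    have hcombo := hVconv.combo_interior_self_mem_interior hw₀ hq htpos
      (by linarith : (0:ℝ) ≤ 1 - t) (by ring)
    have hlt := hf _ hcombo
    rw [map_add, map_smul, map_smul, smul_eq_mul, smul_eq_mul] at hlt
    have hzero : t * f w₀ + (1 - t) * f q = 0 := by
      rw [hts]
      field_simp
      ring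
    linarith
  set ξ₀ : ↥Z₀ →L[ℝ] ℝ := f.comp (ContinuousLinearMap.inl ℝ ↥Z₀ Y) with hξ₀def
  set η : Y →L[ℝ] ℝ := f.comp (ContinuousLinearMap.inr ℝ ↥Z₀ Y) with hηdef
  have hsplit : ∀ (a : ↥Z₀) (b : Y), f (a, b) = ξ₀ a + η b := by
    intro a b
    have hab : ((a, b) : ↥Z₀ × Y) = (a, 0) + (0, b) := by simp
    rw [hab, map_add]
    rfl
  have hηK : ∀ k ∈ K, η k ≤ 0 := by
    intro k hk
    refine aux_le _ (f ((0 : ↥Z₀), yL + y + e)) (fun t ht => ?_)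
    obtain ⟨x, hxD, hxK⟩ := interior_subset hw₀
    have hmem : ((0 : ↥Z₀), yL + y + e) + t • ((0 : ↥Z₀), k) ∈ V := by
      refine ⟨x, ?_, ?_⟩
      · simpa using hxD
      · simp only [Prod.smul_mk, Prod.mk_add_mk, smul_zero, add_zero]
        have heq : yL + y + e + t • k - (Φ (x, ((0:↥Z₀):Z)) - L x + y) =
            t • k + (yL + y + e - (Φ (x, ((0:↥Z₀):Z)) - L x + y)) := by abel
        rw [heq]
        exact hsum (hKcone ht hk) hxK
    have hle := hfle _ hmem
    rw [map_add, map_smul, smul_eq_mul] at hle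
    have hfk : f (((0 : ↥Z₀), k) : ↥Z₀ × Y) = η k := by
      rw [hsplit]; simp
    rw [hfk] at hle
    linarith
  have hηe : η e < 0 := by
    rcases lt_or_eq_of_le (hηK e heK) with h | h
    · exact h
    exfalso
    have haux : ∀ u : Y, η u ≤ 0 := by
      intro u
      obtain ⟨δ, hδpos, hδmem⟩ := hδ e u he
      have hle := hηK _ (interior_subset hδmem)
      rw [map_add, map_smul, smul_eq_mul, ← h] at hle
      nlinarith
    have hη0 : ∀ u : Y, η u = 0 := by
      intro u
      have h1 := haux u
      have h2 := haux (-u)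
      rw [map_neg] at h2
      linarith
    have hlt := hf _ hw₀
    rw [hsplit] at hlt
    simp [hη0] at hlt
  have hfneg : ∀ q ∈ V, f q < 0 := by
    rintro ⟨z, u⟩ ⟨x, hxD, hk⟩
    obtain ⟨δ, hδpos, hδmem⟩ := hδ _ (-e) hk
    have hmem : ((z, u + δ • (-e)) : ↥Z₀ × Y) ∈ V := by
      refine ⟨x, hxD, ?_⟩
      have heq : u + δ • (-e) - (Φ (x, (z:Z)) - L x + y) =
          (u - (Φ (x, (z:Z)) - L x + y)) + δ • (-e) := by abel
      rw [heq]
      exact hδmem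
    have hle := hfle _ hmem
    have hpair : ((z, u + δ • (-e)) : ↥Z₀ × Y) = (z, u) + δ • ((0 : ↥Z₀), -e) := by
      simp [Prod.ext_iff]
    rw [hpair, map_add, map_smul, smul_eq_mul] at hle
    have hfe : f (((0 : ↥Z₀), -e) : ↥Z₀ × Y) = -(η e) := by
      rw [hsplit]; simp
    rw [hfe] at hle
    nlinarith
  obtain ⟨xt, hxt0, hxtS⟩ := hC0
  have hS₀ : ∀ s ∈ S, s ∈ Z₀ := by
    intro s hs
    have h1 := (hxtS (-s) (Set.neg_mem_neg.mpr hs)).1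
    have h3 : -s ∈ Z₀ := Submodule.subset_span ⟨(xt, -s), h1, rfl⟩
    simpa using Z₀.neg_mem h3
  have hξ₀S : ∀ (s : Z) (hs : s ∈ S), 0 ≤ ξ₀ ⟨s, hS₀ s hs⟩ := by
    intro s hs
    have hkey : ∀ t : ℝ, 0 ≤ t →
        t * (-(ξ₀ ⟨s, hS₀ s hs⟩)) + η (Φ (xt, 0) - L xt + y + e) ≤ 0 := by
      intro t ht
      have hts : t • s ∈ S := hScone ht hs
      obtain ⟨hD', hK'⟩ := hxtS (-(t • s)) (Set.neg_mem_neg.mpr hts)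
      set m : ↥Z₀ := (-t) • (⟨s, hS₀ s hs⟩ : ↥Z₀) with hm
      have hmc : (m : Z) = -(t • s) := by simp [hm, neg_smul]
      have hmemV : ((m, Φ (xt, -(t • s)) - L xt + y + e) : ↥Z₀ × Y) ∈ V := by
        refine ⟨xt, ?_, ?_⟩
        · rw [hmc]; exact hD'
        · rw [hmc]
          have heq : Φ (xt, -(t • s)) - L xt + y + e - (Φ (xt, -(t • s)) - L xt + y) = e := by
            abel
          rw [heq]
          exact he
      have hle := hfle _ hmemV
      rw [hsplit] at hle
      have hξm : ξ₀ m = t * (-(ξ₀ ⟨s, hS₀ s hs⟩)) := by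
        rw [hm, map_smul, smul_eq_mul]; ring
      have hηineq : η (Φ (xt, 0) - L xt + y + e) ≤ η (Φ (xt, -(t • s)) - L xt + y + e) := by
        have hK'' := hηK _ hK'
        have heq : (Φ (xt, 0) - L xt + y + e) - (Φ (xt, -(t • s)) - L xt + y + e) =
            Φ (xt, 0) - Φ (xt, -(t • s)) := by abel
        have hsub : η (Φ (xt, 0) - L xt + y + e) - η (Φ (xt, -(t • s)) - L xt + y + e) ≤ 0 := by
          rw [← map_sub, heq]; exact hK''
        linarith
      linarith
    have := aux_le _ _ hkey
    linarith
  obtain ⟨ξ, hξ⟩ := clm_extend Z₀ ξ₀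
  set β : ℝ := -(η e) with hβ
  have hβpos : 0 < β := by rw [hβ]; linarith
  refine ⟨(β⁻¹ • ξ).smulRight e, ?_, ?_⟩
  · rintro _ ⟨s, hs, rfl⟩
    have hval : ((β⁻¹ • ξ).smulRight e) s = (β⁻¹ * ξ s) • e := by
      simp [ContinuousLinearMap.smulRight_apply]
    rw [hval]
    have hξs : ξ s = ξ₀ ⟨s, hS₀ s hs⟩ := hξ ⟨s, hS₀ s hs⟩
    refine hKcone (mul_nonneg (inv_nonneg.mpr hβpos.le) ?_) heK
    rw [hξs]
    exact hξ₀S s hs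
  · intro p hp hcon
    have hp₂ : p.2 ∈ Z₀ := Submodule.subset_span ⟨p, hp, rfl⟩
    rw [Set.mem_neg] at hcon
    have hint : ((β⁻¹ • ξ).smulRight e) p.2 - (Φ p - L p.1 + y) ∈ interior K := by
      have heq : -(Φ p - L p.1 - ((β⁻¹ • ξ).smulRight e) p.2 + y) =
          ((β⁻¹ • ξ).smulRight e) p.2 - (Φ p - L p.1 + y) := by abel
      rwa [heq] at hcon
    have hmemV : (((⟨p.2, hp₂⟩ : ↥Z₀), ((β⁻¹ • ξ).smulRight e) p.2) : ↥Z₀ × Y) ∈ V := by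
      refine ⟨p.1, ?_, ?_⟩
      · simpa using hp
      · simpa using hint
    have hlt := hfneg _ hmemV
    rw [hsplit] at hlt
    have hηT : η (((β⁻¹ • ξ).smulRight e) p.2) = -(ξ₀ ⟨p.2, hp₂⟩) := by
      have hval : ((β⁻¹ • ξ).smulRight e) p.2 = (β⁻¹ * ξ p.2) • e := by
        simp [ContinuousLinearMap.smulRight_apply]
      have hξp : ξ p.2 = ξ₀ ⟨p.2, hp₂⟩ := hξ ⟨p.2, hp₂⟩
      have hηe' : η e = -β := by rw [hβ]; ring
      rw [hval, map_smul, smul_eq_mul, hξp, hηe']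
      field_simp
    rw [hηT] at hlt
    simp at hlt

/-- Theorem 3.1 (second part): under (C1) and (C0), A = B = B₊. -/
theorem stmt_2
    {X Y Z : Type*}
    [AddCommGroup X] [Module ℝ X] [TopologicalSpace X] [IsTopologicalAddGroup X]
    [ContinuousSMul ℝ X] [LocallyConvexSpace ℝ X] [T2Space X]
    [AddCommGroup Y] [Module ℝ Y] [TopologicalSpace Y] [IsTopologicalAddGroup Y]
    [ContinuousSMul ℝ Y] [LocallyConvexSpace ℝ Y] [T2Space Y]
    [AddCommGroup Z] [Module ℝ Z] [TopologicalSpace Z] [IsTopologicalAddGroup Z]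
    [ContinuousSMul ℝ Z] [LocallyConvexSpace ℝ Z] [T2Space Z]
    (K : Set Y) (hKcl : IsClosed K) (hKcx : Convex ℝ K)
    (hKcone : ∀ ⦃c : ℝ⦄, 0 ≤ c → ∀ ⦃y : Y⦄, y ∈ K → c • y ∈ K)
    (hKne : K ≠ Set.univ) (hKint : (interior K).Nonempty)
    (Φ : X × Z → Y) (D : Set (X × Z)) (hD : D.Nonempty)
    (hconv : Convex ℝ {p : (X × Z) × Y | p.1 ∈ D ∧ p.2 - Φ p.1 ∈ K})
    (h0 : (0 : Z) ∈ Prod.snd '' D)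
    (S : Set Z) (hS : S.Nonempty) (hScx : Convex ℝ S)
    (hScone : ∀ ⦃c : ℝ⦄, 0 ≤ c → ∀ ⦃z : Z⦄, z ∈ S → c • z ∈ S)
    -- condition (C1)
    (hC1 : ∀ L : X →L[ℝ] Y, ∃ yL : Y, ∃ VL ∈ nhds (0 : Z),
      ∀ z ∈ VL, z ∈ (Submodule.span ℝ (Prod.snd '' D) : Set Z) →
        ∃ x : X, (x, z) ∈ D ∧ yL - (Φ (x, z) - L x) ∈ K)
    -- condition (C0)
    (hC0 : ∃ xt : X, (xt, (0 : Z)) ∈ D ∧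
      ∀ z ∈ -S, (xt, z) ∈ D ∧ Φ (xt, 0) - Φ (xt, z) ∈ K) :
    ∀ (L : X →L[ℝ] Y) (y : Y),
      ((∀ x : X, (x, (0 : Z)) ∈ D → Φ (x, 0) - L x + y ∉ -interior K) ↔
        (∃ T : Z →L[ℝ] Y, ∀ p ∈ D, Φ p - L p.1 - T p.2 + y ∉ -interior K)) ∧
      ((∀ x : X, (x, (0 : Z)) ∈ D → Φ (x, 0) - L x + y ∉ -interior K) ↔
        (∃ T : Z →L[ℝ] Y, (⇑T '' S ⊆ K) ∧
          ∀ p ∈ D, Φ p - L p.1 - T p.2 + y ∉ -interior K)) := by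
  intro L y
  have easy : ∀ T : Z →L[ℝ] Y, (∀ p ∈ D, Φ p - L p.1 - T p.2 + y ∉ -interior K) →
      ∀ x : X, (x, (0 : Z)) ∈ D → Φ (x, 0) - L x + y ∉ -interior K := by
    intro T hT x hx hcon
    have h := hT (x, 0) hx
    simp only [map_zero, sub_zero] at h
    exact h hcon
  refine ⟨⟨fun hA => ?_, fun ⟨T, hT⟩ => easy T hT⟩,
    ⟨fun hA => key_lemma K hKcx hKcone hKint Φ D hconv S hScone hC1 hC0 L y hA,
      fun ⟨T, _, hT⟩ => easy T hT⟩⟩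
  obtain ⟨T, _, hT⟩ := key_lemma K hKcx hKcone hKint Φ D hconv S hScone hC1 hC0 L y hA
  exact ⟨T, hT⟩
end

section
/- (Theorem 3.2 under condition (C2).) Assume Φ is K-convex (with nonempty domain D and 0_Z ∈ π(D)) and condition (C2) holds: there exist x̂ ∈ X, ŷ ∈ Y and a neighborhood V̂ of 0_Z in Z such that for every z ∈ V̂ ∩ Z₀ one has (x̂,z) ∈ D and ŷ - Φ(x̂,z) ∈ K. Then A = B; equivalently, for every L ∈ L(X,Y) and y ∈ Y, Φ(x,0_Z) - L(x) + y ∉ -int K for all x with (x,0_Z) ∈ D if and only if there exists T ∈ L(Z,Y) with Φ(x,z) - L(x) - T(z) + y ∉ -int K for all (x,z) ∈ D. -/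
open Pointwise

set_option maxHeartbeats 1000000 in
/-- Theorem 3.2 under condition (C2). -/
theorem stmt_3
    {X Y Z : Type*}
    [AddCommGroup X] [Module ℝ X] [TopologicalSpace X] [IsTopologicalAddGroup X]
    [ContinuousSMul ℝ X] [LocallyConvexSpace ℝ X] [T2Space X]
    [AddCommGroup Y] [Module ℝ Y] [TopologicalSpace Y] [IsTopologicalAddGroup Y]
    [ContinuousSMul ℝ Y] [LocallyConvexSpace ℝ Y] [T2Space Y]
    [AddCommGroup Z] [Module ℝ Z] [TopologicalSpace Z] [IsTopologicalAddGroup Z]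
    [ContinuousSMul ℝ Z] [LocallyConvexSpace ℝ Z] [T2Space Z]
    (K : Set Y) (hKcl : IsClosed K) (hKcx : Convex ℝ K)
    (hKcone : ∀ ⦃c : ℝ⦄, 0 ≤ c → ∀ ⦃y : Y⦄, y ∈ K → c • y ∈ K)
    (hKne : K ≠ Set.univ) (hKint : (interior K).Nonempty)
    (Φ : X × Z → Y) (D : Set (X × Z)) (hD : D.Nonempty)
    (hconv : Convex ℝ {p : (X × Z) × Y | p.1 ∈ D ∧ p.2 - Φ p.1 ∈ K})
    (h0 : (0 : Z) ∈ Prod.snd '' D)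
    -- condition (C2)
    (hC2 : ∃ xh : X, ∃ yh : Y, ∃ Vh ∈ nhds (0 : Z),
      ∀ z ∈ Vh, z ∈ (Submodule.span ℝ (Prod.snd '' D) : Set Z) →
        (xh, z) ∈ D ∧ yh - Φ (xh, z) ∈ K) :
    ∀ (L : X →L[ℝ] Y) (y : Y),
      (∀ x : X, (x, (0 : Z)) ∈ D → Φ (x, 0) - L x + y ∉ -interior K) ↔
      (∃ T : Z →L[ℝ] Y, ∀ p ∈ D, Φ p - L p.1 - T p.2 + y ∉ -interior K) := by
  classical
  obtain ⟨e, he⟩ := hKint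
  have heK : e ∈ K := interior_subset he
  have hK0 : (0 : Y) ∈ K := by simpa using hKcone le_rfl heK
  have hKadd : ∀ {a b : Y}, a ∈ K → b ∈ K → a + b ∈ K := by
    intro a b ha hb
    have h2 := hKcx ha hb (by norm_num : (0:ℝ) ≤ 1/2) (by norm_num : (0:ℝ) ≤ 1/2)
      (by norm_num)
    have h3 := hKcone (by norm_num : (0:ℝ) ≤ 2) h2
    have heq : (2:ℝ) • ((1/2 : ℝ) • a + (1/2 : ℝ) • b) = a + b := by
      rw [smul_add, smul_smul, smul_smul]; norm_num
    rwa [heq] at h3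
  have hIntAdd : ∀ {a b : Y}, a ∈ interior K → b ∈ K → a + b ∈ interior K := by
    intro a b ha hb
    have hopen : IsOpen ((· + b) '' interior K) :=
      (isOpenMap_add_right b) _ isOpen_interior
    have hsub : ((· + b) '' interior K) ⊆ K := by
      rintro _ ⟨w, hw, rfl⟩; exact hKadd (interior_subset hw) hb
    exact interior_maximal hsub hopen ⟨a, ha, rfl⟩
  have hIntSmul : ∀ {t : ℝ}, 0 < t → ∀ {a : Y}, a ∈ interior K → t • a ∈ interior K := by
    intro t ht a ha
    have hopen : IsOpen ((t • ·) '' interior K) :=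
      (isOpenMap_smul₀ (G₀ := ℝ) (ne_of_gt ht)) _ isOpen_interior
    have hsub : ((t • ·) '' interior K) ⊆ K := by
      rintro _ ⟨w, hw, rfl⟩; exact hKcone ht.le (interior_subset hw)
    exact interior_maximal hsub hopen ⟨a, ha, rfl⟩
  -- a helper to find small positive shifts staying in the interior
  have hsmall : ∀ v : Y, v ∈ interior K → ∃ δ : ℝ, 0 < δ ∧ v - δ • e ∈ interior K := by
    intro v hv
    have hcont : ContinuousAt (fun s : ℝ => v - s • e) 0 := by fun_prop
    have hmem : interior K ∈ nhds ((fun s : ℝ => v - s • e) 0) := by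
      simpa using isOpen_interior.mem_nhds hv
    have hpre := hcont.preimage_mem_nhds hmem
    rw [Metric.mem_nhds_iff] at hpre
    obtain ⟨ε, hε, hball⟩ := hpre
    refine ⟨ε/2, by positivity, hball ?_⟩
    simp only [Metric.mem_ball, Real.dist_eq, sub_zero]
    rw [abs_of_pos (by positivity)]; linarith
  intro L y
  constructor
  · -- hard direction
    intro hA
    set Z0 : Submodule ℝ Z := Submodule.span ℝ (Prod.snd '' D) with hZ0
    obtain ⟨xh, yh, Vh, hVh, hC2'⟩ := hC2
    set v : Y := yh - L xh + y with hvdef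
    obtain ⟨s0, hs0pos, hs0⟩ : ∃ s : ℝ, 0 < s ∧ e - s • v ∈ interior K := by
      have hcont : ContinuousAt (fun s : ℝ => e - s • v) 0 := by fun_prop
      have hmem : interior K ∈ nhds ((fun s : ℝ => e - s • v) 0) := by
        simpa using isOpen_interior.mem_nhds he
      have hpre := hcont.preimage_mem_nhds hmem
      rw [Metric.mem_nhds_iff] at hpre
      obtain ⟨ε, hε, hball⟩ := hpre
      refine ⟨ε/2, by positivity, hball ?_⟩
      simp only [Metric.mem_ball, Real.dist_eq, sub_zero]
      rw [abs_of_pos (by positivity)]; linarith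
    set t0 : ℝ := s0⁻¹ with ht0def
    have ht0v : t0 • e - v ∈ interior K := by
      have h := hIntSmul (inv_pos.2 hs0pos) hs0
      rwa [smul_sub, smul_smul, inv_mul_cancel₀ (ne_of_gt hs0pos), one_smul] at h
    -- the convex set E0 in Z0 × ℝ
    set E0 : Set (Z0 × ℝ) :=
      {q | ∃ x : X, (x, (q.1 : Z)) ∈ D ∧
        q.2 • e - (Φ (x, (q.1 : Z)) - L x + y) ∈ K} with hE0def
    have hE0conv : Convex ℝ E0 := by
      rintro ⟨z1, t1⟩ ⟨x1, hx1D, hx1K⟩ ⟨z2, t2⟩ ⟨x2, hx2D, hx2K⟩ a b ha hb hab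
      dsimp only at hx1D hx1K hx2D hx2K
      have h1 : (((x1, (z1 : Z)), Φ (x1, (z1 : Z))) : (X × Z) × Y) ∈
          {p : (X × Z) × Y | p.1 ∈ D ∧ p.2 - Φ p.1 ∈ K} := ⟨hx1D, by simpa using hK0⟩
      have h2 : (((x2, (z2 : Z)), Φ (x2, (z2 : Z))) : (X × Z) × Y) ∈
          {p : (X × Z) × Y | p.1 ∈ D ∧ p.2 - Φ p.1 ∈ K} := ⟨hx2D, by simpa using hK0⟩
      obtain ⟨hDm, hKm⟩ := hconv h1 h2 ha hb hab
      simp only [Prod.smul_mk, Prod.mk_add_mk, Set.mem_setOf_eq] at hDm hKm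
      have hz : (((a • (z1, t1) + b • (z2, t2) : Z0 × ℝ)).1 : Z)
          = a • (z1 : Z) + b • (z2 : Z) := by
        simp only [Prod.fst_add, Prod.smul_fst]
        push_cast
        ring
      have ht2 : ((a • (z1, t1) + b • (z2, t2) : Z0 × ℝ)).2 = a * t1 + b * t2 := by
        simp [Prod.snd_add, Prod.smul_snd, smul_eq_mul]
      show ∃ x : X, _ ∧ _
      refine ⟨a • x1 + b • x2, ?_, ?_⟩
      · rw [hz]; exact hDm
      · rw [hz, ht2]
        have hsum := hKadd (hKadd (hKcone ha hx1K) (hKcone hb hx2K)) hKm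
        have heq : a • (t1 • e - (Φ (x1, (z1 : Z)) - L x1 + y))
              + b • (t2 • e - (Φ (x2, (z2 : Z)) - L x2 + y))
              + (a • Φ (x1, (z1 : Z)) + b • Φ (x2, (z2 : Z))
                - Φ (a • x1 + b • x2, a • (z1 : Z) + b • (z2 : Z)))
            = (a * t1 + b * t2) • e
              - (Φ (a • x1 + b • x2, a • (z1 : Z) + b • (z2 : Z))
                - L (a • x1 + b • x2) + y) := by
          have hb' : b = 1 - a := by linarith
          subst hb'
          rw [map_add, map_smul, map_smul]
          module
        rw [← heq]
        exact hsum
    have hsubE : ((Subtype.val ⁻¹' Vh : Set Z0) ×ˢ Set.Ioi t0) ⊆ E0 := by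
      rintro ⟨z, t⟩ ⟨hzV, ht⟩
      obtain ⟨hzD, hzK⟩ := hC2' (z : Z) hzV z.2
      refine ⟨xh, hzD, ?_⟩
      have heq : t • e - (Φ (xh, (z : Z)) - L xh + y)
          = (t - t0) • e + ((t0 • e - v) + (yh - Φ (xh, (z : Z)))) := by
        rw [hvdef]; module
      rw [heq]
      exact hKadd (hKcone (sub_nonneg.2 (le_of_lt ht)) heK)
        (hKadd (interior_subset ht0v) hzK)
    have hVh0 : Vh ∈ nhds ((0 : Z0) : Z) := by simpa using hVh
    have hmemint : ∀ t : ℝ, t0 < t → ((0 : Z0), t) ∈ interior E0 := by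
      intro t ht
      rw [mem_interior_iff_mem_nhds]
      refine Filter.mem_of_superset (prod_mem_nhds ?_ (Ioi_mem_nhds ht)) hsubE
      exact continuous_subtype_val.continuousAt.preimage_mem_nhds hVh0
    have hray : ∀ r : ℝ, ((0 : Z0), r) ∈ E0 → 0 ≤ r := by
      rintro r ⟨x, hxD, hxK⟩
      by_contra hr
      push_neg at hr
      have hx0 : (x, (0 : Z)) ∈ D := by simpa using hxD
      apply hA x hx0
      rw [Set.mem_neg]
      have h1 : (-r) • e ∈ interior K := hIntSmul (by linarith) he
      have hxK' : r • e - (Φ (x, (0 : Z)) - L x + y) ∈ K := by simpa using hxK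
      have h2 := hIntAdd h1 hxK'
      have heq : (-r) • e + (r • e - (Φ (x, (0 : Z)) - L x + y))
          = -(Φ (x, (0 : Z)) - L x + y) := by module
      rwa [heq] at h2
    obtain ⟨f, u, hfu1, hfu2⟩ :=
      geometric_hahn_banach_open (s := interior E0)
        (t := ({(0 : Z0)} : Set Z0) ×ˢ Set.Iio (0 : ℝ))
        hE0conv.interior isOpen_interior
        ((convex_singleton (0 : Z0)).prod (convex_Iio 0))
        (by
          rw [Set.disjoint_left]
          rintro ⟨z, r⟩ hp ⟨hz0, hr⟩
          simp only [Set.mem_singleton_iff] at hz0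
          subst hz0
          exact absurd (hray r (interior_subset hp)) (not_le.2 hr))
    set β : ℝ := f ((0 : Z0), 1) with hβdef
    set g0 : Z0 →L[ℝ] ℝ := f.comp (ContinuousLinearMap.inl ℝ Z0 ℝ) with hg0def
    have hfsplit : ∀ (z : Z0) (t : ℝ), f (z, t) = g0 z + t * β := by
      intro z t
      have heq : ((z, t) : Z0 × ℝ) = ((z, 0) : Z0 × ℝ) + t • (((0 : Z0), 1) : Z0 × ℝ) := by
        simp [Prod.ext_iff]
      rw [heq, map_add, map_smul, smul_eq_mul]
      rfl
    have hrayu : ∀ r : ℝ, r < 0 → u ≤ r * β := by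
      intro r hr
      have h := hfu2 ((0 : Z0), r) ⟨rfl, hr⟩
      rwa [hfsplit, map_zero, zero_add] at h
    have hIv : ∀ t : ℝ, t0 < t → t * β < u := by
      intro t ht
      have h := hfu1 _ (hmemint t ht)
      rwa [hfsplit, map_zero, zero_add] at h
    have hβneg : β < 0 := by
      rcases lt_or_ge β 0 with h | h
      · exact h
      exfalso
      have h1 : u ≤ (-1) * β := hrayu (-1) (by norm_num)
      have htpos : (0 : ℝ) ≤ max (t0 + 1) 0 := le_max_right _ _
      have h2 : (max (t0 + 1) 0) * β < u :=
        hIv _ (lt_of_lt_of_le (by linarith) (le_max_left _ _))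
      nlinarith [mul_nonneg htpos h]
    have hβne : β ≠ 0 := ne_of_lt hβneg
    have hu0 : u ≤ 0 := by
      by_contra h
      push_neg at h
      have hr : u / (2 * β) < 0 := div_neg_of_pos_of_neg h (by linarith)
      have h2 := hrayu _ hr
      have heq : u / (2 * β) * β = u / 2 := by
        field_simp
      rw [heq] at h2
      linarith
    have hE0le : ∀ q ∈ E0, f q ≤ u := by
      intro q hq
      by_contra h
      push_neg at h
      have hqI : (((0 : Z0), t0 + 1) : Z0 × ℝ) ∈ interior E0 := hmemint _ (by linarith)
      set d : ℝ := f (((0 : Z0), t0 + 1) : Z0 × ℝ) - f q with hd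
      have key : ∀ θ : ℝ, θ ∈ Set.Ioc (0 : ℝ) 1 → f q + θ * d < u := by
        intro θ hθ
        have hm := hE0conv.add_smul_sub_mem_interior hq hqI hθ
        have h2 := hfu1 _ hm
        rwa [map_add, map_smul, map_sub, smul_eq_mul] at h2
      rcases le_or_gt 0 d with hdle | hdlt
      · have hk := key 1 ⟨one_pos, le_refl 1⟩
        nlinarith
      · set θ := min 1 ((u - f q) / d) with hθdef
        have hθpos : 0 < θ :=
          lt_min one_pos (div_pos_of_neg_of_neg (by linarith) hdlt)
        have hk := key θ ⟨hθpos, min_le_left _ _⟩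
        have hle : θ ≤ (u - f q) / d := min_le_right _ _
        have hmul : (u - f q) / d * d ≤ θ * d :=
          mul_le_mul_of_nonpos_right hle (le_of_lt hdlt)
        rw [div_mul_cancel₀ _ (ne_of_lt hdlt)] at hmul
        linarith
    have hE0bound : ∀ (z : Z0) (t : ℝ), (z, t) ∈ E0 → g0 z + t * β ≤ u := by
      intro z t hzt
      have h := hE0le _ hzt
      rwa [hfsplit] at h
    -- extend g0 to Z
    have hpre : (⇑g0 ⁻¹' Set.Iio 1) ∈ nhds (0 : Z0) := by
      apply g0.continuous.continuousAt.preimage_mem_nhds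
      rw [map_zero]
      exact Iio_mem_nhds one_pos
    rw [Topology.IsEmbedding.subtypeVal.toIsInducing.nhds_eq_comap, Filter.mem_comap] at hpre
    obtain ⟨U', hU', hU'sub⟩ := hpre
    have hU'0 : U' ∈ nhds (0 : Z) := by simpa using hU'
    obtain ⟨U, hUnhds, hUconv, hUsub⟩ :=
      (locallyConvexSpace_iff_exists_convex_subset ℝ Z).1 inferInstance 0 U' hU'0
    have habs : Absorbent ℝ U := absorbent_nhds_zero hUnhds
    have hboundg : ∀ z : Z0, g0 z ≤ gauge U (z : Z) := by
      intro z
      rw [gauge_def]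
      refine le_csInf habs.gauge_set_nonempty ?_
      rintro r ⟨hr, hzr⟩
      have hrpos : (0 : ℝ) < r := hr
      obtain ⟨w, hw, hwz⟩ := hzr
      have hwval : w = r⁻¹ • (z : Z) := by
        rw [← hwz, smul_smul, inv_mul_cancel₀ (ne_of_gt hrpos), one_smul]
      have hwmem : w ∈ Z0 := by
        rw [hwval]; exact Z0.smul_mem _ z.2
      have h1 : g0 ⟨w, hwmem⟩ < 1 := hU'sub (hUsub hw)
      have h2 : z = r • (⟨w, hwmem⟩ : Z0) := Subtype.ext (by simp [← hwz])
      rw [h2, map_smul, smul_eq_mul]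
      nlinarith
    obtain ⟨G, hG1, hG2⟩ :=
      exists_extension_of_le_sublinear ⟨Z0, g0.toLinearMap⟩ (gauge U)
        (fun c hc => gauge_smul_of_nonneg hc.le)
        (gauge_add_le hUconv habs) (fun x => hboundg x)
    have hGcont : Continuous G := by
      apply continuous_of_continuousAt_zero G
      rw [ContinuousAt, map_zero]
      have hup : Filter.Tendsto (fun x : Z => gauge U x + gauge U (-x))
          (nhds 0) (nhds 0) := by
        have h1 := tendsto_gauge_nhds_zero hUnhds
        have hneg : Filter.Tendsto (fun x : Z => -x) (nhds (0 : Z)) (nhds 0) := by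
          simpa using (continuous_neg (G := Z)).tendsto 0
        have h3 := h1.comp hneg
        simpa using h1.add h3
      have hlow : Filter.Tendsto (fun x : Z => -(gauge U x + gauge U (-x)))
          (nhds 0) (nhds 0) := by
        simpa using hup.neg
      refine tendsto_of_tendsto_of_tendsto_of_le_of_le hlow hup ?_ ?_
      · intro x
        have h4 := hG2 (-x)
        rw [map_neg] at h4
        have h5 := gauge_nonneg (s := U) x
        simp only []
        linarith
      · intro x
        have h4 := hG2 x
        have h5 := gauge_nonneg (s := U) (-x)
        simp only []
        linarith
    refine ⟨ContinuousLinearMap.smulRight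
      ((-β)⁻¹ • (⟨G, hGcont⟩ : Z →L[ℝ] ℝ)) e, ?_⟩
    rintro ⟨x, z⟩ hp hmem
    dsimp only at hmem
    set s : ℝ := (-β)⁻¹ * G z with hsdef
    have hTz : (ContinuousLinearMap.smulRight
        ((-β)⁻¹ • (⟨G, hGcont⟩ : Z →L[ℝ] ℝ)) e) z = s • e := by
      rw [ContinuousLinearMap.smulRight_apply, ContinuousLinearMap.smul_apply]
      rw [hsdef, smul_eq_mul]
      rfl
    rw [hTz, Set.mem_neg] at hmem
    have hv2 : s • e - (Φ (x, z) - L x + y) ∈ interior K := by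
      have heq : -(Φ (x, z) - L x - s • e + y) = s • e - (Φ (x, z) - L x + y) := by
        module
      rwa [heq] at hmem
    obtain ⟨δ, hδpos, hδ⟩ := hsmall _ hv2
    have hzmem : z ∈ Z0 := Submodule.subset_span ⟨(x, z), hp, rfl⟩
    have hE0m : ((⟨z, hzmem⟩ : Z0), s - δ) ∈ E0 := by
      refine ⟨x, hp, ?_⟩
      have heq : (s - δ) • e - (Φ (x, z) - L x + y)
          = (s • e - (Φ (x, z) - L x + y)) - δ • e := by module
      rw [heq]
      exact interior_subset hδ
    have hb := hE0bound _ _ hE0m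
    have hGz : G z = g0 ⟨z, hzmem⟩ := hG1 ⟨z, hzmem⟩
    rw [← hGz] at hb
    have hδβ : 0 < δ * (-β) := mul_pos hδpos (by linarith)
    have hGzval : G z = s * (-β) := by
      rw [hsdef]; field_simp
    have hkey : s * (-β) + (s - δ) * β = δ * (-β) := by ring
    rw [hGzval] at hb
    linarith
  · rintro ⟨T, hT⟩ x hx
    have h := hT (x, 0) hx
    simpa using h
end

section
/- (Theorem 3.2 under condition (C4).) Assume Φ is K-convex (with nonempty domain D and 0_Z ∈ π(D)) and condition (C4) holds: Z₀ is finite-dimensional and 0_Z is a relative interior point of π(D), i.e. there is a neighborhood V of 0_Z in Z with V ∩ Z₀ ⊆ π(D). Then A = B; equivalently, for every L ∈ L(X,Y) and y ∈ Y, Φ(x,0_Z) - L(x) + y ∉ -int K for all x with (x,0_Z) ∈ D if and only if there exists T ∈ L(Z,Y) with Φ(x,z) - L(x) - T(z) + y ∉ -int K for all (x,z) ∈ D. -/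
open Pointwise
set_option maxHeartbeats 1000000

lemma exists_dual_family {Z : Type*} [AddCommGroup Z] [Module ℝ Z] [TopologicalSpace Z]
    [IsTopologicalAddGroup Z] [ContinuousSMul ℝ Z] [LocallyConvexSpace ℝ Z] [T2Space Z]
    {n : ℕ} {e : Fin n → Z} (he : LinearIndependent ℝ e) :
    ∃ f : Fin n → (Z →L[ℝ] ℝ), ∀ i j, f i (e j) = if i = j then 1 else 0 := by
  classical
  have H : ∀ i : Fin n, ∃ g : Z →L[ℝ] ℝ, g (e i) ≠ 0 ∧ ∀ j, j ≠ i → g (e j) = 0 := by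
    intro i
    set S : Submodule ℝ Z := Submodule.span ℝ (e '' {j | j ≠ i}) with hS
    have hfd : FiniteDimensional ℝ S :=
      FiniteDimensional.span_of_finite ℝ ((Set.finite_univ.subset (Set.subset_univ _)).image e)
    have hcl : IsClosed (S : Set Z) := S.closed_of_finiteDimensional
    have hne : e i ∉ (S : Set Z) := he.notMem_span_image (by simp)
    obtain ⟨g, u, hgu, hgx⟩ := geometric_hahn_banach_closed_point S.convex hcl hne
    have hzero : ∀ a ∈ S, g a = 0 := by
      intro a ha
      by_contra hga
      have h1 : ∀ r : ℝ, r * g a < u := by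
        intro r
        have := hgu (r • a) (S.smul_mem r ha)
        simpa using this
      have := h1 ((u + 1) / g a)
      rw [div_mul_cancel₀ _ hga] at this
      linarith
    have hu0 : 0 < u := by simpa using hgu 0 S.zero_mem
    refine ⟨(g (e i))⁻¹ • g, ?_, ?_⟩
    · have hgi : g (e i) ≠ 0 := (lt_trans hu0 hgx).ne'
      simp [hgi]
    · intro j hj
      have : e j ∈ S := Submodule.subset_span ⟨j, hj, rfl⟩
      simp [hzero _ this]
  choose g hg1 hg2 using H
  refine ⟨fun i => (g i (e i))⁻¹ • g i, ?_⟩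
  intro i j
  by_cases h : i = j
  · subst h; simp [inv_mul_cancel₀ (hg1 i)]
  · simp [h, hg2 i j (Ne.symm h)]

/-- Theorem 3.2 under condition (C4): Z₀ finite-dimensional and 0 a relative
interior point of π(D). -/
theorem stmt_4
    {X Y Z : Type*}
    [AddCommGroup X] [Module ℝ X] [TopologicalSpace X] [IsTopologicalAddGroup X]
    [ContinuousSMul ℝ X] [LocallyConvexSpace ℝ X] [T2Space X]
    [AddCommGroup Y] [Module ℝ Y] [TopologicalSpace Y] [IsTopologicalAddGroup Y]
    [ContinuousSMul ℝ Y] [LocallyConvexSpace ℝ Y] [T2Space Y]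
    [AddCommGroup Z] [Module ℝ Z] [TopologicalSpace Z] [IsTopologicalAddGroup Z]
    [ContinuousSMul ℝ Z] [LocallyConvexSpace ℝ Z] [T2Space Z]
    (K : Set Y) (hKcl : IsClosed K) (hKcx : Convex ℝ K)
    (hKcone : ∀ ⦃c : ℝ⦄, 0 ≤ c → ∀ ⦃y : Y⦄, y ∈ K → c • y ∈ K)
    (hKne : K ≠ Set.univ) (hKint : (interior K).Nonempty)
    (Φ : X × Z → Y) (D : Set (X × Z)) (hD : D.Nonempty)
    (hconv : Convex ℝ {p : (X × Z) × Y | p.1 ∈ D ∧ p.2 - Φ p.1 ∈ K})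
    (h0 : (0 : Z) ∈ Prod.snd '' D)
    -- condition (C4)
    (hfin : FiniteDimensional ℝ (Submodule.span ℝ (Prod.snd '' D)))
    (hri : ∃ V ∈ nhds (0 : Z),
      V ∩ (Submodule.span ℝ (Prod.snd '' D) : Set Z) ⊆ Prod.snd '' D) :
    ∀ (L : X →L[ℝ] Y) (y : Y),
      (∀ x : X, (x, (0 : Z)) ∈ D → Φ (x, 0) - L x + y ∉ -interior K) ↔
      (∃ T : Z →L[ℝ] Y, ∀ p ∈ D, Φ p - L p.1 - T p.2 + y ∉ -interior K) := by
  classical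
  obtain ⟨u₀, hu₀⟩ := hKint
  have hK0 : (0 : Y) ∈ K := by
    have := hKcone le_rfl (interior_subset hu₀)
    simpa using this
  -- interior K + K ⊆ interior K
  have hKadd : ∀ {u k : Y}, u ∈ interior K → k ∈ K → u + k ∈ interior K := by
    intro u k hu hk
    have hsub : (fun v => v + k) '' interior K ⊆ K := by
      rintro _ ⟨v, hv, rfl⟩
      have hmid : (1/2 : ℝ) • v + (1/2 : ℝ) • k ∈ K :=
        hKcx (interior_subset hv) hk (by norm_num) (by norm_num) (by norm_num)
      have h2 : (2 : ℝ) • ((1/2 : ℝ) • v + (1/2 : ℝ) • k) ∈ K := hKcone (by norm_num) hmid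
      have heq : (2 : ℝ) • ((1/2 : ℝ) • v + (1/2 : ℝ) • k) = v + k := by
        rw [smul_add, smul_smul, smul_smul]; norm_num
      rwa [heq] at h2
    have hopen : IsOpen ((fun v => v + k) '' interior K) :=
      (Homeomorph.addRight k).isOpenMap _ isOpen_interior
    exact interior_maximal hsub hopen ⟨u, hu, rfl⟩
  intro L y
  constructor
  case mpr =>
    rintro ⟨T, hT⟩ x hx
    have := hT (x, 0) hx
    simpa using this
  intro hbase
  -- basis and dual functionals
  set Z₀ : Submodule ℝ Z := Submodule.span ℝ (Prod.snd '' D) with hZ₀def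
  have hsubZ₀ : ∀ p ∈ D, p.2 ∈ Z₀ := fun p hp => Submodule.subset_span ⟨p, hp, rfl⟩
  obtain ⟨n, b⟩ : ∃ n : ℕ, Nonempty (Module.Basis (Fin n) ℝ Z₀) :=
    ⟨Module.finrank ℝ Z₀, ⟨Module.finBasis ℝ Z₀⟩⟩
  obtain ⟨b⟩ := b
  set e : Fin n → Z := fun i => (b i : Z) with he_def
  have he : LinearIndependent ℝ e :=
    b.linearIndependent.map' Z₀.subtype (Submodule.ker_subtype _)
  obtain ⟨f, hf⟩ := exists_dual_family he
  have heZ₀ : ∀ i, e i ∈ Z₀ := fun i => (b i).2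
  have hspan : Submodule.span ℝ (Set.range e) = Z₀ := by
    have hre : Set.range e = Z₀.subtype '' Set.range b := by
      rw [← Set.range_comp]; rfl
    rw [hre, ← Submodule.map_span, b.span_eq, Submodule.map_top, Submodule.range_subtype]
  have hrepr : ∀ z ∈ Z₀, ∑ i, f i z • e i = z := by
    intro z hz
    rw [← hspan] at hz
    induction hz using Submodule.span_induction with
    | mem x hx =>
      obtain ⟨j, rfl⟩ := hx
      rw [Finset.sum_eq_single j]
      · rw [hf]; simp
      · intro i _ hij; rw [hf]; simp [hij]
      · intro h; exact absurd (Finset.mem_univ j) h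
    | zero => simp
    | add x z hx hz ihx ihz =>
      simp only [map_add, add_smul, Finset.sum_add_distrib, ihx, ihz]
    | smul a x hx ihx =>
      simp only [map_smul, smul_eq_mul, ← smul_smul, ← Finset.smul_sum, ihx]
  -- points in both directions along each basis vector
  obtain ⟨Vnb, hVnb, hVsub⟩ := hri
  have hdir : ∀ (i : Fin n) (s : ℝ), s ≠ 0 →
      ∃ (c : ℝ) (x : X), 0 < c ∧ (x, (s * c) • e i) ∈ D := by
    intro i s hs
    have hcont : Filter.Tendsto (fun c : ℝ => (s * c) • e i) (nhds 0) (nhds 0) := by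
      have h1 : Continuous fun c : ℝ => (s * c) • e i := by
        exact (continuous_const.mul continuous_id).smul continuous_const
      have := h1.tendsto 0
      simpa using this
    have hpre : (fun c : ℝ => (s * c) • e i) ⁻¹' Vnb ∈ nhds (0 : ℝ) := hcont hVnb
    obtain ⟨ε, hε, hball⟩ := Metric.mem_nhds_iff.mp hpre
    have hmem : (s * (ε / 2)) • e i ∈ Vnb := by
      apply hball
      rw [Metric.mem_ball, Real.dist_eq, sub_zero, abs_of_pos (by linarith)]
      linarith
    have hZmem : (s * (ε / 2)) • e i ∈ (Z₀ : Set Z) := Z₀.smul_mem _ (heZ₀ i)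
    obtain ⟨p, hpD, hpz⟩ := hVsub ⟨hmem, hZmem⟩
    exact ⟨ε / 2, p.1, by linarith, by rwa [← hpz, Prod.mk.eta]⟩
  -- D is convex
  have hK0' : ∀ p : X × Z, p ∈ D → ((p, Φ p) : (X × Z) × Y) ∈
      {q : (X × Z) × Y | q.1 ∈ D ∧ q.2 - Φ q.1 ∈ K} := fun p hp => ⟨hp, by simpa using hK0⟩
  -- main induction
  have main : ∀ k : ℕ, k ≤ n → ∃ w : Fin n → Y,
      (∀ j : Fin n, k ≤ (j : ℕ) → w j = 0) ∧
      ∀ p ∈ D, (∀ j : Fin n, k ≤ (j : ℕ) → f j p.2 = 0) →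
        Φ p - L p.1 - ∑ i, f i p.2 • w i + y ∉ -interior K := by
    intro k
    induction k with
    | zero =>
      intro _
      refine ⟨0, fun _ _ => rfl, ?_⟩
      intro p hp hz
      have hz0 : p.2 = 0 := by
        have h1 := hrepr p.2 (hsubZ₀ p hp)
        rw [← h1]
        apply Finset.sum_eq_zero
        intro j _
        rw [hz j (Nat.zero_le _), zero_smul]
      have hp' : (p.1, (0 : Z)) ∈ D := by rw [← hz0, Prod.mk.eta]; exact hp
      have hb := hbase p.1 hp'
      have hΦ : Φ p = Φ (p.1, 0) := by rw [← hz0, Prod.mk.eta]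
      simpa [hΦ] using hb
    | succ k ih =>
      intro hk1
      have hkn : k < n := hk1
      obtain ⟨w, hw0, hw⟩ := ih (le_of_lt hkn)
      set κ : Fin n := ⟨k, hkn⟩ with hκ
      have hκval : (κ : ℕ) = k := rfl
      have hwκ : w κ = 0 := hw0 κ le_rfl
      set a : X × Z → Y := fun p => Φ p - L p.1 - ∑ i, f i p.2 • w i + y with ha
      set U : Set Y := {v | ∃ p, p ∈ D ∧ (∀ j : Fin n, k + 1 ≤ (j : ℕ) → f j p.2 = 0) ∧
        f κ p.2 < 0 ∧ a p - f κ p.2 • v ∈ -interior K} with hU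
      set V : Set Y := {v | ∃ p, p ∈ D ∧ (∀ j : Fin n, k + 1 ≤ (j : ℕ) → f j p.2 = 0) ∧
        0 < f κ p.2 ∧ a p - f κ p.2 • v ∈ -interior K} with hV
      -- openness
      have hUopen : IsOpen U := by
        have hrw : U = ⋃ (p : X × Z) (_ : p ∈ D ∧ (∀ j : Fin n, k + 1 ≤ (j : ℕ) → f j p.2 = 0)
            ∧ f κ p.2 < 0), (fun v => a p - f κ p.2 • v) ⁻¹' (-interior K) := by
          ext v
          simp only [hU, Set.mem_setOf_eq, Set.mem_iUnion, Set.mem_preimage]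
          tauto
        rw [hrw]
        refine isOpen_iUnion fun p => isOpen_iUnion fun _ => ?_
        exact (isOpen_interior.neg).preimage
          (continuous_const.sub (continuous_id.const_smul _))
      have hVopen : IsOpen V := by
        have hrw : V = ⋃ (p : X × Z) (_ : p ∈ D ∧ (∀ j : Fin n, k + 1 ≤ (j : ℕ) → f j p.2 = 0)
            ∧ 0 < f κ p.2), (fun v => a p - f κ p.2 • v) ⁻¹' (-interior K) := by
          ext v
          simp only [hV, Set.mem_setOf_eq, Set.mem_iUnion, Set.mem_preimage]
          tauto
        rw [hrw]
        refine isOpen_iUnion fun p => isOpen_iUnion fun _ => ?_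
        exact (isOpen_interior.neg).preimage
          (continuous_const.sub (continuous_id.const_smul _))
      -- coordinates of the special points
      have hcoordκ : ∀ c : ℝ, f κ (c • e κ) = c := by
        intro c
        rw [map_smul, hf]
        simp
      have hcoord0 : ∀ (c : ℝ) (j : Fin n), j ≠ κ → f j (c • e κ) = 0 := by
        intro c j hj
        rw [map_smul, hf, if_neg hj]
        simp
      -- nonemptiness
      have hUne : U.Nonempty := by
        obtain ⟨c, x, hc, hxD⟩ := hdir κ (-1) (by norm_num)
        set z₁ : Z := ((-1 : ℝ) * c) • e κ with hz₁def
        set p : X × Z := (x, z₁) with hpdef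
        have hpz : p.2 = z₁ := rfl
        have ht : f κ p.2 < 0 := by
          rw [hpz, hz₁def, hcoordκ]
          linarith
        have htne : f κ p.2 ≠ 0 := ne_of_lt ht
        refine ⟨(f κ p.2)⁻¹ • (a p + u₀), p, hxD, ?_, ht, ?_⟩
        · intro j hj
          have hjκ : j ≠ κ := by
            intro h
            have hjv : (j : ℕ) = k := by rw [h]
            omega
          rw [hpz, hz₁def, hcoord0 _ _ hjκ]
        · rw [smul_inv_smul₀ htne]
          simp only [sub_add_cancel_left]
          exact Set.mem_neg.mpr (by simpa using hu₀)
      have hVne : V.Nonempty := by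
        obtain ⟨c, x, hc, hxD⟩ := hdir κ 1 (by norm_num)
        set z₁ : Z := ((1 : ℝ) * c) • e κ with hz₁def
        set p : X × Z := (x, z₁) with hpdef
        have hpz : p.2 = z₁ := rfl
        have ht : 0 < f κ p.2 := by
          rw [hpz, hz₁def, hcoordκ]
          linarith
        have htne : f κ p.2 ≠ 0 := ne_of_gt ht
        refine ⟨(f κ p.2)⁻¹ • (a p + u₀), p, hxD, ?_, ht, ?_⟩
        · intro j hj
          have hjκ : j ≠ κ := by
            intro h
            have hjv : (j : ℕ) = k := by rw [h]
            omega
          rw [hpz, hz₁def, hcoord0 _ _ hjκ]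
        · rw [smul_inv_smul₀ htne]
          simp only [sub_add_cancel_left]
          exact Set.mem_neg.mpr (by simpa using hu₀)
      -- disjointness
      have hdisj : U ∩ V = ∅ := by
        by_contra hne
        obtain ⟨v, hvU, hvV⟩ := Set.nonempty_iff_ne_empty.mpr hne
        obtain ⟨p₁, hp₁D, hz₁, ht₁, hm₁⟩ := hvU
        obtain ⟨p₂, hp₂D, hz₂, ht₂, hm₂⟩ := hvV
        set t₁ : ℝ := f κ p₁.2
        set t₂ : ℝ := f κ p₂.2
        have hd : (0 : ℝ) < t₂ - t₁ := by linarith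
        set lam : ℝ := t₂ / (t₂ - t₁) with hlam
        set mu : ℝ := -t₁ / (t₂ - t₁) with hmu
        have hlam0 : 0 < lam := div_pos ht₂ hd
        have hmu0 : 0 < mu := div_pos (by linarith) hd
        have hd' : t₂ - t₁ ≠ 0 := ne_of_gt hd
        have hsum1 : lam + mu = 1 := by
          rw [hlam, hmu]
          field_simp
          ring
        have hcoef : lam * t₁ + mu * t₂ = 0 := by
          rw [hlam, hmu]
          field_simp
          ring
        -- convex combination of the two memberships
        have hcombo : lam • (a p₁ - t₁ • v) + mu • (a p₂ - t₂ • v) ∈ -interior K := by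
          have hcvx : Convex ℝ (-interior K) := hKcx.interior.neg
          exact hcvx hm₁ hm₂ (le_of_lt hlam0) (le_of_lt hmu0) hsum1
        have hcombo' : lam • a p₁ + mu • a p₂ ∈ -interior K := by
          have heq : lam • (a p₁ - t₁ • v) + mu • (a p₂ - t₂ • v)
              = lam • a p₁ + mu • a p₂ - (lam * t₁ + mu * t₂) • v := by
            module
          rwa [heq, hcoef, zero_smul, sub_zero] at hcombo
        -- the combined point
        have hepi := hconv (hK0' p₁ hp₁D) (hK0' p₂ hp₂D) (le_of_lt hlam0) (le_of_lt hmu0) hsum1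
        obtain ⟨hqD, hkk⟩ := hepi
        set q : X × Z := lam • p₁ + mu • p₂ with hq
        have hq1 : (lam • (p₁, Φ p₁) + mu • (p₂, Φ p₂) : (X × Z) × Y).1 = q := rfl
        have hq2 : (lam • (p₁, Φ p₁) + mu • (p₂, Φ p₂) : (X × Z) × Y).2
            = lam • Φ p₁ + mu • Φ p₂ := rfl
        rw [hq1] at hqD
        rw [hq1, hq2] at hkk
        set kk : Y := lam • Φ p₁ + mu • Φ p₂ - Φ q with hkk_def
        -- coordinates of q
        have hqz : q.2 = lam • p₁.2 + mu • p₂.2 := rfl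
        have hqx : q.1 = lam • p₁.1 + mu • p₂.1 := rfl
        have hfq : ∀ j : Fin n, f j q.2 = lam * f j p₁.2 + mu * f j p₂.2 := by
          intro j
          rw [hqz, map_add, map_smul, map_smul]
          rfl
        have hqcond : ∀ j : Fin n, k ≤ (j : ℕ) → f j q.2 = 0 := by
          intro j hj
          rw [hfq]
          by_cases hjk : j = κ
          · rw [hjk]; exact hcoef
          · have hj1 : k + 1 ≤ (j : ℕ) := by
              rcases Nat.lt_or_ge (j : ℕ) (k + 1) with h | h
              · exfalso; apply hjk; apply Fin.ext; omega
              · exact h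
            rw [hz₁ j hj1, hz₂ j hj1]
            ring
        have hIH := hw q hqD hqcond
        -- a q = lam • a p₁ + mu • a p₂ - kk
        have hL : L q.1 = lam • L p₁.1 + mu • L p₂.1 := by
          rw [hqx, map_add, map_smul, map_smul]
        have hsumw : ∑ i, f i q.2 • w i
            = lam • ∑ i, f i p₁.2 • w i + mu • ∑ i, f i p₂.2 • w i := by
          rw [Finset.smul_sum, Finset.smul_sum, ← Finset.sum_add_distrib]
          apply Finset.sum_congr rfl
          intro i _
          rw [hfq, add_smul, smul_smul, smul_smul]
        have hy1 : y = lam • y + mu • y := by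
          rw [← add_smul, hsum1, one_smul]
        have haq : a q = lam • a p₁ + mu • a p₂ - kk := by
          simp only [ha, hkk_def]
          rw [hL, hsumw]
          nth_rewrite 1 [hy1]
          module
        -- contradiction
        apply hIH
        show a q ∈ -interior K
        rw [haq]
        rw [Set.mem_neg] at hcombo' ⊢
        have : -(lam • a p₁ + mu • a p₂ - kk) = -(lam • a p₁ + mu • a p₂) + kk := by
          module
        rw [this]
        exact hKadd hcombo' hkk
      -- choose the new value
      have hcover : U ∪ V ≠ Set.univ := by
        intro hcov
        have hpc : IsPreconnected (Set.univ : Set Y) :=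
          (convex_univ (𝕜 := ℝ) (E := Y)).isPreconnected
        obtain ⟨u1, hu1⟩ := hUne
        obtain ⟨v1, hv1⟩ := hVne
        have := hpc U V hUopen hVopen (by rw [hcov]) ⟨u1, Set.mem_univ _, hu1⟩
          ⟨v1, Set.mem_univ _, hv1⟩
        obtain ⟨z, _, hz⟩ := this
        rw [Set.eq_empty_iff_forall_notMem] at hdisj
        exact hdisj z hz
      obtain ⟨v₀, hv₀⟩ : ∃ v₀ : Y, v₀ ∉ U ∪ V := by
        by_contra h
        push_neg at h
        exact hcover (Set.eq_univ_of_forall h)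
      have hv₀U : v₀ ∉ U := fun h => hv₀ (Or.inl h)
      have hv₀V : v₀ ∉ V := fun h => hv₀ (Or.inr h)
      -- define the updated family
      refine ⟨Function.update w κ v₀, ?_, ?_⟩
      · intro j hj
        have hjκ : j ≠ κ := by
          intro h
          have hjv : (j : ℕ) = k := by rw [h]
          omega
        rw [Function.update_of_ne hjκ]
        exact hw0 j (by omega)
      · intro p hp hz
        have hkey : ∑ i, f i p.2 • Function.update w κ v₀ i
            = ∑ i, f i p.2 • w i + f κ p.2 • v₀ := by
          rw [Finset.sum_eq_sum_sdiff_singleton_add (Finset.mem_univ κ)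
            (fun i => f i p.2 • Function.update w κ v₀ i),
            Finset.sum_eq_sum_sdiff_singleton_add (Finset.mem_univ κ)
            (fun i => f i p.2 • w i)]
          have h1 : ∀ i ∈ Finset.univ \ {κ}, f i p.2 • Function.update w κ v₀ i
              = f i p.2 • w i := by
            intro i hi
            rw [Function.update_of_ne (by simpa using (Finset.mem_sdiff.mp hi).2)]
          rw [Finset.sum_congr rfl h1, Function.update_self, hwκ, smul_zero, add_zero]
        rw [hkey]
        have hgoal_eq : Φ p - L p.1 - (∑ i, f i p.2 • w i + f κ p.2 • v₀) + y
            = a p - f κ p.2 • v₀ := by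
          simp only [ha]
          module
        rw [hgoal_eq]
        rcases lt_trichotomy (f κ p.2) 0 with ht | ht | ht
        · intro hmem
          exact hv₀U ⟨p, hp, hz, ht, hmem⟩
        · have hz' : ∀ j : Fin n, k ≤ (j : ℕ) → f j p.2 = 0 := by
            intro j hj
            by_cases hjk : j = κ
            · rw [hjk]; exact ht
            · exact hz j (by
                rcases Nat.lt_or_ge (j : ℕ) (k + 1) with h | h
                · exfalso; apply hjk; apply Fin.ext; omega
                · exact h)
          have := hw p hp hz'
          rwa [ht, zero_smul, sub_zero]
        · intro hmem
          exact hv₀V ⟨p, hp, hz, ht, hmem⟩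
  obtain ⟨w, -, hw⟩ := main n le_rfl
  refine ⟨∑ i, (f i).smulRight (w i), ?_⟩
  intro p hp
  have hvac : ∀ j : Fin n, n ≤ (j : ℕ) → f j p.2 = 0 := by
    intro j hj
    exact absurd hj (Nat.not_le.mpr j.isLt)
  have := hw p hp hvac
  have hT : (∑ i, (f i).smulRight (w i) : Z →L[ℝ] Y) p.2 = ∑ i, f i p.2 • w i := by
    simp [ContinuousLinearMap.sum_apply]
  rwa [hT]
end

section
/- (Theorem 3.2 under condition (C6).) Assume Φ is K-convex (with nonempty domain D and 0_Z ∈ π(D)) and condition (C6) holds: for every (x,z) ∈ D one has (x,0_Z) ∈ D and Φ(x,z) - Φ(x,0_Z) ∈ K, and the interior of π(D) in Z is nonempty. Then A = B; equivalently, for every L ∈ L(X,Y) and y ∈ Y, Φ(x,0_Z) - L(x) + y ∉ -int K for all x with (x,0_Z) ∈ D if and only if there exists T ∈ L(Z,Y) with Φ(x,z) - L(x) - T(z) + y ∉ -int K for all (x,z) ∈ D. -/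
open Pointwise

/-- Theorem 3.2 under condition (C6). -/
theorem stmt_6
    {X Y Z : Type*}
    [AddCommGroup X] [Module ℝ X] [TopologicalSpace X] [IsTopologicalAddGroup X]
    [ContinuousSMul ℝ X] [LocallyConvexSpace ℝ X] [T2Space X]
    [AddCommGroup Y] [Module ℝ Y] [TopologicalSpace Y] [IsTopologicalAddGroup Y]
    [ContinuousSMul ℝ Y] [LocallyConvexSpace ℝ Y] [T2Space Y]
    [AddCommGroup Z] [Module ℝ Z] [TopologicalSpace Z] [IsTopologicalAddGroup Z]
    [ContinuousSMul ℝ Z] [LocallyConvexSpace ℝ Z] [T2Space Z]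
    (K : Set Y) (hKcl : IsClosed K) (hKcx : Convex ℝ K)
    (hKcone : ∀ ⦃c : ℝ⦄, 0 ≤ c → ∀ ⦃y : Y⦄, y ∈ K → c • y ∈ K)
    (hKne : K ≠ Set.univ) (hKint : (interior K).Nonempty)
    (Φ : X × Z → Y) (D : Set (X × Z)) (hD : D.Nonempty)
    (hconv : Convex ℝ {p : (X × Z) × Y | p.1 ∈ D ∧ p.2 - Φ p.1 ∈ K})
    (h0 : (0 : Z) ∈ Prod.snd '' D)
    -- condition (C6)
    (hmono : ∀ p ∈ D, (p.1, (0 : Z)) ∈ D ∧ Φ p - Φ (p.1, 0) ∈ K)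
    (hint : (interior (Prod.snd '' D)).Nonempty) :
    ∀ (L : X →L[ℝ] Y) (y : Y),
      (∀ x : X, (x, (0 : Z)) ∈ D → Φ (x, 0) - L x + y ∉ -interior K) ↔
      (∃ T : Z →L[ℝ] Y, ∀ p ∈ D, Φ p - L p.1 - T p.2 + y ∉ -interior K) := by

  intro L y
  constructor
  · intro h
    refine ⟨0, ?_⟩
    rintro ⟨x, z⟩ hp hmem
    obtain ⟨hp0, hpk⟩ := hmono _ hp
    simp only [ContinuousLinearMap.zero_apply, sub_zero] at hmem
    apply h x hp0
    -- sums of K stay in K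
    have hsum : ∀ a ∈ K, ∀ b ∈ K, a + b ∈ K := by
      intro a ha b hb
      have h1 : (1/2 : ℝ) • a + (1/2 : ℝ) • b ∈ K :=
        hKcx ha hb (by norm_num) (by norm_num) (by norm_num)
      have h2 := hKcone (by norm_num : (0:ℝ) ≤ 2) h1
      simpa [smul_add, smul_smul] using h2
    have hik : ∀ a ∈ interior K, ∀ b ∈ K, a + b ∈ interior K := by
      intro a ha b hb
      have hopen : IsOpen ((fun v => v + b) '' interior K) :=
        (Homeomorph.addRight b).isOpenMap _ isOpen_interior
      have hsub : (fun v => v + b) '' interior K ⊆ K := by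
        rintro _ ⟨v, hv, rfl⟩
        exact hsum v (interior_subset hv) b hb
      exact interior_maximal hsub hopen ⟨a, ha, rfl⟩
    rw [Set.mem_neg] at hmem ⊢
    have := hik _ hmem _ hpk
    have heq : -(Φ (x, z) - L x + y) + (Φ (x, z) - Φ (x, 0)) =
        -(Φ (x, 0) - L x + y) := by abel
    rwa [heq] at this
  · rintro ⟨T, hT⟩ x hx hmem
    have := hT (x, 0) hx
    simp only [map_zero, sub_zero] at this
    exact this hmem
end

section
/- (Theorem 3.3, third representation, under condition (C7).) Let S ⊆ Z be a nonempty convex cone with nonempty interior int S. Assume Φ is K-convex (with nonempty domain D and 0_Z ∈ π(D)) and condition (C7) holds: 0_Z ∈ π(D) - int S, and for every (x,z) ∈ D with z ∈ S one has (x,0_Z) ∈ D and Φ(x,z) - Φ(x,0_Z) ∈ K. Then A = B = B₊; in particular, for every L ∈ L(X,Y) and y ∈ Y, Φ(x,0_Z) - L(x) + y ∉ -int K for all x with (x,0_Z) ∈ D if and only if there exists T ∈ L(Z,Y) with T(S) ⊆ K and Φ(x,z) - L(x) - T(z) + y ∉ -int K for all (x,z) ∈ D. -/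
open Pointwise

/-- If a continuous linear functional is `≤ u` on the interior of a convex set with
nonempty interior, then it is `≤ u` on the whole set. -/
lemma aux_le_of_interior_le {E : Type*} [AddCommGroup E] [Module ℝ E] [TopologicalSpace E]
    [IsTopologicalAddGroup E] [ContinuousSMul ℝ E]
    {s : Set E} (hs : Convex ℝ s) {x₀ : E} (hx₀ : x₀ ∈ interior s)
    (g : E →L[ℝ] ℝ) (u : ℝ) (h : ∀ a ∈ interior s, g a ≤ u) :
    ∀ w ∈ s, g w ≤ u := by
  intro w hw
  have hne : (nhdsWithin (0:ℝ) (Set.Ioo (0:ℝ) 1)).NeBot := by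
    refine mem_closure_iff_nhdsWithin_neBot.mp ?_
    rw [closure_Ioo one_ne_zero.symm]
    exact ⟨le_rfl, zero_le_one⟩
  have hpath : Filter.Tendsto (fun t : ℝ => t • x₀ + (1 - t) • w)
      (nhdsWithin (0:ℝ) (Set.Ioo (0:ℝ) 1)) (nhds w) := by
    have hcont : Continuous fun t : ℝ => t • x₀ + (1 - t) • w := by continuity
    have h0 : Filter.Tendsto (fun t : ℝ => t • x₀ + (1 - t) • w) (nhds 0) (nhds w) := by
      have := hcont.tendsto 0
      simpa using this
    exact h0.mono_left nhdsWithin_le_nhds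
  have hev : ∀ᶠ t in nhdsWithin (0:ℝ) (Set.Ioo (0:ℝ) 1),
      g (t • x₀ + (1 - t) • w) ≤ u := by
    filter_upwards [self_mem_nhdsWithin] with t ht
    exact h _ (hs.combo_interior_self_mem_interior hx₀ hw ht.1 (by linarith [ht.2])
      (by ring))
  exact le_of_tendsto ((g.continuous.tendsto w).comp hpath) hev

/-- Scaling lemma: if `m ≤ c * r` for all `c > 0`, then `0 ≤ r`. -/
lemma aux_scale_nonneg (r m : ℝ) (hr : ∀ c : ℝ, 0 < c → m ≤ c * r) : 0 ≤ r := by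
  by_contra hr'
  push_neg at hr'
  have hc : 0 < (-|m| - 1) / r :=
    div_pos_of_neg_of_neg (by linarith [abs_nonneg m]) hr'
  have h1 := hr _ hc
  rw [div_mul_cancel₀ _ (ne_of_lt hr')] at h1
  have := neg_abs_le m
  linarith

/-- Scaling lemma: if `m ≤ c * r` for all `c > 0`, then `m ≤ 0`. -/
lemma aux_scale_nonpos (r m : ℝ) (hr : ∀ c : ℝ, 0 < c → m ≤ c * r) : m ≤ 0 := by
  have h0r : 0 ≤ r := aux_scale_nonneg r m hr
  by_contra hm
  push_neg at hm
  rcases eq_or_lt_of_le h0r with h | h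
  · have := hr 1 one_pos
    rw [← h, mul_zero] at this
    linarith
  · have hc : 0 < m / (2 * r) := by positivity
    have h1 := hr _ hc
    have h2 : m / (2 * r) * r = m / 2 := by
      field_simp
    rw [h2] at h1
    linarith

set_option maxHeartbeats 1000000 in
/-- Theorem 3.3 (third representation) under condition (C7): A = B = B₊. -/
theorem stmt_7
    {X Y Z : Type*}
    [AddCommGroup X] [Module ℝ X] [TopologicalSpace X] [IsTopologicalAddGroup X]
    [ContinuousSMul ℝ X] [LocallyConvexSpace ℝ X] [T2Space X]
    [AddCommGroup Y] [Module ℝ Y] [TopologicalSpace Y] [IsTopologicalAddGroup Y]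
    [ContinuousSMul ℝ Y] [LocallyConvexSpace ℝ Y] [T2Space Y]
    [AddCommGroup Z] [Module ℝ Z] [TopologicalSpace Z] [IsTopologicalAddGroup Z]
    [ContinuousSMul ℝ Z] [LocallyConvexSpace ℝ Z] [T2Space Z]
    (K : Set Y) (hKcl : IsClosed K) (hKcx : Convex ℝ K)
    (hKcone : ∀ ⦃c : ℝ⦄, 0 ≤ c → ∀ ⦃y : Y⦄, y ∈ K → c • y ∈ K)
    (hKne : K ≠ Set.univ) (hKint : (interior K).Nonempty)
    (Φ : X × Z → Y) (D : Set (X × Z)) (hD : D.Nonempty)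
    (hconv : Convex ℝ {p : (X × Z) × Y | p.1 ∈ D ∧ p.2 - Φ p.1 ∈ K})
    (h0 : (0 : Z) ∈ Prod.snd '' D)
    (S : Set Z) (hS : S.Nonempty) (hScx : Convex ℝ S)
    (hScone : ∀ ⦃c : ℝ⦄, 0 ≤ c → ∀ ⦃z : Z⦄, z ∈ S → c • z ∈ S)
    (hSint : (interior S).Nonempty)
    -- condition (C7)
    (hC7a : (0 : Z) ∈ Prod.snd '' D - interior S)
    (hC7b : ∀ p ∈ D, p.2 ∈ S → (p.1, (0 : Z)) ∈ D ∧ Φ p - Φ (p.1, 0) ∈ K) :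
    ∀ (L : X →L[ℝ] Y) (y : Y),
      ((∀ x : X, (x, (0 : Z)) ∈ D → Φ (x, 0) - L x + y ∉ -interior K) ↔
        (∃ T : Z →L[ℝ] Y, ∀ p ∈ D, Φ p - L p.1 - T p.2 + y ∉ -interior K)) ∧
      ((∀ x : X, (x, (0 : Z)) ∈ D → Φ (x, 0) - L x + y ∉ -interior K) ↔
        (∃ T : Z →L[ℝ] Y, (⇑T '' S ⊆ K) ∧
          ∀ p ∈ D, Φ p - L p.1 - T p.2 + y ∉ -interior K)) := by
  -- basic facts about K and S
  obtain ⟨k₀, hk₀⟩ := hKint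
  have hK0 : (0 : Y) ∈ K := by simpa using hKcone le_rfl (interior_subset hk₀)
  have hKadd : ∀ a ∈ K, ∀ b ∈ K, a + b ∈ K := by
    intro a ha b hb
    have h2 := hKcone (by norm_num : (0:ℝ) ≤ 2)
      (hKcx ha hb (by norm_num : (0:ℝ) ≤ 1/2) (by norm_num : (0:ℝ) ≤ 1/2)
        (by norm_num : (1:ℝ)/2 + 1/2 = 1))
    have heq : (2:ℝ) • ((1/2 : ℝ) • a + (1/2 : ℝ) • b) = a + b := by
      rw [smul_add, smul_smul, smul_smul]
      norm_num
    rwa [heq] at h2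
  have hS0 : (0 : Z) ∈ S := by
    obtain ⟨s, hs⟩ := hS
    simpa using hScone le_rfl hs
  -- interior K + K ⊆ interior K
  have hIK : ∀ w ∈ interior K, ∀ b ∈ K, w + b ∈ interior K := by
    intro w hw b hb
    have hsub : interior K + K ⊆ interior K := by
      apply interior_maximal _ isOpen_interior.add_right
      rintro _ ⟨a, ha, b', hb', rfl⟩
      exact hKadd _ (interior_subset ha) _ hb'
    exact hsub (Set.add_mem_add hw hb)
  have hIKs : ∀ c : ℝ, 0 < c → ∀ w ∈ interior K, c • w ∈ interior K := by
    intro c hc w hw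
    have hsub : c • interior K ⊆ interior K := by
      apply interior_maximal _ (isOpen_interior.smul₀ (ne_of_gt hc))
      rintro _ ⟨a, ha, rfl⟩
      exact hKcone hc.le (interior_subset ha)
    exact hsub ⟨w, hw, rfl⟩
  intro L y
  -- the trivial direction
  have hback : ∀ T : Z →L[ℝ] Y,
      (∀ p ∈ D, Φ p - L p.1 - T p.2 + y ∉ -interior K) →
      ∀ x : X, (x, (0 : Z)) ∈ D → Φ (x, 0) - L x + y ∉ -interior K := by
    intro T hT x hx hmem
    have h := hT (x, 0) hx
    apply h
    simpa using hmem
  -- the hard direction: construct a multiplier T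
  have hfwd : (∀ x : X, (x, (0 : Z)) ∈ D → Φ (x, 0) - L x + y ∉ -interior K) →
      ∃ T : Z →L[ℝ] Y, (⇑T '' S ⊆ K) ∧
        ∀ p ∈ D, Φ p - L p.1 - T p.2 + y ∉ -interior K := by
    intro hA
    -- the convex set to separate
    set C : Set (Z × Y) :=
      {w | ∃ p ∈ D, ∃ s ∈ S, ∃ k ∈ K, w = (p.2 - s, Φ p - L p.1 + y + k)} with hCdef
    have hCcx : Convex ℝ C := by
      rintro w₁ ⟨p, hp, s, hs, k, hk, rfl⟩ w₂ ⟨q, hq, s', hs', k', hk', rfl⟩ a b ha hb hab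
      have hp' : ((p, Φ p) : (X × Z) × Y) ∈ {r : (X × Z) × Y | r.1 ∈ D ∧ r.2 - Φ r.1 ∈ K} :=
        ⟨hp, by simpa using hK0⟩
      have hq' : ((q, Φ q) : (X × Z) × Y) ∈ {r : (X × Z) × Y | r.1 ∈ D ∧ r.2 - Φ r.1 ∈ K} :=
        ⟨hq, by simpa using hK0⟩
      have hcomb := hconv hp' hq' ha hb hab
      simp only [Prod.smul_mk, Prod.mk_add_mk, Set.mem_setOf_eq] at hcomb
      refine ⟨a • p + b • q, hcomb.1, a • s + b • s', hScx hs hs' ha hb hab,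
        (a • Φ p + b • Φ q - Φ (a • p + b • q)) + (a • k + b • k'),
        hKadd _ hcomb.2 _ (hKcx hk hk' ha hb hab), ?_⟩
      have hL : L ((a • p + b • q).1) = a • L p.1 + b • L q.1 := by
        rw [Prod.fst_add, Prod.smul_fst, Prod.smul_fst, map_add, map_smul, map_smul]
      have hsnd : (a • p + b • q).2 = a • p.2 + b • q.2 := by
        rw [Prod.snd_add, Prod.smul_snd, Prod.smul_snd]
      rw [Prod.smul_mk, Prod.smul_mk, Prod.mk_add_mk, Prod.mk.injEq, hL, hsnd]
      constructor
      · match_scalars <;> first | ring1 | linarith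
      · match_scalars <;> first | ring1 | linarith
    -- the special point in the interior of C
    obtain ⟨ζ, hζD, s₀, hs₀, hζs⟩ := hC7a
    obtain ⟨p₁, hp₁, hp₁2⟩ := hζD
    have hp₁S : p₁.2 ∈ interior S := by
      have hζ : ζ = s₀ := by
        have : ζ - s₀ = 0 := hζs
        rwa [sub_eq_zero] at this
      rw [hp₁2, hζ]
      exact hs₀
    set c₁ : Y := Φ p₁ - L p₁.1 + y with hc₁
    set U : Set (Z × Y) :=
      (fun w : Z × Y => (p₁.2 - w.1, w.2 - c₁)) ⁻¹' ((interior S) ×ˢ (interior K)) with hUdef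
    have hUopen : IsOpen U := by
      apply (isOpen_interior.prod isOpen_interior).preimage
      continuity
    have hUC : U ⊆ C := by
      rintro w ⟨hw1, hw2⟩
      refine ⟨p₁, hp₁, p₁.2 - w.1, interior_subset hw1, w.2 - c₁, interior_subset hw2, ?_⟩
      refine Prod.ext ?_ ?_
      · simp [sub_sub_cancel]
      · rw [hc₁]
        module
    have hUint : U ⊆ interior C := interior_maximal hUC hUopen
    have ha₀ : ((0, c₁ + k₀) : Z × Y) ∈ interior C := by
      apply hUint
      refine ⟨?_, ?_⟩
      · simpa using hp₁S
      · simpa using hk₀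
    -- the convex set to separate from
    have htcx : Convex ℝ (({0} : Set Z) ×ˢ (-interior K)) :=
      (convex_singleton 0).prod hKcx.interior.neg
    have hdisj : Disjoint C (({0} : Set Z) ×ˢ (-interior K)) := by
      rw [Set.disjoint_left]
      rintro w hwC ⟨hw1, hw2⟩
      obtain ⟨p, hp, s, hs, k, hk, rfl⟩ := hwC
      have hps : p.2 ∈ S := by
        have h1 : p.2 - s = 0 := hw1
        rw [sub_eq_zero] at h1
        rw [h1]
        exact hs
      obtain ⟨hpd0, hΦk⟩ := hC7b p hp hps
      apply hA p.1 hpd0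
      rw [Set.mem_neg] at hw2 ⊢
      have heq : -(Φ (p.1, 0) - L p.1 + y)
          = -(Φ p - L p.1 + y + k) + ((Φ p - Φ (p.1, 0)) + k) := by abel
      rw [heq]
      exact hIK _ hw2 _ (hKadd _ hΦk _ hk)
    -- separation
    obtain ⟨f, u, hfu, hut⟩ := geometric_hahn_banach_open hCcx.interior isOpen_interior htcx
      (hdisj.mono_left interior_subset)
    have hCle : ∀ w ∈ C, f w ≤ u :=
      aux_le_of_interior_le hCcx ha₀ f u (fun a haC => (hfu a haC).le)
    -- splitting helpers for f
    have hfadd : ∀ (z : Z) (v : Y), f (z, v) = f (z, 0) + f (0, v) := by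
      intro z v
      have h : ((z, v) : Z × Y) = (z, 0) + (0, v) := by
        rw [Prod.mk_add_mk, add_zero, zero_add]
      rw [h, map_add]
    have hfsmul2 : ∀ (c : ℝ) (v : Y), f ((0:Z), c • v) = c * f (0, v) := by
      intro c v
      have h : ((0:Z), c • v) = c • ((0:Z), v) := by
        rw [Prod.smul_mk, smul_zero]
      rw [h, map_smul, smul_eq_mul]
    have hfsub2 : ∀ (v w : Y), f ((0:Z), v - w) = f (0, v) - f (0, w) := by
      intro v w
      have h : ((0:Z), v - w) = ((0:Z), v) - ((0:Z), w) := by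
        rw [Prod.mk_sub_mk, sub_zero]
      rw [h, map_sub]
    have hfneg2 : ∀ (v : Y), f ((0:Z), -v) = -f (0, v) := by
      intro v
      have h : ((0:Z), -v) = -((0:Z), v) := by
        rw [Prod.neg_mk, neg_zero]
      rw [h, map_neg]
    have hfsmul1 : ∀ (c : ℝ) (z : Z), f (c • z, (0:Y)) = c * f (z, 0) := by
      intro c z
      have h : ((c • z : Z), (0:Y)) = c • ((z : Z), (0:Y)) := by
        rw [Prod.smul_mk, smul_zero]
      rw [h, map_smul, smul_eq_mul]
    have hf00 : f ((0:Z), (0:Y)) = 0 := by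
      rw [Prod.mk_zero_zero, map_zero]
    -- scalar facts
    have hgen : ∀ w ∈ interior K, ∀ c : ℝ, 0 < c → u ≤ c * (-(f (0, w))) := by
      intro w hw c hc
      have hmem : ((0:Z), -(c • w)) ∈ ({0} : Set Z) ×ˢ (-interior K) := by
        refine ⟨rfl, ?_⟩
        rw [Set.mem_neg, neg_neg]
        exact hIKs c hc w hw
      have h2 := hut _ hmem
      rw [hfneg2, hfsmul2] at h2
      linarith
    have hfle : ∀ w ∈ interior K, f (0, w) ≤ 0 := by
      intro w hw
      have := aux_scale_nonneg _ _ (fun c hc => hgen w hw c hc)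
      linarith
    have hu0 : u ≤ 0 := aux_scale_nonpos _ _ (fun c hc => hgen k₀ hk₀ c hc)
    have hfleK : ∀ w ∈ K, f ((0:Z), w) ≤ 0 := by
      intro w hw
      have harg : ∀ a ∈ interior K, (f.comp (ContinuousLinearMap.inr ℝ Z Y)) a ≤ 0 := by
        intro a ha
        rw [ContinuousLinearMap.comp_apply, ContinuousLinearMap.inr_apply]
        exact hfle a ha
      have h := aux_le_of_interior_le hKcx hk₀ (f.comp (ContinuousLinearMap.inr ℝ Z Y)) 0
        harg w hw
      rwa [ContinuousLinearMap.comp_apply, ContinuousLinearMap.inr_apply] at h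
    -- strict negativity on the interior of K
    have hv₀neg : f ((0:Z), c₁ + k₀) < 0 := lt_of_lt_of_le (hfu _ ha₀) hu0
    have hintneg : ∀ w ∈ interior K, f ((0:Z), w) < 0 := by
      intro w hw
      have hcont : ContinuousAt (fun t : ℝ => w - t • (c₁ + k₀)) 0 :=
        (continuous_const.sub (continuous_id.smul continuous_const)).continuousAt
      have hev : ∀ᶠ t in nhds (0:ℝ), w - t • (c₁ + k₀) ∈ interior K := by
        apply hcont.eventually_mem
        apply isOpen_interior.mem_nhds
        simpa using hw
      obtain ⟨δ, hδpos, hδ⟩ := Metric.eventually_nhds_iff.mp hev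
      have hd : dist (δ/2) (0:ℝ) < δ := by
        rw [Real.dist_eq, sub_zero, abs_of_pos (by linarith)]
        linarith
      have hKmem : w - (δ/2) • (c₁ + k₀) ∈ K := interior_subset (hδ hd)
      have h1 : f ((0:Z), w - (δ/2) • (c₁ + k₀)) ≤ 0 := hfleK _ hKmem
      rw [hfsub2, hfsmul2] at h1
      have h3 : 0 < (δ/2) * (-(f ((0:Z), c₁ + k₀))) :=
        mul_pos (by linarith) (by linarith)
      linarith
    have hβ : 0 < -(f ((0:Z), k₀)) := by linarith [hintneg k₀ hk₀]
    set β : ℝ := -(f ((0:Z), k₀)) with hβdef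
    -- key inequality from membership in C
    obtain ⟨p₂, hp₂⟩ := hD
    have hCineq : ∀ p ∈ D, ∀ s ∈ S, f (p.2, Φ p - L p.1 + y) - f (s, 0) ≤ u := by
      intro p hp s hs
      have hmem : ((p.2 - s : Z), Φ p - L p.1 + y + 0) ∈ C := ⟨p, hp, s, hs, 0, hK0, rfl⟩
      have h1 := hCle _ hmem
      have heq : ((p.2 - s : Z), Φ p - L p.1 + y + 0)
          = ((p.2 : Z), Φ p - L p.1 + y) - ((s : Z), (0:Y)) := by
        rw [Prod.mk_sub_mk, add_zero, sub_zero]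
      rw [heq, map_sub] at h1
      exact h1
    have hzS : ∀ s ∈ S, 0 ≤ f (s, 0) := by
      intro s hs
      apply aux_scale_nonneg (f (s, 0)) (f (p₂.2, Φ p₂ - L p₂.1 + y) - u)
      intro c hc
      have h1 := hCineq p₂ hp₂ (c • s) (hScone hc.le hs)
      rw [hfsmul1] at h1
      linarith
    -- define the multiplier T
    set zf : Z →L[ℝ] ℝ := f.comp (ContinuousLinearMap.inl ℝ Z Y) with hzf
    set T : Z →L[ℝ] Y := (β⁻¹ • zf).smulRight k₀ with hTdef
    have hTapp : ∀ z : Z, T z = (β⁻¹ * f (z, 0)) • k₀ := by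
      intro z
      rw [hTdef, ContinuousLinearMap.smulRight_apply, ContinuousLinearMap.smul_apply, hzf,
        ContinuousLinearMap.comp_apply, ContinuousLinearMap.inl_apply, smul_eq_mul]
    refine ⟨T, ?_, ?_⟩
    · rintro _ ⟨s, hs, rfl⟩
      rw [hTapp]
      exact hKcone (mul_nonneg (inv_nonneg.mpr hβ.le) (hzS s hs)) (interior_subset hk₀)
    · intro p hp hmem
      rw [Set.mem_neg] at hmem
      have h1 := hintneg _ hmem
      rw [hfneg2] at h1
      -- so 0 < f (0, Φ p - L p.1 - T p.2 + y)
      have hE : Φ p - L p.1 - T p.2 + y = (Φ p - L p.1 + y) - T p.2 := by abel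
      rw [hE, hfsub2] at h1
      -- compute f (0, T p.2)
      have hfk : f ((0:Z), k₀) = -β := by rw [hβdef]; ring
      have h3 : f ((0:Z), T p.2) = -(f (p.2, (0:Y))) := by
        rw [hTapp, hfsmul2, hfk]
        field_simp
      -- and the inequality from C with s = 0
      have h4 := hCineq p hp 0 hS0
      rw [hf00, sub_zero] at h4
      rw [hfadd] at h4
      rw [h3] at h1
      linarith
  constructor
  · constructor
    · intro hA
      obtain ⟨T, _, hT⟩ := hfwd hA
      exact ⟨T, hT⟩
    · rintro ⟨T, hT⟩
      exact hback T hT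
  · constructor
    · exact hfwd
    · rintro ⟨T, _, hT⟩
      exact hback T hT
end

section
/- (Theorem 4.1, weak duality.) For every L ∈ L(X,Y) and every T ∈ L(Z,Y): (i) every u ∈ WSup Λ_{L,T} satisfies Φ(x,0_Z) - L(x) + u ∉ -int K for all x ∈ X with (x,0_Z) ∈ D; consequently v + u ∉ -int K for every u ∈ WSup Λ_{L,T} and every v ∈ WInf N_L (i.e. -Φ*(L,T) ≼_K WInf(P^L)); (ii) moreover v - m ∉ -int K for every m ∈ WSup M_L and every v ∈ WInf N_L (i.e. WSup(D^L) ≼_K WInf(P^L)). -/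
open Pointwise

section Defs

variable {X Y Z : Type*}
  [AddCommGroup X] [Module ℝ X] [TopologicalSpace X]
  [AddCommGroup Y] [Module ℝ Y] [TopologicalSpace Y]
  [AddCommGroup Z] [Module ℝ Z] [TopologicalSpace Z]

/-- The set of weakly supremal elements of `M ⊆ Y` w.r.t. the cone `K`. -/
def WSup (K M : Set Y) : Set Y :=
  {v : Y | (∀ m ∈ M, v - m ∉ -interior K) ∧
    ∀ w : Y, w - v ∈ -interior K → ∃ m ∈ M, w - m ∈ -interior K}

/-- The set of weakly infimal elements of `M ⊆ Y` w.r.t. the cone `K`. -/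
def WInf (K M : Set Y) : Set Y :=
  {v : Y | (∀ m ∈ M, m - v ∉ -interior K) ∧
    ∀ w : Y, v - w ∈ -interior K → ∃ m ∈ M, m - w ∈ -interior K}

/-- The set `Λ_{L,T} = {L(x) + T(z) - Φ(x,z) : (x,z) ∈ D}`, whose weak supremum is
the conjugate value `Φ*(L,T)`. -/
def lamSet (Φ : X × Z → Y) (D : Set (X × Z)) (L : X →L[ℝ] Y) (T : Z →L[ℝ] Y) : Set Y :=
  {y : Y | ∃ p ∈ D, y = L p.1 + T p.2 - Φ p}

/-- The value set `N_L` of the perturbed primal problem `(P^L)`. -/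
def primalSet (Φ : X × Z → Y) (D : Set (X × Z)) (L : X →L[ℝ] Y) : Set Y :=
  {y : Y | ∃ x : X, (x, (0 : Z)) ∈ D ∧ y = Φ (x, 0) - L x}

/-- The value set `M_L` of the dual problem `(D^L)`. -/
def dualSet (K : Set Y) (Φ : X × Z → Y) (D : Set (X × Z)) (L : X →L[ℝ] Y) : Set Y :=
  {y : Y | ∃ T : Z →L[ℝ] Y, -y ∈ WSup K (lamSet Φ D L T)}

/-- The value set `M_L⁺` of the loose dual problem `(D_ℓ^L)`. -/
def dualSetPlus (K : Set Y) (S : Set Z) (Φ : X × Z → Y) (D : Set (X × Z))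
    (L : X →L[ℝ] Y) : Set Y :=
  {y : Y | ∃ T : Z →L[ℝ] Y, (⇑T '' S ⊆ K) ∧ -y ∈ WSup K (lamSet Φ D L T)}

end Defs

/-- Theorem 4.1 (weak duality). -/
theorem stmt_8
    {X Y Z : Type*}
    [AddCommGroup X] [Module ℝ X] [TopologicalSpace X] [IsTopologicalAddGroup X]
    [ContinuousSMul ℝ X] [LocallyConvexSpace ℝ X] [T2Space X]
    [AddCommGroup Y] [Module ℝ Y] [TopologicalSpace Y] [IsTopologicalAddGroup Y]
    [ContinuousSMul ℝ Y] [LocallyConvexSpace ℝ Y] [T2Space Y]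
    [AddCommGroup Z] [Module ℝ Z] [TopologicalSpace Z] [IsTopologicalAddGroup Z]
    [ContinuousSMul ℝ Z] [LocallyConvexSpace ℝ Z] [T2Space Z]
    (K : Set Y) (hKcl : IsClosed K) (hKcx : Convex ℝ K)
    (hKcone : ∀ ⦃c : ℝ⦄, 0 ≤ c → ∀ ⦃y : Y⦄, y ∈ K → c • y ∈ K)
    (hKne : K ≠ Set.univ) (hKint : (interior K).Nonempty)
    (Φ : X × Z → Y) (D : Set (X × Z)) (hD : D.Nonempty)
    (h0 : (0 : Z) ∈ Prod.snd '' D) :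
    ∀ (L : X →L[ℝ] Y) (T : Z →L[ℝ] Y),
      (∀ u ∈ WSup K (lamSet Φ D L T),
        ∀ x : X, (x, (0 : Z)) ∈ D → Φ (x, 0) - L x + u ∉ -interior K) ∧
      (∀ u ∈ WSup K (lamSet Φ D L T), ∀ v ∈ WInf K (primalSet Φ D L),
        v + u ∉ -interior K) ∧
      (∀ m ∈ WSup K (dualSet K Φ D L), ∀ v ∈ WInf K (primalSet Φ D L),
        v - m ∉ -interior K) := by
  intro L T
  -- part (i) for arbitrary T'
  have hi : ∀ (T' : Z →L[ℝ] Y), ∀ u ∈ WSup K (lamSet Φ D L T'),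
      ∀ x : X, (x, (0 : Z)) ∈ D → Φ (x, 0) - L x + u ∉ -interior K := by
    intro T' u hu x hx hcon
    have hmem : L x + T' 0 - Φ (x, 0) ∈ lamSet Φ D L T' := ⟨(x, 0), hx, rfl⟩
    have := hu.1 _ hmem
    apply this
    have : u - (L x + T' 0 - Φ (x, 0)) = Φ (x, 0) - L x + u := by
      simp [map_zero]; abel
    rw [this]; exact hcon
  have hii : ∀ (T' : Z →L[ℝ] Y), ∀ u ∈ WSup K (lamSet Φ D L T'),
      ∀ v ∈ WInf K (primalSet Φ D L), v + u ∉ -interior K := by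
    intro T' u hu v hv hcon
    have : v - (-u) ∈ -interior K := by rwa [sub_neg_eq_add]
    obtain ⟨n, ⟨x, hx, hn⟩, hnm⟩ := hv.2 (-u) this
    rw [sub_neg_eq_add, hn] at hnm
    exact hi T' u hu x hx hnm
  refine ⟨hi T, hii T, ?_⟩
  intro m hm v hv hcon
  obtain ⟨d, ⟨T', hd⟩, hvd⟩ := hm.2 v hcon
  have : v + (-d) ∈ -interior K := by rwa [← sub_eq_add_neg]
  exact hii T' (-d) hd v hv this
end

section
/- (Theorem 4.2, direction (a) ⇒ (e).) Assume the epigraph representation A = B holds, i.e. for every L ∈ L(X,Y) and y ∈ Y: [Φ(x,0_Z) - L(x) + y ∉ -int K for all x with (x,0_Z) ∈ D] if and only if [there exists T ∈ L(Z,Y) with Φ(x,z) - L(x) - T(z) + y ∉ -int K for all (x,z) ∈ D]. Then stable strong duality holds: for every L ∈ L(X,Y), WInf N_L = WMax M_L := M_L ∩ WSup M_L. In particular, for every weakly infimal element y ∈ WInf N_L there exists T ∈ L(Z,Y) with -y ∈ WSup Λ_{L,T}, i.e. the dual problem (D^L) attains the primal value y. -/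
open Pointwise

open Pointwise

section Helpers

set_option linter.unusedSectionVars false

variable {Y : Type*} [AddCommGroup Y] [Module ℝ Y] [TopologicalSpace Y]
  [IsTopologicalAddGroup Y] [ContinuousSMul ℝ Y]

-- C + K ⊆ C
lemma cone_int_add_mem {K : Set Y} (hKcx : Convex ℝ K)
    (hKcone : ∀ ⦃c : ℝ⦄, 0 ≤ c → ∀ ⦃y : Y⦄, y ∈ K → c • y ∈ K)
    {c k : Y} (hc : c ∈ interior K) (hk : k ∈ K) : c + k ∈ interior K := by
  have hKK : ∀ a ∈ K, ∀ b ∈ K, a + b ∈ K := by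
    intro a ha b hb
    have h := hKcx ha hb (by norm_num : (0:ℝ) ≤ 1/2) (by norm_num : (0:ℝ) ≤ 1/2) (by norm_num)
    have h2 := hKcone (by norm_num : (0:ℝ) ≤ 2) h
    have : (2:ℝ) • ((1/2 : ℝ) • a + (1/2 : ℝ) • b) = a + b := by
      rw [smul_add, smul_smul, smul_smul]; norm_num
    rwa [this] at h2
  have hopen : IsOpen ((fun y => y + k) '' interior K) :=
    (Homeomorph.addRight k).isOpenMap _ isOpen_interior
  have hsub : (fun y => y + k) '' interior K ⊆ K := by
    rintro _ ⟨a, ha, rfl⟩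
    exact hKK a (interior_subset ha) k hk
  exact interior_maximal hsub hopen ⟨c, hc, rfl⟩

-- ∃ δ > 0, y₀ + δ • d ∈ C for open C ∋ y₀
lemma exists_pos_add_smul_mem {C : Set Y} (hC : IsOpen C) {y₀ : Y} (hy : y₀ ∈ C) (d : Y) :
    ∃ δ : ℝ, 0 < δ ∧ y₀ + δ • d ∈ C := by
  have hcont : Continuous fun t : ℝ => y₀ + t • d := by continuity
  have hopen : IsOpen ((fun t : ℝ => y₀ + t • d) ⁻¹' C) := hC.preimage hcont
  have h0 : (0:ℝ) ∈ (fun t : ℝ => y₀ + t • d) ⁻¹' C := by simp [hy]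
  obtain ⟨ε, hε, hball⟩ := Metric.isOpen_iff.mp hopen 0 h0
  refine ⟨ε/2, by positivity, ?_⟩
  have : ε/2 ∈ Metric.ball (0:ℝ) ε := by
    simp only [Metric.mem_ball, Real.dist_eq, sub_zero]
    rw [abs_of_pos (by positivity)]; linarith
  exact hball this

-- positive scalar
lemma cone_int_smul_mem {K : Set Y}
    (hKcone : ∀ ⦃c : ℝ⦄, 0 ≤ c → ∀ ⦃y : Y⦄, y ∈ K → c • y ∈ K)
    {r : ℝ} (hr : 0 < r) {c : Y} (hc : c ∈ interior K) : r • c ∈ interior K := by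
  have hopen : IsOpen ((fun y : Y => r • y) '' interior K) :=
    (Homeomorph.smulOfNeZero (r : ℝ) hr.ne') |>.isOpenMap _ isOpen_interior
  have hsub : (fun y : Y => r • y) '' interior K ⊆ K := by
    rintro _ ⟨a, ha, rfl⟩
    exact hKcone hr.le (interior_subset ha)
  exact interior_maximal hsub hopen ⟨c, hc, rfl⟩

end Helpers

section Key

set_option linter.unusedSectionVars false

variable {Y : Type*} [AddCommGroup Y] [Module ℝ Y] [TopologicalSpace Y]
  [IsTopologicalAddGroup Y] [ContinuousSMul ℝ Y]

/-- If `u` is a weak upper bound of a nonempty set `A`, then there is a weakly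
supremal element `s` of `A` with `u - s ∈ K`. -/
lemma key_wsup {K : Set Y} (hKcx : Convex ℝ K)
    (hKcone : ∀ ⦃c : ℝ⦄, 0 ≤ c → ∀ ⦃y : Y⦄, y ∈ K → c • y ∈ K)
    (hKint : (interior K).Nonempty)
    {A : Set Y} (hA : A.Nonempty) {u : Y}
    (hu : ∀ v ∈ A, u - v ∉ -interior K) :
    ∃ s ∈ WSup K A, u - s ∈ K := by
  obtain ⟨e, he⟩ := hKint
  obtain ⟨a₀, ha₀⟩ := hA
  set S : Set ℝ := {t | ∃ v ∈ A, u + t • e - v ∈ -interior K} with hSdef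
  have hdown : ∀ t ∈ S, ∀ t' ≤ t, t' ∈ S := by
    rintro t ⟨v, hv, hm⟩ t' ht'
    refine ⟨v, hv, ?_⟩
    rw [Set.mem_neg] at hm ⊢
    have h1 : (t - t') • e ∈ K := hKcone (by linarith) (interior_subset he)
    have h2 := cone_int_add_mem hKcx hKcone hm h1
    have heq : -(u + t' • e - v) = -(u + t • e - v) + (t - t') • e := by
      rw [sub_smul]; abel
    rwa [heq]
  have hSne : S.Nonempty := by
    obtain ⟨δ, hδ, hδm⟩ := exists_pos_add_smul_mem isOpen_interior he (a₀ - u)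
    refine ⟨-(1/δ), a₀, ha₀, ?_⟩
    rw [Set.mem_neg]
    have h2 := cone_int_smul_mem hKcone (show (0:ℝ) < 1/δ by positivity) hδm
    have hd : (1/δ) * δ = 1 := by field_simp
    have heq : -(u + (-(1/δ)) • e - a₀) = (1/δ) • (e + δ • (a₀ - u)) := by
      rw [smul_add, smul_smul, hd, one_smul, neg_smul]; abel
    rwa [heq]
  have hbdd : ∀ t ∈ S, t ≤ 0 := by
    intro t ht
    by_contra h
    push_neg at h
    obtain ⟨v, hv, hm⟩ := hdown t ht 0 h.le
    refine hu v hv ?_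
    simpa using hm
  have hbddA : BddAbove S := ⟨0, hbdd⟩
  set t₀ := sSup S with ht₀def
  have ht₀le : t₀ ≤ 0 := csSup_le hSne hbdd
  have hmem : ∀ t < t₀, t ∈ S := by
    intro t ht
    obtain ⟨t', ht'S, htt'⟩ := exists_lt_of_lt_csSup hSne ht
    exact hdown t' ht'S t htt'.le
  have hnot : t₀ ∉ S := by
    rintro ⟨v, hv, hm⟩
    rw [Set.mem_neg] at hm
    obtain ⟨δ, hδ, hδm⟩ := exists_pos_add_smul_mem isOpen_interior hm (-e)
    have hmemS : t₀ + δ ∈ S := by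
      refine ⟨v, hv, ?_⟩
      rw [Set.mem_neg]
      have heq : -(u + (t₀ + δ) • e - v) = -(u + t₀ • e - v) + δ • (-e) := by
        rw [smul_neg, add_smul]; abel
      rwa [heq]
    have := le_csSup hbddA hmemS
    linarith
  refine ⟨u + t₀ • e, ⟨?_, ?_⟩, ?_⟩
  · intro v hv hmem'
    exact hnot ⟨v, hv, hmem'⟩
  · intro w hw
    rw [Set.mem_neg] at hw
    obtain ⟨δ, hδ, hδm⟩ := exists_pos_add_smul_mem isOpen_interior hw (-e)
    obtain ⟨v, hv, hm⟩ := hmem (t₀ - δ) (by linarith)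
    refine ⟨v, hv, ?_⟩
    rw [Set.mem_neg] at hm ⊢
    have h2 := cone_int_add_mem hKcx hKcone hm (interior_subset hδm)
    have heq : -(w - v) = -(u + (t₀ - δ) • e - v) + (-(w - (u + t₀ • e)) + δ • (-e)) := by
      rw [smul_neg, sub_smul]; abel
    rwa [heq]
  · have heq : u - (u + t₀ • e) = (-t₀) • e := by rw [neg_smul]; abel
    rw [heq]
    exact hKcone (by linarith) (interior_subset he)

end Key


/-- Theorem 4.2, direction (a) ⇒ (e): the epigraph representation implies
stable strong duality. -/
theorem stmt_9
    {X Y Z : Type*}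
    [AddCommGroup X] [Module ℝ X] [TopologicalSpace X] [IsTopologicalAddGroup X]
    [ContinuousSMul ℝ X] [LocallyConvexSpace ℝ X] [T2Space X]
    [AddCommGroup Y] [Module ℝ Y] [TopologicalSpace Y] [IsTopologicalAddGroup Y]
    [ContinuousSMul ℝ Y] [LocallyConvexSpace ℝ Y] [T2Space Y]
    [AddCommGroup Z] [Module ℝ Z] [TopologicalSpace Z] [IsTopologicalAddGroup Z]
    [ContinuousSMul ℝ Z] [LocallyConvexSpace ℝ Z] [T2Space Z]
    (K : Set Y) (hKcl : IsClosed K) (hKcx : Convex ℝ K)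
    (hKcone : ∀ ⦃c : ℝ⦄, 0 ≤ c → ∀ ⦃y : Y⦄, y ∈ K → c • y ∈ K)
    (hKne : K ≠ Set.univ) (hKint : (interior K).Nonempty)
    (Φ : X × Z → Y) (D : Set (X × Z)) (hD : D.Nonempty)
    (h0 : (0 : Z) ∈ Prod.snd '' D)
    -- (a): the epigraph representation A = B
    (hAB : ∀ (L : X →L[ℝ] Y) (y : Y),
      (∀ x : X, (x, (0 : Z)) ∈ D → Φ (x, 0) - L x + y ∉ -interior K) ↔
      (∃ T : Z →L[ℝ] Y, ∀ p ∈ D, Φ p - L p.1 - T p.2 + y ∉ -interior K)) :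
    ∀ L : X →L[ℝ] Y,
      WInf K (primalSet Φ D L) = dualSet K Φ D L ∩ WSup K (dualSet K Φ D L) ∧
      ∀ y ∈ WInf K (primalSet Φ D L),
        ∃ T : Z →L[ℝ] Y, -y ∈ WSup K (lamSet Φ D L T) := by
  intro L
  have hsub : ∀ (T : Z →L[ℝ] Y) (x : X), (x, (0:Z)) ∈ D →
      -(Φ (x, 0) - L x) ∈ lamSet Φ D L T := by
    intro T x hx
    exact ⟨(x, 0), hx, by simp⟩
  have hΛne : ∀ T : Z →L[ℝ] Y, (lamSet Φ D L T).Nonempty := by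
    intro T
    obtain ⟨p, hp⟩ := hD
    exact ⟨L p.1 + T p.2 - Φ p, p, hp, rfl⟩
  have step1 : ∀ y ∈ WInf K (primalSet Φ D L),
      ∃ T : Z →L[ℝ] Y, -y ∈ WSup K (lamSet Φ D L T) := by
    rintro y ⟨hy1, hy2⟩
    have hside : ∀ x : X, (x, (0:Z)) ∈ D → Φ (x, 0) - L x + (-y) ∉ -interior K := by
      intro x hx h
      rw [← sub_eq_add_neg] at h
      exact hy1 (Φ (x, 0) - L x) ⟨x, hx, rfl⟩ h
    obtain ⟨T, hT⟩ := (hAB L (-y)).mp hside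
    refine ⟨T, ?_, ?_⟩
    · rintro _ ⟨p, hp, rfl⟩ hmem
      refine hT p hp ?_
      have heq : Φ p - L p.1 - T p.2 + -y = -y - (L p.1 + T p.2 - Φ p) := by abel
      rwa [heq]
    · intro w hw
      have hyw : y - (-w) ∈ -interior K := by
        have heq : y - (-w) = w - -y := by abel
        rwa [heq]
      obtain ⟨n, hnP, hn⟩ := hy2 (-w) hyw
      obtain ⟨x, hx, rfl⟩ := hnP
      refine ⟨-(Φ (x, 0) - L x), hsub T x hx, ?_⟩
      have heq : w - -(Φ (x, 0) - L x) = (Φ (x, 0) - L x) - (-w) := by abel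
      rwa [heq]
  have wd : ∀ m ∈ dualSet K Φ D L, ∀ n ∈ primalSet Φ D L, m - n ∉ interior K := by
    rintro m ⟨T, hm1, _⟩ n ⟨x, hx, rfl⟩ hcon
    refine hm1 _ (hsub T x hx) ?_
    rw [Set.mem_neg]
    have heq : -(-m - -(Φ (x, 0) - L x)) = m - (Φ (x, 0) - L x) := by abel
    rwa [heq]
  constructor
  · apply Set.Subset.antisymm
    · rintro y hy
      have hyM : y ∈ dualSet K Φ D L := step1 y hy
      obtain ⟨hy1, hy2⟩ := hy
      refine ⟨hyM, ?_, ?_⟩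
      · intro m hm hmem
        obtain ⟨n, hn, hn2⟩ := hy2 m hmem
        refine wd m hm n hn ?_
        have h' := Set.mem_neg.mp hn2
        have heq : m - n = -(n - m) := by abel
        rwa [heq]
      · intro w hw
        exact ⟨y, hyM, hw⟩
    · rintro y ⟨⟨T, hT⟩, hy1, hy2⟩
      constructor
      · rintro _ ⟨x, hx, rfl⟩ hmem
        refine hT.1 _ (hsub T x hx) ?_
        have heq : -y - -(Φ (x, 0) - L x) = (Φ (x, 0) - L x) - y := by abel
        rwa [heq]
      · intro w hw
        by_contra hno
        push_neg at hno
        have hside : ∀ x : X, (x, (0:Z)) ∈ D → Φ (x, 0) - L x + (-w) ∉ -interior K := by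
          intro x hx h
          rw [← sub_eq_add_neg] at h
          exact hno (Φ (x, 0) - L x) ⟨x, hx, rfl⟩ h
        obtain ⟨T₀, hT₀⟩ := (hAB L (-w)).mp hside
        have hu : ∀ v ∈ lamSet Φ D L T₀, -w - v ∉ -interior K := by
          rintro _ ⟨p, hp, rfl⟩ hmem
          refine hT₀ p hp ?_
          have heq : Φ p - L p.1 - T₀ p.2 + -w = -w - (L p.1 + T₀ p.2 - Φ p) := by abel
          rwa [heq]
        obtain ⟨s, hsW, hsK⟩ := key_wsup hKcx hKcone hKint (hΛne T₀) hu
        have hmM : -s ∈ dualSet K Φ D L := ⟨T₀, by rwa [neg_neg]⟩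
        refine hy1 (-s) hmM ?_
        rw [Set.mem_neg]
        have hwy : -(y - w) ∈ interior K := Set.mem_neg.mp hw
        have h2 := cone_int_add_mem hKcx hKcone hwy hsK
        have heq : -(y - -s) = -(y - w) + (-w - s) := by abel
        rwa [heq]
  · exact step1
end

section
/- (Theorem 4.2, direction (e) ⇒ (a).) Assume stable strong duality holds: for every L ∈ L(X,Y), WInf N_L = WMax M_L := M_L ∩ WSup M_L. Then the epigraph representation A = B holds, i.e. for every L ∈ L(X,Y) and y ∈ Y: [Φ(x,0_Z) - L(x) + y ∉ -int K for all x with (x,0_Z) ∈ D] if and only if [there exists T ∈ L(Z,Y) with Φ(x,z) - L(x) - T(z) + y ∉ -int K for all (x,z) ∈ D]. -/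
open Pointwise

section AuxL
variable {Y : Type*} [AddCommGroup Y] [Module ℝ Y] [TopologicalSpace Y]
  [IsTopologicalAddGroup Y] [ContinuousSMul ℝ Y]

lemma aux_add_interior (K : Set Y) (hKcx : Convex ℝ K)
    (hKcone : ∀ ⦃c : ℝ⦄, 0 ≤ c → ∀ ⦃y : Y⦄, y ∈ K → c • y ∈ K)
    {a b : Y} (ha : a ∈ interior K) (hb : b ∈ K) : a + b ∈ interior K := by
  have hKK : ∀ u ∈ K, ∀ v ∈ K, u + v ∈ K := by
    intro u hu v hv
    have h := hKcx hu hv (by norm_num : (0:ℝ) ≤ 1/2) (by norm_num : (0:ℝ) ≤ 1/2)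
      (by norm_num)
    have h2 := hKcone (by norm_num : (0:ℝ) ≤ 2) h
    have : (2:ℝ) • ((1/2 : ℝ) • u + (1/2 : ℝ) • v) = u + v := by
      rw [smul_add, smul_smul, smul_smul]; norm_num
    rwa [this] at h2
  have hsub : (fun y => y + b) '' interior K ⊆ K := by
    rintro _ ⟨u, hu, rfl⟩
    exact hKK u (interior_subset hu) b hb
  have hopen : IsOpen ((fun y => y + b) '' interior K) :=
    (Homeomorph.addRight b).isOpenMap _ isOpen_interior
  exact interior_maximal hsub hopen ⟨a, ha, rfl⟩

lemma aux_smul_interior (K : Set Y)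
    (hKcone : ∀ ⦃c : ℝ⦄, 0 ≤ c → ∀ ⦃y : Y⦄, y ∈ K → c • y ∈ K)
    {t : ℝ} (ht : 0 < t) {a : Y} (ha : a ∈ interior K) : t • a ∈ interior K := by
  have hopen : IsOpen ((t • ·) '' interior K) :=
    (isOpenMap_smul₀ (ne_of_gt ht)) _ isOpen_interior
  have hsub : ((t • ·) '' interior K) ⊆ K := by
    rintro _ ⟨u, hu, rfl⟩
    exact hKcone ht.le (interior_subset hu)
  exact interior_maximal hsub hopen ⟨a, ha, rfl⟩

lemma aux_eps (K : Set Y) {a : Y} (w : Y) (ha : a ∈ interior K) :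
    ∃ ε : ℝ, 0 < ε ∧ a + ε • w ∈ interior K := by
  have hc : Continuous fun t : ℝ => a + t • w := by continuity
  have hmem : (fun t : ℝ => a + t • w) ⁻¹' interior K ∈ nhds (0:ℝ) := by
    apply hc.continuousAt.preimage_mem_nhds
    simpa using isOpen_interior.mem_nhds ha
  obtain ⟨ε, hε, hball⟩ := Metric.mem_nhds_iff.mp hmem
  refine ⟨ε/2, by linarith, ?_⟩
  have : (ε/2 : ℝ) ∈ Metric.ball (0:ℝ) ε := by
    simp only [Metric.mem_ball, Real.dist_eq, sub_zero]
    rw [abs_of_pos (by linarith)]; linarith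
  exact hball this

end AuxL




/-- Theorem 4.2, direction (e) ⇒ (a): stable strong duality implies the
epigraph representation. -/
theorem stmt_10
    {X Y Z : Type*}
    [AddCommGroup X] [Module ℝ X] [TopologicalSpace X] [IsTopologicalAddGroup X]
    [ContinuousSMul ℝ X] [LocallyConvexSpace ℝ X] [T2Space X]
    [AddCommGroup Y] [Module ℝ Y] [TopologicalSpace Y] [IsTopologicalAddGroup Y]
    [ContinuousSMul ℝ Y] [LocallyConvexSpace ℝ Y] [T2Space Y]
    [AddCommGroup Z] [Module ℝ Z] [TopologicalSpace Z] [IsTopologicalAddGroup Z]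
    [ContinuousSMul ℝ Z] [LocallyConvexSpace ℝ Z] [T2Space Z]
    (K : Set Y) (hKcl : IsClosed K) (hKcx : Convex ℝ K)
    (hKcone : ∀ ⦃c : ℝ⦄, 0 ≤ c → ∀ ⦃y : Y⦄, y ∈ K → c • y ∈ K)
    (hKne : K ≠ Set.univ) (hKint : (interior K).Nonempty)
    (Φ : X × Z → Y) (D : Set (X × Z)) (hD : D.Nonempty)
    (h0 : (0 : Z) ∈ Prod.snd '' D)
    -- (e): stable strong duality
    (hSD : ∀ L : X →L[ℝ] Y,
      WInf K (primalSet Φ D L) = dualSet K Φ D L ∩ WSup K (dualSet K Φ D L)) :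
    ∀ (L : X →L[ℝ] Y) (y : Y),
      (∀ x : X, (x, (0 : Z)) ∈ D → Φ (x, 0) - L x + y ∉ -interior K) ↔
      (∃ T : Z →L[ℝ] Y, ∀ p ∈ D, Φ p - L p.1 - T p.2 + y ∉ -interior K) := by
  intro L y
  constructor
  · intro hA
    obtain ⟨k₀, hk₀⟩ := hKint
    have hk₀K : k₀ ∈ K := interior_subset hk₀
    obtain ⟨p₀, hp₀D, hp₀2⟩ := h0
    have hx₀ : (p₀.1, (0:Z)) ∈ D := by
      have : (p₀.1, (0:Z)) = p₀ := Prod.ext rfl hp₀2.symm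
      rwa [this]
    set N := primalSet Φ D L with hN
    have hn₀ : Φ (p₀.1, 0) - L p₀.1 ∈ N := ⟨p₀.1, hx₀, rfl⟩
    set S : Set ℝ := {t | ∃ n ∈ N, (-y + t • k₀) - n ∈ interior K} with hSdef
    -- S is upward closed
    have hup : ∀ t ∈ S, ∀ t', t < t' → t' ∈ S := by
      rintro t ⟨n, hn, hmem⟩ t' htt'
      refine ⟨n, hn, ?_⟩
      have h := aux_add_interior K hKcx hKcone hmem
        (hKcone (by linarith : (0:ℝ) ≤ t' - t) hk₀K)
      have heq : ((-y + t • k₀) - n) + (t' - t) • k₀ = (-y + t' • k₀) - n := by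
        rw [sub_smul]; abel
      rwa [heq] at h
    -- 0 ∉ S
    have h0S : (0:ℝ) ∉ S := by
      rintro ⟨n, hn, hmem⟩
      obtain ⟨x, hxD, rfl⟩ := hn
      apply hA x hxD
      rw [Set.mem_neg]
      have heq : (-y + (0:ℝ) • k₀) - (Φ (x, 0) - L x) = -(Φ (x, 0) - L x + y) := by
        rw [zero_smul]; abel
      rwa [heq] at hmem
    -- lower bound 0
    have hlb : ∀ t ∈ S, (0:ℝ) ≤ t := by
      intro t ht
      by_contra h
      push_neg at h
      exact h0S (hup t ht 0 h)
    have hbdd : BddBelow S := ⟨0, hlb⟩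
    -- S nonempty
    have hSne : S.Nonempty := by
      obtain ⟨ε, hε, hmem⟩ := aux_eps K (-y - (Φ (p₀.1, 0) - L p₀.1)) hk₀
      refine ⟨1/ε, Φ (p₀.1, 0) - L p₀.1, hn₀, ?_⟩
      have h := aux_smul_interior K hKcone (by positivity : (0:ℝ) < 1/ε) hmem
      have heq : (1/ε) • (k₀ + ε • (-y - (Φ (p₀.1, 0) - L p₀.1)))
          = (-y + (1/ε) • k₀) - (Φ (p₀.1, 0) - L p₀.1) := by
        rw [smul_add, smul_smul, one_div_mul_cancel hε.ne', one_smul]; abel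
      rwa [heq] at h
    set tb := sInf S with htb
    have htb0 : 0 ≤ tb := le_csInf hSne hlb
    have htbS : tb ∉ S := by
      rintro ⟨n, hn, hmem⟩
      obtain ⟨ε, hε, hmem'⟩ := aux_eps K (-k₀) hmem
      have hts : tb - ε ∈ S := by
        refine ⟨n, hn, ?_⟩
        have heq : ((-y + tb • k₀) - n) + ε • (-k₀) = (-y + (tb - ε) • k₀) - n := by
          rw [smul_neg, sub_smul]; abel
        rwa [heq] at hmem'
      have := csInf_le hbdd hts
      linarith
    -- v̄ = -y + tb • k₀ is a weak infimum of N
    have hWInf : (-y + tb • k₀) ∈ WInf K N := by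
      constructor
      · intro n hn hcon
        rw [Set.mem_neg, neg_sub] at hcon
        exact htbS ⟨n, hn, hcon⟩
      · intro w hw
        rw [Set.mem_neg, neg_sub] at hw
        obtain ⟨ε, hε, hu⟩ := aux_eps K (-k₀) hw
        obtain ⟨s, hsS, hs⟩ := exists_lt_of_csInf_lt hSne (by linarith : sInf S < tb + ε)
        obtain ⟨n, hn, hmem⟩ := hup s hsS (tb + ε) hs
        refine ⟨n, hn, ?_⟩
        rw [Set.mem_neg, neg_sub]
        have h := aux_add_interior K hKcx hKcone hmem (interior_subset hu)
        have heq : ((-y + (tb + ε) • k₀) - n) + ((w - (-y + tb • k₀)) + ε • (-k₀))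
            = w - n := by
          rw [add_smul, smul_neg]; abel
        rwa [heq] at h
    have hdual : (-y + tb • k₀) ∈ dualSet K Φ D L := by
      have h := hSD L
      rw [h] at hWInf
      exact hWInf.1
    obtain ⟨T, hT⟩ := hdual
    refine ⟨T, ?_⟩
    intro p hp hcon
    rw [Set.mem_neg] at hcon
    have hlam : L p.1 + T p.2 - Φ p ∈ lamSet Φ D L T := ⟨p, hp, rfl⟩
    apply hT.1 _ hlam
    rw [Set.mem_neg, neg_sub]
    have h := aux_add_interior K hKcx hKcone hcon (hKcone htb0 hk₀K)
    have heq : -(Φ p - L p.1 - T p.2 + y) + tb • k₀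
        = (L p.1 + T p.2 - Φ p) - -(-y + tb • k₀) := by abel
    rwa [heq] at h
  · rintro ⟨T, hT⟩ x hx
    have := hT (x, 0) hx
    simpa using this
end

section
/- (Theorem 4.3, stable strong duality I.) Assume Φ is K-convex (with nonempty domain D and 0_Z ∈ π(D)) and condition (C1) holds. Then for every L ∈ L(X,Y), WInf N_L = WMax M_L := M_L ∩ WSup M_L (stable strong duality for the pair (P)-(D)). If, in addition, S ⊆ Z is a nonempty convex cone and condition (C0) holds, then also WInf N_L = WMax M_L⁺ := M_L⁺ ∩ WSup M_L⁺ for every L ∈ L(X,Y) (stable strong duality for the pair (P)-(D_ℓ)). -/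
open Pointwise

set_option linter.unusedSectionVars false
set_option maxHeartbeats 1000000

section AuxHelpers


variable {Y : Type*} [AddCommGroup Y] [Module ℝ Y] [TopologicalSpace Y]
  [IsTopologicalAddGroup Y] [ContinuousSMul ℝ Y] {K : Set Y}

lemma smul_mem_intK (hKcone : ∀ ⦃c : ℝ⦄, 0 ≤ c → ∀ ⦃y : Y⦄, y ∈ K → c • y ∈ K)
    {c : ℝ} (hc : 0 < c) {k : Y} (hk : k ∈ interior K) : c • k ∈ interior K := by
  have hopen : IsOpen ((c • ·) '' interior K) := (isOpenMap_smul₀ hc.ne') _ isOpen_interior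
  have hsub : (c • ·) '' interior K ⊆ K := by
    rintro _ ⟨y, hy, rfl⟩; exact hKcone hc.le (interior_subset hy)
  exact interior_maximal hsub hopen ⟨k, hk, rfl⟩

lemma intK_add_K (hKcx : Convex ℝ K)
    (hKcone : ∀ ⦃c : ℝ⦄, 0 ≤ c → ∀ ⦃y : Y⦄, y ∈ K → c • y ∈ K)
    {k y : Y} (hk : k ∈ interior K) (hy : y ∈ K) : k + y ∈ interior K := by
  have h2 : (1 / 2 : ℝ) • k + (1 / 2 : ℝ) • y ∈ interior K :=
    hKcx.combo_interior_self_mem_interior hk hy (by norm_num) (by norm_num) (by norm_num)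
  have h3 := smul_mem_intK hKcone (by norm_num : (0 : ℝ) < 2) h2
  have h4 : (2 : ℝ) • ((1 / 2 : ℝ) • k + (1 / 2 : ℝ) • y) = k + y := by module
  rwa [h4] at h3

lemma intK_add_intK (hKcx : Convex ℝ K)
    (hKcone : ∀ ⦃c : ℝ⦄, 0 ≤ c → ∀ ⦃y : Y⦄, y ∈ K → c • y ∈ K)
    {k y : Y} (hk : k ∈ interior K) (hy : y ∈ interior K) : k + y ∈ interior K :=
  intK_add_K hKcx hKcone hk (interior_subset hy)

lemma exists_pos_smul_mem {k : Y} (hk : k ∈ interior K) (y : Y) :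
    ∃ ε : ℝ, 0 < ε ∧ k + ε • y ∈ interior K := by
  have hcont : Continuous fun ε : ℝ => k + ε • y :=
    continuous_const.add (continuous_id.smul continuous_const)
  have hmem : (fun ε : ℝ => k + ε • y) ⁻¹' interior K ∈ nhds (0 : ℝ) := by
    apply hcont.continuousAt.preimage_mem_nhds
    simpa using isOpen_interior.mem_nhds hk
  rcases Metric.mem_nhds_iff.1 hmem with ⟨δ, hδ, hball⟩
  refine ⟨δ / 2, by positivity, hball ?_⟩
  simp only [Metric.mem_ball, Real.dist_eq, sub_zero]
  rw [abs_of_pos (by positivity)]; linarith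





lemma le_on_of_lt_on_interior {E : Type*} [AddCommGroup E] [Module ℝ E] [TopologicalSpace E]
    [IsTopologicalAddGroup E] [ContinuousSMul ℝ E] {s : Set E} (hs : Convex ℝ s)
    (f : E →L[ℝ] ℝ) {c : ℝ} {b : E} (hb : b ∈ interior s)
    (hlt : ∀ p ∈ interior s, f p < c) {a : E} (ha : a ∈ s) : f a ≤ c := by
  have key : ∀ n : ℕ, (1 / (n + 1) : ℝ) * f b + (1 - 1 / (n + 1)) * f a ≤ c := by
    intro n
    have h1 : (0 : ℝ) < 1 / (n + 1) := by positivity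
    have h2 : (0 : ℝ) ≤ 1 - 1 / (n + 1) := by
      have hn : (1 : ℝ) / (n + 1) ≤ 1 := by
        rw [div_le_one (by positivity)]
        linarith [Nat.cast_nonneg (α := ℝ) n]
      linarith
    have hm := hs.combo_interior_self_mem_interior hb ha h1 h2 (by ring)
    have hl := (hlt _ hm).le
    simpa [map_add, map_smul, smul_eq_mul] using hl
  have hten : Filter.Tendsto (fun n : ℕ => (1 / (n + 1) : ℝ) * f b + (1 - 1 / (n + 1)) * f a)
      Filter.atTop (nhds (f a)) := by
    have h0 := tendsto_one_div_add_atTop_nhds_zero_nat (𝕜 := ℝ)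
    have h1 : Filter.Tendsto (fun n : ℕ => (1 / (n + 1) : ℝ) * f b + ((1 : ℝ) - 1 / (n + 1)) * f a)
        Filter.atTop (nhds (0 * f b + ((1 : ℝ) - 0) * f a)) :=
      (h0.mul_const _).add ((tendsto_const_nhds.sub h0).mul_const _)
    simpa using h1
  exact le_of_tendsto hten (Filter.Eventually.of_forall key)


section WSL
variable {Y : Type*} [AddCommGroup Y] [Module ℝ Y] [TopologicalSpace Y]
  [IsTopologicalAddGroup Y] [ContinuousSMul ℝ Y] {K : Set Y}

lemma wsupLine (hKcx : Convex ℝ K)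
    (hKcone : ∀ ⦃c : ℝ⦄, 0 ≤ c → ∀ ⦃y : Y⦄, y ∈ K → c • y ∈ K)
    {C : Set Y} (hC : C.Nonempty) {k : Y} (hk : k ∈ interior K) {q : Y}
    (hq : ∀ c ∈ C, c - q ∉ interior K) :
    ∃ t : ℝ, 0 ≤ t ∧ q - t • k ∈ WSup K C := by
  set I : Set ℝ := {s : ℝ | ∃ c ∈ C, c - q + s • k ∈ interior K} with hI
  have hkK : k ∈ K := interior_subset hk
  -- upward closed
  have hup : ∀ s ∈ I, ∀ s' : ℝ, s ≤ s' → s' ∈ I := by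
    rintro s ⟨c, hc, hmem⟩ s' hss'
    rcases eq_or_lt_of_le hss' with rfl | hlt
    · exact ⟨c, hc, hmem⟩
    refine ⟨c, hc, ?_⟩
    have h1 : (s' - s) • k ∈ interior K := smul_mem_intK hKcone (by linarith) hk
    have h2 := intK_add_K hKcx hKcone hmem (interior_subset h1)
    have h3 : c - q + s • k + (s' - s) • k = c - q + s' • k := by module
    rwa [h3] at h2
  -- positivity
  have hpos : ∀ s ∈ I, 0 < s := by
    rintro s ⟨c, hc, hmem⟩
    by_contra hns
    push_neg at hns
    have h1 : (-s) • k ∈ K := hKcone (by linarith) hkK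
    have h2 := intK_add_K hKcx hKcone hmem h1
    have h3 : c - q + s • k + (-s) • k = c - q := by module
    rw [h3] at h2
    exact hq c hc h2
  -- nonempty
  have hne : I.Nonempty := by
    obtain ⟨c, hc⟩ := hC
    obtain ⟨ε, hε, hmem⟩ := exists_pos_smul_mem hk (c - q)
    refine ⟨ε⁻¹, c, hc, ?_⟩
    have h1 := smul_mem_intK hKcone (inv_pos.2 hε) hmem
    have h2 : ε⁻¹ • (k + ε • (c - q)) = c - q + ε⁻¹ • k := by
      rw [smul_add, smul_smul, inv_mul_cancel₀ hε.ne']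
      module
    rwa [h2] at h1
  have hbdd : BddBelow I := ⟨0, fun s hs => (hpos s hs).le⟩
  set t := sInf I with ht
  have htnn : 0 ≤ t := le_csInf hne fun s hs => (hpos s hs).le
  have htni : t ∉ I := by
    intro hti
    obtain ⟨c, hc, hmem⟩ := hti
    obtain ⟨ε, hε, hmem2⟩ := exists_pos_smul_mem hmem (-k)
    have h1 : t - ε ∈ I := by
      refine ⟨c, hc, ?_⟩
      have h2 : c - q + t • k + ε • (-k) = c - q + (t - ε) • k := by module
      rwa [h2] at hmem2
    have := csInf_le hbdd h1
    linarith
  have hgt : ∀ s : ℝ, t < s → s ∈ I := by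
    intro s hs
    obtain ⟨a, ha, has⟩ := exists_lt_of_csInf_lt hne hs
    exact hup a ha s has.le
  refine ⟨t, htnn, ?_, ?_⟩
  · intro c hc hmem
    rw [Set.mem_neg] at hmem
    have h1 : c - (q - t • k) ∈ interior K := by
      have : -(q - t • k - c) = c - (q - t • k) := by abel
      rwa [this] at hmem
    apply htni
    refine ⟨c, hc, ?_⟩
    have h2 : c - (q - t • k) = c - q + t • k := by abel
    rwa [h2] at h1
  · intro w hw
    rw [Set.mem_neg] at hw
    have hk'' : q - t • k - w ∈ interior K := by
      have : -(w - (q - t • k)) = q - t • k - w := by abel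
      rwa [this] at hw
    obtain ⟨ε, hε, hmem2⟩ := exists_pos_smul_mem hk'' (-k)
    obtain ⟨c, hc, hmem3⟩ := hgt (t + ε) (by linarith)
    refine ⟨c, hc, ?_⟩
    rw [Set.mem_neg]
    have h4 := intK_add_K hKcx hKcone hmem3 (interior_subset hmem2)
    have h5 : c - q + (t + ε) • k + (q - t • k - w + ε • (-k)) = -(w - c) := by module
    rwa [h5] at h4
end WSL

section Gen

variable {X Y Z : Type*}
  [AddCommGroup X] [Module ℝ X] [TopologicalSpace X]
  [AddCommGroup Y] [Module ℝ Y] [TopologicalSpace Y]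
  [IsTopologicalAddGroup Y] [ContinuousSMul ℝ Y]
  [AddCommGroup Z] [Module ℝ Z] [TopologicalSpace Z]

lemma main_generic (K : Set Y) (hKcx : Convex ℝ K)
    (hKcone : ∀ ⦃c : ℝ⦄, 0 ≤ c → ∀ ⦃y : Y⦄, y ∈ K → c • y ∈ K)
    (Φ : X × Z → Y) (D : Set (X × Z)) (hD : D.Nonempty)
    (L : X →L[ℝ] Y) (P : (Z →L[ℝ] Y) → Prop)
    (hsep : ∀ v : Y, (∀ x : X, (x, (0 : Z)) ∈ D → v - (Φ (x, 0) - L x) ∉ interior K) →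
      ∃ T : Z →L[ℝ] Y, P T ∧ ∀ p ∈ D, L p.1 + T p.2 - Φ p + v ∉ interior K) :
    WInf K (primalSet Φ D L) =
      {y : Y | ∃ T, P T ∧ -y ∈ WSup K (lamSet Φ D L T)} ∩
        WSup K {y : Y | ∃ T, P T ∧ -y ∈ WSup K (lamSet Φ D L T)} := by
  set MP := {y : Y | ∃ T, P T ∧ -y ∈ WSup K (lamSet Φ D L T)} with hMP
  -- weak duality: no element of MP is in B
  have hweak : ∀ m ∈ MP, ∀ x : X, (x, (0 : Z)) ∈ D → m - (Φ (x, 0) - L x) ∉ interior K := by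
    rintro m ⟨T, hPT, hW⟩ x hx hmem
    have hlam : L x + T 0 - Φ (x, 0) ∈ lamSet Φ D L T := ⟨(x, 0), hx, rfl⟩
    apply hW.1 _ hlam
    rw [Set.mem_neg]
    have : -(-m - (L x + T 0 - Φ (x, 0))) = m - (Φ (x, 0) - L x) := by
      simp [map_zero]; abel
    rwa [this]
  ext v
  constructor
  · -- v ∈ WInf N → v ∈ MP ∩ WSup MP
    intro hv
    have hvnB : ∀ x : X, (x, (0 : Z)) ∈ D → v - (Φ (x, 0) - L x) ∉ interior K := by
      intro x hx hmem
      apply hv.1 (Φ (x, 0) - L x) ⟨x, hx, rfl⟩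
      rw [Set.mem_neg]
      have : -(Φ (x, 0) - L x - v) = v - (Φ (x, 0) - L x) := by abel
      rwa [this]
    -- v + k is in B for all k ∈ interior K
    have hvk : ∀ k ∈ interior K, ∃ x : X, (x, (0 : Z)) ∈ D ∧
        v + k - (Φ (x, 0) - L x) ∈ interior K := by
      intro k hk
      have h1 : v - (v + k) ∈ -interior K := by
        rw [Set.mem_neg]; simpa using hk
      obtain ⟨a, ⟨x, hx, rfl⟩, ha⟩ := hv.2 (v + k) h1
      rw [Set.mem_neg] at ha
      refine ⟨x, hx, ?_⟩
      have : -(Φ (x, 0) - L x - (v + k)) = v + k - (Φ (x, 0) - L x) := by abel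
      rwa [this] at ha
    obtain ⟨T, hPT, hkey⟩ := hsep v hvnB
    have hvMP : v ∈ MP := by
      refine ⟨T, hPT, ?_, ?_⟩
      · rintro lam ⟨p, hp, rfl⟩ hmem
        rw [Set.mem_neg] at hmem
        apply hkey p hp
        have : -(-v - (L p.1 + T p.2 - Φ p)) = L p.1 + T p.2 - Φ p + v := by abel
        rwa [this] at hmem
      · intro w hw
        rw [Set.mem_neg] at hw
        have hk : -(w + v) ∈ interior K := by
          have : -(w - -v) = -(w + v) := by abel
          rwa [this] at hw
        obtain ⟨x, hx, hmem⟩ := hvk _ hk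
        refine ⟨L x + T 0 - Φ (x, 0), ⟨(x, 0), hx, rfl⟩, ?_⟩
        rw [Set.mem_neg]
        have heq : v + -(w + v) - (Φ (x, 0) - L x) = -(w - (L x + T 0 - Φ (x, 0))) := by
          simp [map_zero]; abel
        rwa [heq] at hmem
    refine ⟨hvMP, ?_, fun w hw => ⟨v, hvMP, hw⟩⟩
    -- v - m ∉ -interior K for all m ∈ MP
    intro m hm hmem
    rw [Set.mem_neg] at hmem
    have h1 : v - m ∈ -interior K := by
      rw [Set.mem_neg]; exact hmem
    obtain ⟨a, ⟨x, hx, rfl⟩, ha⟩ := hv.2 m h1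
    rw [Set.mem_neg] at ha
    apply hweak m hm x hx
    have : -(Φ (x, 0) - L x - m) = m - (Φ (x, 0) - L x) := by abel
    rwa [this] at ha
  · -- converse
    rintro ⟨hvMP, hvW⟩
    constructor
    · rintro a ⟨x, hx, rfl⟩ hmem
      rw [Set.mem_neg] at hmem
      apply hweak v hvMP x hx
      have : -(Φ (x, 0) - L x - v) = v - (Φ (x, 0) - L x) := by abel
      rwa [this] at hmem
    · intro w hw
      rw [Set.mem_neg] at hw
      have hkw : w - v ∈ interior K := by
        have : -(v - w) = w - v := by abel
        rwa [this] at hw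
      -- show w ∈ B
      by_contra hcon
      push_neg at hcon
      have hwnB : ∀ x : X, (x, (0 : Z)) ∈ D → w - (Φ (x, 0) - L x) ∉ interior K := by
        intro x hx hmem
        refine hcon (Φ (x, 0) - L x) ⟨x, hx, rfl⟩ ?_
        rw [Set.mem_neg]
        have : -(Φ (x, 0) - L x - w) = w - (Φ (x, 0) - L x) := by abel
        rwa [this]
      obtain ⟨T', hPT', hkey'⟩ := hsep w hwnB
      have hCne : (lamSet Φ D L T').Nonempty := by
        obtain ⟨p, hp⟩ := hD
        exact ⟨L p.1 + T' p.2 - Φ p, p, hp, rfl⟩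
      have hq : ∀ c ∈ lamSet Φ D L T', c - (-w) ∉ interior K := by
        rintro c ⟨p, hp, rfl⟩ hmem
        apply hkey' p hp
        have : L p.1 + T' p.2 - Φ p - -w = L p.1 + T' p.2 - Φ p + w := by abel
        rwa [this] at hmem
      obtain ⟨t, ht, hu⟩ := wsupLine hKcx hKcone hCne hkw hq
      have hmMP : -( -w - t • (w - v)) ∈ MP := ⟨T', hPT', by rwa [neg_neg]⟩
      have := hvW.1 _ hmMP
      apply this
      rw [Set.mem_neg]
      have h2 : -(v - -(-w - t • (w - v))) = (1 + t) • (w - v) := by module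
      rw [h2]
      exact smul_mem_intK hKcone (by linarith) hkw
end Gen

section Sep

variable {X Y Z : Type*}
  [AddCommGroup X] [Module ℝ X] [TopologicalSpace X]
  [AddCommGroup Y] [Module ℝ Y] [TopologicalSpace Y] [IsTopologicalAddGroup Y]
  [ContinuousSMul ℝ Y] [LocallyConvexSpace ℝ Y]
  [AddCommGroup Z] [Module ℝ Z] [TopologicalSpace Z] [IsTopologicalAddGroup Z]
  [ContinuousSMul ℝ Z] [LocallyConvexSpace ℝ Z]

lemma sep_lemma (K : Set Y) (hKcx : Convex ℝ K)
    (hKcone : ∀ ⦃c : ℝ⦄, 0 ≤ c → ∀ ⦃y : Y⦄, y ∈ K → c • y ∈ K)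
    (hKint : (interior K).Nonempty)
    (Φ : X × Z → Y) (D : Set (X × Z))
    (hconv : Convex ℝ {p : (X × Z) × Y | p.1 ∈ D ∧ p.2 - Φ p.1 ∈ K})
    (L : X →L[ℝ] Y)
    (hC1L : ∃ yL : Y, ∃ VL ∈ nhds (0 : Z), ∀ z ∈ VL,
        z ∈ (Submodule.span ℝ (Prod.snd '' D) : Set Z) →
        ∃ x : X, (x, z) ∈ D ∧ yL - (Φ (x, z) - L x) ∈ K)
    (v : Y)
    (hv : ∀ x : X, (x, (0 : Z)) ∈ D → v - (Φ (x, 0) - L x) ∉ interior K) :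
    ∃ T : Z →L[ℝ] Y, (∀ p ∈ D, L p.1 + T p.2 - Φ p + v ∉ interior K) ∧
      ∀ S : Set Z, (∀ ⦃c : ℝ⦄, 0 ≤ c → ∀ ⦃z : Z⦄, z ∈ S → c • z ∈ S) →
        (∃ xt : X, (xt, (0 : Z)) ∈ D ∧ ∀ z ∈ -S, (xt, z) ∈ D ∧ Φ (xt, 0) - Φ (xt, z) ∈ K) →
        ⇑T '' S ⊆ K := by
  classical
  obtain ⟨k₀, hk₀⟩ := hKint
  set Z₀ : Submodule ℝ Z := Submodule.span ℝ (Prod.snd '' D) with hZ₀def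
  haveI : LocallyConvexSpace ℝ ↥Z₀ := LocallyConvexSpace.induced (Z₀.subtype)
  have hzeroK : (0 : Y) ∈ K := by
    simpa using hKcone le_rfl (interior_subset hk₀)
  set G : Set (↥Z₀ × Y) :=
    {p | ∃ x : X, (x, (p.1 : Z)) ∈ D ∧ p.2 - (Φ (x, (p.1 : Z)) - L x) ∈ interior K} with hGdef
  -- convexity of G
  have hGcx : Convex ℝ G := by
    rintro ⟨z1, y1⟩ ⟨x1, hx1, hk1⟩ ⟨z2, y2⟩ ⟨x2, hx2, hk2⟩ a b ha hb hab
    have h1 : (((x1, (z1 : Z)), Φ (x1, (z1 : Z))) : (X × Z) × Y) ∈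
        {p : (X × Z) × Y | p.1 ∈ D ∧ p.2 - Φ p.1 ∈ K} := ⟨hx1, by simpa using hzeroK⟩
    have h2 : (((x2, (z2 : Z)), Φ (x2, (z2 : Z))) : (X × Z) × Y) ∈
        {p : (X × Z) × Y | p.1 ∈ D ∧ p.2 - Φ p.1 ∈ K} := ⟨hx2, by simpa using hzeroK⟩
    obtain ⟨hD3, hK3⟩ := hconv h1 h2 ha hb hab
    have hcoe : ((a • z1 + b • z2 : ↥Z₀) : Z) = a • (z1 : Z) + b • (z2 : Z) := by
      push_cast; ring_nf
    refine ⟨a • x1 + b • x2, ?_, ?_⟩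
    · show (a • x1 + b • x2, ((a • z1 + b • z2 : ↥Z₀) : Z)) ∈ D
      rw [hcoe]
      exact hD3
    · show (a • (z1, y1) + b • (z2, y2) : ↥Z₀ × Y).2 -
        (Φ (a • x1 + b • x2, ((a • (z1, y1) + b • (z2, y2) : ↥Z₀ × Y).1 : Z)) -
          L (a • x1 + b • x2)) ∈ interior K
      have hfst : ((a • (z1, y1) + b • (z2, y2) : ↥Z₀ × Y).1 : Z)
          = a • (z1 : Z) + b • (z2 : Z) := by
        show ((a • z1 + b • z2 : ↥Z₀) : Z) = _
        exact hcoe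
      rw [hfst]
      have hcomb : a • (y1 - (Φ (x1, (z1 : Z)) - L x1)) + b • (y2 - (Φ (x2, (z2 : Z)) - L x2))
          ∈ interior K := hKcx.interior hk1 hk2 ha hb hab
      have hκ : a • Φ (x1, (z1 : Z)) + b • Φ (x2, (z2 : Z)) -
          Φ (a • x1 + b • x2, a • (z1 : Z) + b • (z2 : Z)) ∈ K := hK3
      have hsum := intK_add_K hKcx hKcone hcomb hκ
      have hLeq : L (a • x1 + b • x2) = a • L x1 + b • L x2 := by
        rw [map_add, map_smul, map_smul]
      have heq : a • (y1 - (Φ (x1, (z1 : Z)) - L x1)) + b • (y2 - (Φ (x2, (z2 : Z)) - L x2))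
          + (a • Φ (x1, (z1 : Z)) + b • Φ (x2, (z2 : Z)) -
            Φ (a • x1 + b • x2, a • (z1 : Z) + b • (z2 : Z)))
          = (a • (z1, y1) + b • (z2, y2) : ↥Z₀ × Y).2 -
            (Φ (a • x1 + b • x2, a • (z1 : Z) + b • (z2 : Z)) - L (a • x1 + b • x2)) := by
        show _ = a • y1 + b • y2 - _
        rw [hLeq]
        module
      rwa [heq] at hsum
  -- the interior point from (C1)
  obtain ⟨yL, VL, hVLnhds, hC1'⟩ := hC1L
  obtain ⟨VL', hVL'sub, hVL'open, hVL'0⟩ := mem_nhds_iff.1 hVLnhds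
  have hOopen : IsOpen {p : ↥Z₀ × Y | (p.1 : Z) ∈ VL' ∧ p.2 - yL ∈ interior K} := by
    have hc1 : Continuous fun p : ↥Z₀ × Y => (p.1 : Z) :=
      continuous_subtype_val.comp continuous_fst
    have hc2 : Continuous fun p : ↥Z₀ × Y => p.2 - yL := continuous_snd.sub continuous_const
    exact (hVL'open.preimage hc1).inter (isOpen_interior.preimage hc2)
  have hOG : {p : ↥Z₀ × Y | (p.1 : Z) ∈ VL' ∧ p.2 - yL ∈ interior K} ⊆ G := by
    rintro ⟨z, y⟩ ⟨hz, hy⟩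
    obtain ⟨x, hx, hKx⟩ := hC1' (z : Z) (hVL'sub hz) z.2
    refine ⟨x, hx, ?_⟩
    have hsum := intK_add_K hKcx hKcone hy hKx
    have heq : y - yL + (yL - (Φ (x, (z : Z)) - L x)) = y - (Φ (x, (z : Z)) - L x) := by abel
    rwa [heq] at hsum
  have hp₀O : ((0 : ↥Z₀), yL + k₀) ∈ {p : ↥Z₀ × Y | (p.1 : Z) ∈ VL' ∧ p.2 - yL ∈ interior K} := by
    constructor
    · show ((0 : ↥Z₀) : Z) ∈ VL'
      simpa using hVL'0
    · show yL + k₀ - yL ∈ interior K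
      simpa using hk₀
  have hp₀G : ((0 : ↥Z₀), yL + k₀) ∈ interior G :=
    interior_maximal hOG hOopen hp₀O
  have hvG : ((0 : ↥Z₀), v) ∉ G := by
    rintro ⟨x, hx, hk⟩
    refine hv x ?_ ?_
    · simpa using hx
    · simpa using hk
  obtain ⟨f, hflt⟩ := geometric_hahn_banach_open_point hGcx.interior isOpen_interior
    (fun hin => hvG (interior_subset hin))
  have hfle : ∀ a ∈ G, f a ≤ f ((0 : ↥Z₀), v) := fun a ha =>
    le_on_of_lt_on_interior hGcx f hp₀G hflt ha
  set g₁ : ↥Z₀ →L[ℝ] ℝ := f.comp (ContinuousLinearMap.inl ℝ ↥Z₀ Y) with hg₁def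
  set h₁ : Y →L[ℝ] ℝ := f.comp (ContinuousLinearMap.inr ℝ ↥Z₀ Y) with hh₁def
  have hsplit : ∀ (z : ↥Z₀) (y : Y), f (z, y) = g₁ z + h₁ y := by
    intro z y
    have heq : ((z, y) : ↥Z₀ × Y) = ((z, (0 : Y)) : ↥Z₀ × Y) + (((0 : ↥Z₀), y) : ↥Z₀ × Y) := by
      simp
    rw [heq, map_add]
    rfl
  have hfv : f ((0 : ↥Z₀), v) = h₁ v := by
    rw [hsplit]; simp
  -- key inequality, version with extra k
  have hkey0 : ∀ (x : X) (z : Z), (x, z) ∈ D → ∀ hz : z ∈ Z₀, ∀ k ∈ interior K,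
      g₁ ⟨z, hz⟩ + h₁ (Φ (x, z) - L x) + h₁ k ≤ h₁ v := by
    intro x z hp hz k hk
    have hmem : ((⟨z, hz⟩ : ↥Z₀), Φ (x, z) - L x + k) ∈ G := by
      refine ⟨x, hp, ?_⟩
      have heq : Φ (x, z) - L x + k - (Φ (x, z) - L x) = k := by abel
      show Φ (x, z) - L x + k - (Φ (x, ((⟨z, hz⟩ : ↥Z₀) : Z)) - L x) ∈ interior K
      rw [show ((⟨z, hz⟩ : ↥Z₀) : Z) = z from rfl, heq]
      exact hk
    have hle := hfle _ hmem
    rw [hsplit, hfv] at hle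
    have hadd : h₁ (Φ (x, z) - L x + k) = h₁ (Φ (x, z) - L x) + h₁ k := map_add h₁ _ _
    rw [hadd] at hle
    linarith [hle]
  -- h₁ is nonpositive on interior K
  have hhK : ∀ k ∈ interior K, h₁ k ≤ 0 := by
    intro k hk
    by_contra hpos
    push_neg at hpos
    set t : ℝ := (h₁ v - h₁ (yL + k₀) + 1) / h₁ k with htdef
    have hyLk : ((0 : ↥Z₀), yL + k₀) ∈ G := interior_subset hp₀G
    have hβ : h₁ (yL + k₀) ≤ h₁ v := by
      have := hfle _ hyLk
      rw [hsplit, hfv] at this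
      simpa using this
    have ht : 0 < t := div_pos (by linarith) hpos
    have hmem : ((0 : ↥Z₀), yL + k₀ + t • k) ∈ G := by
      apply hOG
      constructor
      · show ((0 : ↥Z₀) : Z) ∈ VL'
        simpa using hVL'0
      · show yL + k₀ + t • k - yL ∈ interior K
        have h1 : t • k ∈ interior K := smul_mem_intK hKcone ht hk
        have h2 := intK_add_intK hKcx hKcone hk₀ h1
        have heq : yL + k₀ + t • k - yL = k₀ + t • k := by abel
        rw [heq]; exact h2
    have hle := hfle _ hmem
    rw [hsplit, hfv] at hle
    have hexp : h₁ (yL + k₀ + t • k) = h₁ (yL + k₀) + t * h₁ k := by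
      rw [map_add, map_smul]; simp
    rw [hexp] at hle
    have htk : t * h₁ k = h₁ v - h₁ (yL + k₀) + 1 := by
      rw [htdef]; field_simp
    simp only [map_zero, zero_add] at hle
    linarith
  -- h₁ is strictly negative on interior K
  have hhneg : ∀ k ∈ interior K, h₁ k < 0 := by
    intro k hk
    rcases (hhK k hk).lt_or_eq with hlt | heq0
    · exact hlt
    exfalso
    have hall : ∀ w : Y, h₁ w = 0 := by
      intro w
      obtain ⟨ε1, hε1, hm1⟩ := exists_pos_smul_mem hk w
      obtain ⟨ε2, hε2, hm2⟩ := exists_pos_smul_mem hk (-w)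
      have e1 : h₁ k + ε1 * h₁ w ≤ 0 := by
        have := hhK _ hm1
        rw [map_add, map_smul] at this
        simpa using this
      have e2 : h₁ k - ε2 * h₁ w ≤ 0 := by
        have := hhK _ hm2
        rw [map_add, map_smul] at this
        simp only [map_neg, smul_eq_mul, mul_neg] at this
        linarith
      rw [← heq0] at e1 e2
      nlinarith
    have hc := hflt _ hp₀G
    rw [hfv, hsplit] at hc
    rw [hall (yL + k₀), hall v] at hc
    simp at hc
  -- key inequality
  have hkey : ∀ (x : X) (z : Z), (x, z) ∈ D → ∀ hz : z ∈ Z₀,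
      g₁ ⟨z, hz⟩ + h₁ (Φ (x, z) - L x) ≤ h₁ v := by
    intro x z hp hz
    by_contra hgt
    push_neg at hgt
    set A := g₁ ⟨z, hz⟩ + h₁ (Φ (x, z) - L x) with hAdef
    have hk₀neg := hhneg k₀ hk₀
    set ε : ℝ := (A - h₁ v) / (-2 * h₁ k₀) with hεdef
    have hε : 0 < ε := div_pos (by linarith) (by linarith)
    have hc := hkey0 x z hp hz (ε • k₀) (smul_mem_intK hKcone hε hk₀)
    rw [map_smul] at hc
    have hne : h₁ k₀ ≠ 0 := ne_of_lt hk₀neg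
    have hεk : ε * h₁ k₀ = -(A - h₁ v) / 2 := by
      rw [hεdef]; field_simp
    simp only [smul_eq_mul] at hc
    rw [← hAdef] at hc
    linarith
  -- continuity data for g₁ and construction of the symmetric convex neighborhood
  have hAopen : IsOpen {z : ↥Z₀ | g₁ z < 1} := isOpen_lt g₁.continuous continuous_const
  obtain ⟨U₀, hU₀open, hU₀⟩ := isOpen_induced_iff.1 hAopen
  have hU₀0 : (0 : Z) ∈ U₀ := by
    have h0A : (0 : ↥Z₀) ∈ {z : ↥Z₀ | g₁ z < 1} := by simp
    rw [← hU₀] at h0A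
    simpa using h0A
  obtain ⟨W, hW, hWsub⟩ :=
    (LocallyConvexSpace.convex_open_basis_zero ℝ Z).mem_iff.1 (hU₀open.mem_nhds hU₀0)
  obtain ⟨hW0, hWopen, hWcx⟩ := hW
  set U' : Set Z := W ∩ -W with hU'def
  have hU'cx : Convex ℝ U' := hWcx.inter hWcx.neg
  have hU'open : IsOpen U' := hWopen.inter hWopen.neg
  have hU'0 : (0 : Z) ∈ U' := ⟨hW0, by simpa using hW0⟩
  have hU'symm : ∀ z ∈ U', -z ∈ U' := by
    rintro z ⟨h1, h2⟩
    rw [Set.mem_neg] at h2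
    exact ⟨h2, by rwa [Set.mem_neg, neg_neg]⟩
  have hU'g : ∀ z : ↥Z₀, (z : Z) ∈ U' → g₁ z < 1 := by
    intro z hz
    have h1 : (z : Z) ∈ U₀ := hWsub hz.1
    have h2 : z ∈ {z : ↥Z₀ | g₁ z < 1} := by rw [← hU₀]; exact h1
    exact h2
  have habs : Absorbent ℝ U' := absorbent_nhds_zero (hU'open.mem_nhds hU'0)
  have hdom : ∀ z : ↥Z₀, g₁ z ≤ gauge U' (z : Z) := by
    intro z
    by_contra hlt
    push_neg at hlt
    have hgnn : 0 ≤ gauge U' (z : Z) := gauge_nonneg _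
    set t : ℝ := (gauge U' (z : Z) + g₁ z) / 2 with htdef
    have ht1 : gauge U' (z : Z) < t := by rw [htdef]; linarith
    have ht2 : t < g₁ z := by rw [htdef]; linarith
    have htpos : 0 < t := lt_of_le_of_lt hgnn ht1
    have hmem : gauge U' (t⁻¹ • (z : Z)) < 1 := by
      rw [gauge_smul_of_nonneg (inv_nonneg.2 htpos.le), smul_eq_mul]
      have hd := (div_lt_one htpos).2 ht1
      rwa [div_eq_inv_mul] at hd
    have hmem2 : t⁻¹ • (z : Z) ∈ U' := by
      have heq := gauge_lt_one_eq_self_of_isOpen hU'cx hU'0 hU'open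
      rw [← heq]
      exact hmem
    have hg : g₁ (t⁻¹ • z) < 1 := by
      apply hU'g
      rw [Submodule.coe_smul]
      exact hmem2
    rw [map_smul, smul_eq_mul] at hg
    have : g₁ z < t := by
      have := (mul_lt_mul_iff_right₀ htpos).2 hg
      rw [mul_one, ← mul_assoc, mul_inv_cancel₀ htpos.ne', one_mul] at this
      exact this
    linarith
  -- extension of g₁ via Hahn-Banach
  obtain ⟨gE, hgEeq, hgEle⟩ :=
    exists_extension_of_le_sublinear ⟨Z₀, (g₁ : ↥Z₀ →ₗ[ℝ] ℝ)⟩ (gauge U')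
      (fun c hc x => by
        rw [gauge_smul_of_nonneg hc.le, smul_eq_mul])
      (gauge_add_le hU'cx habs) hdom
  have hgEbound : ∀ z ∈ U', |gE z| ≤ 1 := by
    intro z hz
    have h1 : gE z ≤ 1 := (hgEle z).trans (gauge_le_one_of_mem hz)
    have h2 : gE (-z) ≤ 1 := (hgEle (-z)).trans (gauge_le_one_of_mem (hU'symm z hz))
    rw [map_neg] at h2
    rw [abs_le]
    constructor <;> linarith
  have hgEcont : Continuous gE := by
    apply continuous_of_continuousAt_zero gE
    unfold ContinuousAt
    rw [map_zero, Metric.tendsto_nhds]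
    intro ε hε
    have hnb : (ε / 2) • U' ∈ nhds (0 : Z) := by
      rw [set_smul_mem_nhds_zero_iff (by positivity : (ε / 2 : ℝ) ≠ 0)]
      exact hU'open.mem_nhds hU'0
    filter_upwards [hnb] with w hw
    obtain ⟨w', hw', rfl⟩ := hw
    rw [map_smul, smul_eq_mul, Real.dist_eq, sub_zero, abs_mul]
    have hb := hgEbound w' hw'
    rw [abs_of_pos (by positivity : (0 : ℝ) < ε / 2)]
    nlinarith [abs_nonneg (gE w')]
  -- the operator T
  set α : ℝ := -h₁ k₀ with hαdef
  have hαpos : 0 < α := by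
    have := hhneg k₀ hk₀
    rw [hαdef]; linarith
  set Gc : Z →L[ℝ] ℝ := ⟨gE, hgEcont⟩ with hGcdef
  set T : Z →L[ℝ] Y := Gc.smulRight (α⁻¹ • k₀) with hTdef
  have hTval : ∀ z : Z, T z = (gE z * α⁻¹) • k₀ := by
    intro z
    rw [hTdef, ContinuousLinearMap.smulRight_apply, smul_smul]
    rfl
  have hgEg₁ : ∀ z : ↥Z₀, gE (z : Z) = g₁ z := fun z => hgEeq z
  have hh₁T : ∀ (z : Z) (hz : z ∈ Z₀), h₁ (T z) = -g₁ ⟨z, hz⟩ := by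
    intro z hz
    rw [hTval, map_smul, smul_eq_mul]
    have h2 : gE z = g₁ ⟨z, hz⟩ := hgEg₁ ⟨z, hz⟩
    have hne : h₁ k₀ ≠ 0 := ne_of_lt (hhneg k₀ hk₀)
    rw [h2, hαdef]
    field_simp
  refine ⟨T, ?_, ?_⟩
  · rintro ⟨x, z⟩ hp hmem
    have hz : z ∈ Z₀ := Submodule.subset_span ⟨(x, z), hp, rfl⟩
    have hneg := hhneg _ hmem
    have hexp : h₁ (L x + T z - Φ (x, z) + v)
        = h₁ (L x) + h₁ (T z) - h₁ (Φ (x, z)) + h₁ v := by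
      rw [map_add, map_sub, map_add]
    rw [hexp, hh₁T z hz] at hneg
    have hk2 := hkey x z hp hz
    have hsub : h₁ (Φ (x, z) - L x) = h₁ (Φ (x, z)) - h₁ (L x) := map_sub h₁ _ _
    rw [hsub] at hk2
    linarith
  · rintro S hScone ⟨xt, hxt0, hxtS⟩ y ⟨s, hs, rfl⟩
    have hh₁K : ∀ y ∈ K, h₁ y ≤ 0 :=
      fun y hy => le_on_of_lt_on_interior hKcx h₁ hk₀ (fun p hp => hhneg p hp) hy
    have hgs : 0 ≤ gE s := by
      by_contra hneg2
      push_neg at hneg2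
      set B₀ : ℝ := h₁ v + h₁ (L xt) - h₁ (Φ (xt, 0)) with hB₀def
      have hb : ∀ t : ℝ, 0 < t → t * -(gE s) ≤ B₀ := by
        intro t ht
        have hts : t • (-s) ∈ -S := by
          rw [Set.mem_neg]
          have h3 := hScone ht.le hs
          rwa [show -(t • -s) = t • s by rw [smul_neg, neg_neg]]
        obtain ⟨hD', hKc⟩ := hxtS _ hts
        have hz' : t • (-s) ∈ Z₀ := Submodule.subset_span ⟨(xt, t • -s), hD', rfl⟩
        have hk' := hkey xt (t • -s) hD' hz'
        have hg' : g₁ ⟨t • -s, hz'⟩ = t * -(gE s) := by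
          rw [← hgEg₁ ⟨t • -s, hz'⟩]
          show gE (t • -s) = t * -(gE s)
          rw [map_smul, map_neg, smul_eq_mul]
        have hΦ' : h₁ (Φ (xt, 0) - Φ (xt, t • -s)) ≤ 0 := hh₁K _ hKc
        have hsub1 : h₁ (Φ (xt, t • -s) - L xt)
            = h₁ (Φ (xt, t • -s)) - h₁ (L xt) := map_sub h₁ _ _
        have hsub2 : h₁ (Φ (xt, 0) - Φ (xt, t • -s))
            = h₁ (Φ (xt, 0)) - h₁ (Φ (xt, t • -s)) := map_sub h₁ _ _
        rw [hg', hsub1] at hk'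
        rw [hsub2] at hΦ'
        rw [hB₀def]
        linarith
      have hgpos : 0 < -(gE s) := by linarith
      have hne' : -(gE s) ≠ 0 := ne_of_gt hgpos
      set t0 : ℝ := (|B₀| + 1) / -(gE s) with ht0def
      have ht0 : 0 < t0 := div_pos (by positivity) hgpos
      have hico := hb t0 ht0
      have heq : t0 * -(gE s) = |B₀| + 1 := by
        rw [ht0def]; exact div_mul_cancel₀ _ hne'
      rw [heq] at hico
      have := le_abs_self B₀
      linarith
    show T s ∈ K
    rw [hTval]
    exact hKcone (mul_nonneg hgs (inv_nonneg.2 hαpos.le)) (interior_subset hk₀)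

end Sep
end AuxHelpers

/-- Theorem 4.3 (stable strong duality I): K-convexity and (C1) give stable strong
duality for (P)-(D); if in addition (C0) holds for a convex cone S, stable strong
duality also holds for (P)-(D_ℓ). -/
theorem stmt_11
    {X Y Z : Type*}
    [AddCommGroup X] [Module ℝ X] [TopologicalSpace X] [IsTopologicalAddGroup X]
    [ContinuousSMul ℝ X] [LocallyConvexSpace ℝ X] [T2Space X]
    [AddCommGroup Y] [Module ℝ Y] [TopologicalSpace Y] [IsTopologicalAddGroup Y]
    [ContinuousSMul ℝ Y] [LocallyConvexSpace ℝ Y] [T2Space Y]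
    [AddCommGroup Z] [Module ℝ Z] [TopologicalSpace Z] [IsTopologicalAddGroup Z]
    [ContinuousSMul ℝ Z] [LocallyConvexSpace ℝ Z] [T2Space Z]
    (K : Set Y) (hKcl : IsClosed K) (hKcx : Convex ℝ K)
    (hKcone : ∀ ⦃c : ℝ⦄, 0 ≤ c → ∀ ⦃y : Y⦄, y ∈ K → c • y ∈ K)
    (hKne : K ≠ Set.univ) (hKint : (interior K).Nonempty)
    (Φ : X × Z → Y) (D : Set (X × Z)) (hD : D.Nonempty)
    (hconv : Convex ℝ {p : (X × Z) × Y | p.1 ∈ D ∧ p.2 - Φ p.1 ∈ K})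
    (h0 : (0 : Z) ∈ Prod.snd '' D)
    -- condition (C1)
    (hC1 : ∀ L : X →L[ℝ] Y, ∃ yL : Y, ∃ VL ∈ nhds (0 : Z),
      ∀ z ∈ VL, z ∈ (Submodule.span ℝ (Prod.snd '' D) : Set Z) →
        ∃ x : X, (x, z) ∈ D ∧ yL - (Φ (x, z) - L x) ∈ K) :
    (∀ L : X →L[ℝ] Y,
      WInf K (primalSet Φ D L) = dualSet K Φ D L ∩ WSup K (dualSet K Φ D L)) ∧
    (∀ S : Set Z, S.Nonempty → Convex ℝ S →
      (∀ ⦃c : ℝ⦄, 0 ≤ c → ∀ ⦃z : Z⦄, z ∈ S → c • z ∈ S) →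
      -- condition (C0)
      (∃ xt : X, (xt, (0 : Z)) ∈ D ∧
        ∀ z ∈ -S, (xt, z) ∈ D ∧ Φ (xt, 0) - Φ (xt, z) ∈ K) →
      ∀ L : X →L[ℝ] Y,
        WInf K (primalSet Φ D L)
          = dualSetPlus K S Φ D L ∩ WSup K (dualSetPlus K S Φ D L)) := by
  constructor
  · intro L
    have hs : ∀ v : Y, (∀ x : X, (x, (0 : Z)) ∈ D → v - (Φ (x, 0) - L x) ∉ interior K) →
        ∃ T : Z →L[ℝ] Y, (fun _ : Z →L[ℝ] Y => True) T ∧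
          ∀ p ∈ D, L p.1 + T p.2 - Φ p + v ∉ interior K := by
      intro v hv
      obtain ⟨T, h1, _⟩ := sep_lemma K hKcx hKcone hKint Φ D hconv L (hC1 L) v hv
      exact ⟨T, trivial, h1⟩
    have hmain := main_generic K hKcx hKcone Φ D hD L (fun _ => True) hs
    have hset : {y : Y | ∃ T : Z →L[ℝ] Y, (fun _ : Z →L[ℝ] Y => True) T ∧ -y ∈ WSup K (lamSet Φ D L T)}
        = dualSet K Φ D L := by
      ext y; simp [dualSet]
    rw [hset] at hmain
    exact hmain
  · intro S _ _ hScone hC0 L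
    have hs : ∀ v : Y, (∀ x : X, (x, (0 : Z)) ∈ D → v - (Φ (x, 0) - L x) ∉ interior K) →
        ∃ T : Z →L[ℝ] Y, (⇑T '' S ⊆ K) ∧
          ∀ p ∈ D, L p.1 + T p.2 - Φ p + v ∉ interior K := by
      intro v hv
      obtain ⟨T, h1, h2⟩ := sep_lemma K hKcx hKcone hKint Φ D hconv L (hC1 L) v hv
      exact ⟨T, h2 S hScone hC0, h1⟩
    have hmain := main_generic K hKcx hKcone Φ D hD L (fun T => ⇑T '' S ⊆ K) hs
    have hset : {y : Y | ∃ T : Z →L[ℝ] Y, (⇑T '' S ⊆ K) ∧ -y ∈ WSup K (lamSet Φ D L T)}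
        = dualSetPlus K S Φ D L := rfl
    rw [hset] at hmain
    exact hmain
end
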